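/- arXiv:0905.1942 — 6 statements merged into one kernel-verified Lean document; each statement's English description precedes it below -/
import Mathlib

section
/- For each k ∈ ℕ there exists ε = ε(k) > 0 such that for every sufficiently large n, the number of distinct U(k)-free graphs on the vertex set [n] is at most 2^{n^{2−ε}}. -/
open scoped symmDiff

namespace ABBM

variable {V : Type*}

/-- `A` shatters `B` in `G`: every subset of `B` is the neighbourhood (within `B`)
of some vertex of `A`.  This is the paper's relation `A → B`. -/
def Shatters (G : SimpleGraph V) (A B : Finset V) : Prop :=
  ∀ S ⊆ B, ∃ a ∈ A, ∀ b ∈ B, G.Adj a b ↔ b ∈ S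

/-- `G` is `U(k)`-free: there are no disjoint vertex sets `X`, `Y` such that the
bipartite graph induced by `G` between `X` and `Y` is (a copy of) `U(k)`;
equivalently, no disjoint `X`, `Y` with `|Y| = k` and `X` shattering `Y`. -/
def UFree (G : SimpleGraph V) (k : ℕ) : Prop :=
  ¬ ∃ X Y : Finset V, Disjoint X Y ∧ Y.card = k ∧ Shatters G X Y

/-- The induced subgraph of `G` on `S` is `U(k)`-free. -/
def UFreeOn (G : SimpleGraph V) (S : Finset V) (k : ℕ) : Prop :=
  ¬ ∃ X Y : Finset V, X ⊆ S ∧ Y ⊆ S ∧ Disjoint X Y ∧ Y.card = k ∧ Shatters G X Y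

open scoped Classical in
/-- The (full) neighbourhood `Γ(u)` of a vertex, as a `Finset`. -/
noncomputable def nbr [Fintype V] (G : SimpleGraph V) (u : V) : Finset V :=
  Finset.univ.filter fun v => G.Adj u v

lemma mem_nbr [Fintype V] {G : SimpleGraph V} {u v : V} : v ∈ nbr G u ↔ G.Adj u v := by
  classical
  simp [nbr]

/-- heredity under injections -/
lemma UFree.comap {W : Type*} (f : V ↪ W) {G : SimpleGraph W} {k : ℕ}
    (h : UFree G k) : UFree (G.comap f) k := by
  classical
  rintro ⟨X, Y, hdisj, hcard, hsh⟩
  refine h ⟨X.image f, Y.image f, ?_, ?_, ?_⟩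
  · exact (Finset.disjoint_image f.injective).2 hdisj
  · rw [Finset.card_image_of_injective _ f.injective, hcard]
  · intro S' hS'
    obtain ⟨S, hSY, rfl⟩ := Finset.subset_image_iff.1 hS'
    obtain ⟨a, haX, ha⟩ := hsh S hSY
    refine ⟨f a, Finset.mem_image_of_mem f haX, ?_⟩
    intro b' hb'
    obtain ⟨b, hbY, rfl⟩ := Finset.mem_image.1 hb'
    have hmem : f b ∈ S.image f ↔ b ∈ S := by
      simp [Finset.mem_image, f.injective.eq_iff]
    rw [hmem]
    simpa [SimpleGraph.comap_adj] using (ha b hbY)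

section
variable [DecidableEq V] [Fintype V]

/-- Lemma A: a `U(k)`-free graph has no set of size `2k+2` that is VC-shattered
by full neighbourhoods. -/
lemma no_shattered_set {G : SimpleGraph V} {k : ℕ} (h : UFree G k)
    (A : Finset V) (hA : A.card = 2 * k + 2)
    (htr : ∀ t ⊆ A, ∃ v, nbr G v ∩ A = t) : False := by
  -- A is nonempty, so V is nonempty
  have hAne : A.Nonempty := Finset.card_pos.1 (by omega)
  have : Nonempty V := ⟨hAne.choose⟩
  inhabit V
  -- witness function
  have hw : ∀ t : Finset V, ∃ v, t ⊆ A → nbr G v ∩ A = t := by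
    intro t
    by_cases ht : t ⊆ A
    · obtain ⟨v, hv⟩ := htr t ht
      exact ⟨v, fun _ => hv⟩
    · exact ⟨default, fun h' => absurd h' ht⟩
  choose w hwspec using hw
  have hwinj : ∀ t₁ ⊆ A, ∀ t₂ ⊆ A, w t₁ = w t₂ → t₁ = t₂ := by
    intro t₁ h₁ t₂ h₂ he
    rw [← hwspec t₁ h₁, ← hwspec t₂ h₂, he]
  -- split A
  obtain ⟨A₁, hA₁sub, hA₁card⟩ := Finset.exists_subset_card_eq (s := A) (n := k) (by omega)
  set A₂ := A \ A₁ with hA₂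
  have hA₂card : A₂.card = k + 2 := by
    rw [hA₂, Finset.card_sdiff_of_subset hA₁sub, hA₁card, hA]; omega
  have hdisj12 : ∀ a ∈ A₂, a ∉ A₁ := fun a ha => (Finset.mem_sdiff.1 ha).2
  -- for every S ⊆ A₁ there is a witness outside A₁
  have key : ∀ S, S ⊆ A₁ → ∃ x, x ∉ A₁ ∧ nbr G x ∩ A₁ = S := by
    intro S hS
    by_contra hcon
    push_neg at hcon
    have hrec : ∀ R ⊆ A₂, (S ∪ R) ∩ A₂ = R := by
      intro R hR
      rw [Finset.union_inter_distrib_right, Finset.inter_eq_left.2 hR,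
        Finset.union_eq_right]
      intro a ha
      obtain ⟨haS, haA₂⟩ := Finset.mem_inter.1 ha
      exact (hdisj12 a haA₂ (hS haS)).elim
    have hsub : ∀ R ⊆ A₂, S ∪ R ⊆ A := fun R hR =>
      Finset.union_subset (hS.trans hA₁sub) (hR.trans (Finset.sdiff_subset))
    -- the map R ↦ w (S ∪ R) sends powerset A₂ injectively into A₁
    have hmaps : ∀ R ∈ A₂.powerset, w (S ∪ R) ∈ A₁ := by
      intro R hR
      rw [Finset.mem_powerset] at hR
      by_contra hx
      apply hcon _ hx
      have h1 : nbr G (w (S ∪ R)) ∩ A = S ∪ R := hwspec _ (hsub R hR)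
      have h2 : nbr G (w (S ∪ R)) ∩ A₁ = (nbr G (w (S ∪ R)) ∩ A) ∩ A₁ := by
        rw [Finset.inter_assoc, Finset.inter_eq_right.2 hA₁sub]
      rw [h2, h1, Finset.union_inter_distrib_right, Finset.inter_eq_left.2 hS,
        Finset.union_eq_left]
      intro a ha
      obtain ⟨haR, haA₁⟩ := Finset.mem_inter.1 ha
      exact ((hdisj12 a (hR haR)) haA₁).elim
    have hinj : Set.InjOn (fun R => w (S ∪ R)) A₂.powerset := by
      intro R₁ h₁ R₂ h₂ he
      rw [Finset.mem_coe, Finset.mem_powerset] at h₁ h₂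
      have := hwinj _ (hsub _ h₁) _ (hsub _ h₂) he
      rw [← hrec _ h₁, ← hrec _ h₂, this]
    have hcard := Finset.card_le_card_of_injOn _ hmaps hinj
    rw [Finset.card_powerset, hA₂card, hA₁card] at hcard
    have : k < 2 ^ (k + 2) := by
      calc k < 2 ^ k := Nat.lt_two_pow_self
        _ ≤ 2 ^ (k + 2) := Nat.pow_le_pow_right (by norm_num) (by omega)
    omega
  choose v hv1 hv2 using key
  -- build the shattering configuration
  refine h ⟨A₁.powerset.attach.image (fun S => v S.1 (Finset.mem_powerset.1 S.2)),
    A₁, ?_, hA₁card, ?_⟩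
  · rw [Finset.disjoint_left]
    rintro x hx
    obtain ⟨S, _, rfl⟩ := Finset.mem_image.1 hx
    exact hv1 _ _
  · intro S hS
    refine ⟨v S hS, Finset.mem_image.2 ⟨⟨S, Finset.mem_powerset.2 hS⟩,
      Finset.mem_attach _ _, rfl⟩, ?_⟩
    intro b hb
    rw [← mem_nbr (G := G)]
    constructor
    · intro hbn
      have : b ∈ nbr G (v S hS) ∩ A₁ := Finset.mem_inter.2 ⟨hbn, hb⟩
      rwa [hv2 S hS] at this
    · intro hbS
      have : b ∈ nbr G (v S hS) ∩ A₁ := by rw [hv2 S hS]; exact hbS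
      exact (Finset.mem_inter.1 this).1

/-- counting: existence of a separating tuple -/
lemma exists_sep (F : V → Finset V) (s m : ℕ)
    (hcount : (Fintype.card V)^2 * ((Fintype.card V - (m+1)))^s < (Fintype.card V)^s)
    (hdist : ∀ u v : V, u ≠ v → m + 1 ≤ (F u ∆ F v).card) :
    ∃ W : Fin s → V, ∀ u v : V, u ≠ v → ∃ j, W j ∈ F u ∆ F v := by
  classical
  set B := Finset.univ.filter
    (fun Wf : Fin s → V => ∃ u v : V, u ≠ v ∧ ∀ j, Wf j ∉ F u ∆ F v) with hBdef
  have hsub : B ⊆ (Finset.univ : Finset V).offDiag.biUnion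
      (fun p => Fintype.piFinset fun _ : Fin s => (F p.1 ∆ F p.2)ᶜ) := by
    intro Wf hWf
    obtain ⟨u, v, huv, hj⟩ := (Finset.mem_filter.1 hWf).2
    refine Finset.mem_biUnion.2 ⟨(u, v), Finset.mem_offDiag.2 ⟨Finset.mem_univ _,
      Finset.mem_univ _, huv⟩, ?_⟩
    rw [Fintype.mem_piFinset]
    intro j
    rw [Finset.mem_compl]
    exact hj j
  have hBcard : B.card < (Fintype.card V)^s := by
    calc B.card ≤ ∑ p ∈ (Finset.univ : Finset V).offDiag,
        (Fintype.piFinset fun _ : Fin s => (F p.1 ∆ F p.2)ᶜ).card :=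
          (Finset.card_le_card hsub).trans (Finset.card_biUnion_le)
      _ ≤ ∑ _p ∈ (Finset.univ : Finset V).offDiag,
          (Fintype.card V - (m+1))^s := by
          refine Finset.sum_le_sum fun p hp => ?_
          rw [Fintype.card_piFinset]
          have hple : ((F p.1 ∆ F p.2)ᶜ : Finset V).card ≤ Fintype.card V - (m+1) := by
            rw [Finset.card_compl]
            exact Nat.sub_le_sub_left
              (hdist p.1 p.2 (Finset.mem_offDiag.1 hp).2.2) _
          calc ∏ _j : Fin s, ((F p.1 ∆ F p.2)ᶜ : Finset V).card
              ≤ ∏ _j : Fin s, (Fintype.card V - (m+1)) :=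
                Finset.prod_le_prod (fun _ _ => Nat.zero_le _) (fun _ _ => hple)
            _ = (Fintype.card V - (m+1))^s := by
                simp [Finset.prod_const, Finset.card_univ]
      _ ≤ (Fintype.card V)^2 * (Fintype.card V - (m+1))^s := by
          rw [Finset.sum_const, smul_eq_mul]
          refine Nat.mul_le_mul_right _ ?_
          rw [Finset.offDiag_card, Finset.card_univ, pow_two]
          omega
      _ < (Fintype.card V)^s := hcount
  have : ∃ Wf : Fin s → V, Wf ∉ B := by
    by_contra hfull
    push_neg at hfull
    have : (Finset.univ : Finset (Fin s → V)) ⊆ B := fun Wf _ => hfull Wf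
    have := Finset.card_le_card this
    rw [Finset.card_univ, Fintype.card_fun, Fintype.card_fin] at this
    omega
  obtain ⟨Wf, hWf⟩ := this
  refine ⟨Wf, fun u v huv => ?_⟩
  by_contra hno
  push_neg at hno
  exact hWf (Finset.mem_filter.2 ⟨Finset.mem_univ _, u, v, huv, hno⟩)


/-- The twin lemma: under suitable counting conditions, a `U(k)`-free graph has
two vertices with small symmetric difference of neighbourhoods. -/
lemma exists_twins {G : SimpleGraph V} {k : ℕ} (h : UFree G k) (s m : ℕ)
    (hcount : (Fintype.card V)^2 * ((Fintype.card V - (m+1)))^s < (Fintype.card V)^s)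
    (hSauer : ∑ i ∈ Finset.range (2*k+2), s.choose i < Fintype.card V) :
    ∃ u v : V, u ≠ v ∧ (nbr G u ∆ nbr G v).card ≤ m := by
  by_contra hcon
  push_neg at hcon
  have hdist : ∀ u v : V, u ≠ v → m + 1 ≤ (nbr G u ∆ nbr G v).card :=
    fun u v huv => hcon u v huv
  obtain ⟨W, hW⟩ := exists_sep (nbr G) s m hcount hdist
  set W' := Finset.univ.image W with hW'def
  set 𝒜 := Finset.univ.image (fun v => nbr G v ∩ W') with h𝒜def
  have hinj : Function.Injective (fun v => nbr G v ∩ W') := by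
    intro u v he
    by_contra hne
    obtain ⟨j, hj⟩ := hW u v hne
    have hjW' : W j ∈ W' := Finset.mem_image_of_mem W (Finset.mem_univ j)
    rw [Finset.mem_symmDiff] at hj
    have hiff : W j ∈ nbr G u ∩ W' ↔ W j ∈ nbr G v ∩ W' := by
      simp only at he; rw [he]
    simp only [Finset.mem_inter, hjW', and_true] at hiff
    tauto
  have hcard𝒜 : 𝒜.card = Fintype.card V := by
    rw [h𝒜def, Finset.card_image_of_injective _ hinj, Finset.card_univ]
  have hSa := Finset.card_le_card_shatterer 𝒜
  have hsub : 𝒜.shatterer ⊆ (Finset.range (2*k+2)).biUnion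
      (fun i => Finset.powersetCard i W') := by
    intro B hB
    have hBsh := Finset.mem_shatterer.1 hB
    have hBW' : B ⊆ W' := by
      obtain ⟨t, ht𝒜, hBt⟩ := hBsh.exists_superset
      obtain ⟨v, _, rfl⟩ := Finset.mem_image.1 ht𝒜
      exact hBt.trans Finset.inter_subset_right
    have hBcard : B.card < 2*k+2 := by
      by_contra hge
      push_neg at hge
      obtain ⟨Asub, hAs, hAcard⟩ := Finset.exists_subset_card_eq (s := B) (n := 2*k+2) hge
      have hsh : 𝒜.Shatters Asub := hBsh.mono_right hAs
      refine no_shattered_set h Asub hAcard (fun t ht => ?_)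
      obtain ⟨u, hu𝒜, hut⟩ := hsh ht
      obtain ⟨v, _, rfl⟩ := Finset.mem_image.1 hu𝒜
      refine ⟨v, ?_⟩
      have hAW : Asub ⊆ W' := hAs.trans hBW'
      calc nbr G v ∩ Asub = (nbr G v ∩ W') ∩ Asub := by
            rw [Finset.inter_assoc, Finset.inter_comm W' Asub,
              Finset.inter_eq_left.2 hAW]
        _ = t := by rw [Finset.inter_comm]; exact hut
    exact Finset.mem_biUnion.2 ⟨B.card, Finset.mem_range.2 hBcard,
      Finset.mem_powersetCard.2 ⟨hBW', rfl⟩⟩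
  have hle : 𝒜.shatterer.card ≤ ∑ i ∈ Finset.range (2*k+2), s.choose i := by
    calc 𝒜.shatterer.card ≤ ((Finset.range (2*k+2)).biUnion
          (fun i => Finset.powersetCard i W')).card := Finset.card_le_card hsub
      _ ≤ ∑ i ∈ Finset.range (2*k+2), (Finset.powersetCard i W').card :=
          Finset.card_biUnion_le
      _ ≤ ∑ i ∈ Finset.range (2*k+2), s.choose i := by
          refine Finset.sum_le_sum fun i _ => ?_
          rw [Finset.card_powersetCard]
          refine Nat.choose_le_choose i ?_
          calc W'.card ≤ (Finset.univ : Finset (Fin s)).card := Finset.card_image_le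
            _ = s := by simp
  omega

end

section Counting

/-- Simple graphs on a finite type form a finite type. -/
lemma finite_simpleGraph (n : ℕ) : Finite (SimpleGraph (Fin n)) := by
  classical
  refine Finite.of_injective
    (fun G : SimpleGraph (Fin n) => fun a b => decide (G.Adj a b)) ?_
  intro G H he
  ext a b
  have := congrFun (congrFun he a) b
  simpa [decide_eq_decide] using this

instance (n : ℕ) : Finite (SimpleGraph (Fin n)) := finite_simpleGraph n

/-- Trivial bound on the number of graphs. -/
lemma card_graphs_le (n : ℕ) (P : SimpleGraph (Fin n) → Prop) :
    Nat.card {G : SimpleGraph (Fin n) // P G} ≤ 2 ^ (n * n) := by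
  classical
  have h1 : Nat.card {G : SimpleGraph (Fin n) // P G}
      ≤ Nat.card (Fin n → Fin n → Bool) := by
    refine Nat.card_le_card_of_injective
      (fun G => fun a b => decide (G.1.Adj a b)) ?_
    intro G H he
    ext a b
    have := congrFun (congrFun he a) b
    simpa [decide_eq_decide] using this
  have h2 : Nat.card (Fin n → Fin n → Bool) = 2 ^ (n * n) := by
    simp [Nat.card_eq_fintype_card, pow_mul]
  omega

/-- Counting small subsets. -/
lemma card_small_sets (N m : ℕ) :
    Nat.card {D : Finset (Fin N) // D.card ≤ m} ≤ (N + 1) ^ m := by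
  classical
  have h1 : Nat.card {D : Finset (Fin N) // D.card ≤ m}
      ≤ Nat.card (Fin m → Option (Fin N)) := by
    refine Nat.card_le_card_of_injective
      (fun D => fun i => (D.1.sort (· ≤ ·))[(i : ℕ)]?) ?_
    intro D E he
    have hlist : D.1.sort (· ≤ ·) = E.1.sort (· ≤ ·) := by
      apply List.ext_getElem?
      intro i
      by_cases hi : i < m
      · exact congrFun he ⟨i, hi⟩
      · rw [List.getElem?_eq_none, List.getElem?_eq_none]
        · rw [Finset.length_sort]; exact le_trans E.2 (Nat.le_of_not_lt hi)
        · rw [Finset.length_sort]; exact le_trans D.2 (Nat.le_of_not_lt hi)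
    have : (D.1.sort (· ≤ ·)).toFinset = (E.1.sort (· ≤ ·)).toFinset := by rw [hlist]
    rw [Finset.sort_toFinset, Finset.sort_toFinset] at this
    exact Subtype.ext this
  have h2 : Nat.card (Fin m → Option (Fin N)) = (N + 1) ^ m := by
    simp [Nat.card_eq_fintype_card]
  omega

end Counting

section Step

/-- The "patch" graph used to reconstruct a graph from its restriction,
a near-twin vertex and a symmetric difference set. -/
def patch {n : ℕ} (H : SimpleGraph (Fin n)) (u : Fin n) (D : Finset (Fin (n+1))) :
    SimpleGraph (Fin (n+1)) where
  Adj x y :=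
    if hx : x = Fin.last n then
      if hy : y = Fin.last n then False
      else Xor' (H.Adj u (y.castPred hy)) (y ∈ D)
    else if hy : y = Fin.last n then Xor' (H.Adj u (x.castPred hx)) (x ∈ D)
    else H.Adj (x.castPred hx) (y.castPred hy)
  symm := by
    constructor
    intro x y
    by_cases hx : x = Fin.last n <;> by_cases hy : y = Fin.last n
    · rw [dif_pos hx, dif_pos hy, dif_pos hy, dif_pos hx]; exact id
    · rw [dif_pos hx, dif_neg hy, dif_neg hy, dif_pos hx]; exact id
    · rw [dif_neg hx, dif_pos hy, dif_pos hy, dif_neg hx]; exact id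
    · rw [dif_neg hx, dif_neg hy, dif_neg hy, dif_neg hx]
      exact fun h => h.symm
  loopless := by
    constructor
    intro x
    by_cases hx : x = Fin.last n
    · rw [dif_pos hx, dif_pos hx]; exact id
    · rw [dif_neg hx, dif_neg hx]; exact H.irrefl

lemma step (k n m : ℕ)
    (htw : ∀ G : SimpleGraph (Fin (n+1)), UFree G k →
      ∃ u v : Fin (n+1), u ≠ v ∧ (nbr G u ∆ nbr G v).card ≤ m) :
    Nat.card {G : SimpleGraph (Fin (n+1)) // UFree G k} ≤
      Nat.card {H : SimpleGraph (Fin n) // UFree H k} * ((n+1) * n * (n+2)^m) := by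
  classical
  set dec : SimpleGraph (Fin n) × Fin (n+1) × Fin n × Finset (Fin (n+1)) →
      SimpleGraph (Fin (n+1)) :=
    fun p => (patch p.1 p.2.2.1 p.2.2.2).comap (Equiv.swap p.2.1 (Fin.last n)) with hdec
  have key : ∀ G : {G : SimpleGraph (Fin (n+1)) // UFree G k},
      ∃ p : {H : SimpleGraph (Fin n) // UFree H k} × Fin (n+1) × Fin n ×
        {D : Finset (Fin (n+1)) // D.card ≤ m},
        G.1 = dec (p.1.1, p.2.1, p.2.2.1, p.2.2.2.1) := by
    rintro ⟨G, hG⟩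
    obtain ⟨u, v, huv, hm⟩ := htw G hG
    set π := Equiv.swap v (Fin.last n) with hπdef
    have hππ : ∀ x, π (π x) = x := fun x => Equiv.swap_apply_self _ _ x
    have hπv : π v = Fin.last n := Equiv.swap_apply_left _ _
    have hπl : π (Fin.last n) = v := Equiv.swap_apply_right _ _
    set G₂ := G.comap ⇑π with hG₂def
    have hG₂ : UFree G₂ k := by
      have := hG.comap π.toEmbedding
      simpa using this
    set H := G₂.comap (Fin.castSucc : Fin n → Fin (n+1)) with hHdef
    have hH : UFree H k := hG₂.comap ⟨Fin.castSucc, Fin.castSucc_injective n⟩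
    set u₂ := π u with hu₂def
    have hu₂ : u₂ ≠ Fin.last n := by
      rw [← hπv]
      exact fun h => huv (π.injective h)
    have hnbr₂ : ∀ x, nbr G₂ x = (nbr G (π x)).image ⇑π := by
      intro x
      ext z
      rw [Finset.mem_image]
      constructor
      · intro h
        rw [mem_nbr, hG₂def, SimpleGraph.comap_adj] at h
        exact ⟨π z, mem_nbr.2 h, hππ z⟩
      · rintro ⟨w, hw, rfl⟩
        rw [mem_nbr] at hw
        rw [mem_nbr, hG₂def, SimpleGraph.comap_adj, hππ]
        exact hw
    set D := nbr G₂ u₂ ∆ nbr G₂ (Fin.last n) with hDdef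
    have hDcard : D.card ≤ m := by
      rw [hDdef, hnbr₂, hnbr₂, hπl, hu₂def, hππ,
        ← Finset.image_symmDiff _ _ π.injective,
        Finset.card_image_of_injective _ π.injective]
      exact hm
    refine ⟨(⟨H, hH⟩, v, u₂.castPred hu₂, ⟨D, hDcard⟩), ?_⟩
    show G = (patch H (u₂.castPred hu₂) D).comap ⇑(Equiv.swap v (Fin.last n))
    have hpatch : patch H (u₂.castPred hu₂) D = G₂ := by
      refine SimpleGraph.ext (funext fun x => funext fun y => propext ?_)
      show (patch H (u₂.castPred hu₂) D).Adj x y ↔ G₂.Adj x y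
      have hmain : ∀ (z : Fin (n+1)) (hz : z ≠ Fin.last n),
          (Xor' (H.Adj (u₂.castPred hu₂) (z.castPred hz)) (z ∈ D) ↔
            G₂.Adj z (Fin.last n)) := by
        intro z hz
        have h1 : H.Adj (u₂.castPred hu₂) (z.castPred hz) ↔ G₂.Adj u₂ z := by
          rw [hHdef, SimpleGraph.comap_adj, Fin.castSucc_castPred, Fin.castSucc_castPred]
        rw [h1]
        have h2 : Xor' (G₂.Adj u₂ z) (z ∈ D) ↔ z ∈ nbr G₂ u₂ ∆ D := by
          simp only [Finset.mem_symmDiff, mem_nbr, Xor', Xor]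
        rw [h2, hDdef, symmDiff_symmDiff_cancel_left, mem_nbr, SimpleGraph.adj_comm]
      by_cases hx : x = Fin.last n
      · subst hx
        by_cases hy : y = Fin.last n
        · subst hy
          simp only [patch, dif_pos]
          exact ⟨False.elim, fun h => (G₂.loopless.irrefl _ h)⟩
        · simp only [patch, dif_pos, dif_neg hy]
          rw [hmain y hy, SimpleGraph.adj_comm]
      · by_cases hy : y = Fin.last n
        · subst hy
          simp only [patch, dif_neg hx, dif_pos]
          exact hmain x hx
        · simp only [patch, dif_neg hx, dif_neg hy]
          rw [hHdef, SimpleGraph.comap_adj, Fin.castSucc_castPred, Fin.castSucc_castPred]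
    show G = (patch H (u₂.castPred hu₂) D).comap ⇑(Equiv.swap v (Fin.last n))
    rw [← hπdef, hpatch, hG₂def]
    refine SimpleGraph.ext (funext fun a => funext fun b => propext ?_)
    show G.Adj a b ↔ ((G.comap ⇑π).comap ⇑π).Adj a b
    rw [SimpleGraph.comap_adj, SimpleGraph.comap_adj, hππ, hππ]
  choose enc henc using key
  have hinjenc : Function.Injective enc := by
    intro G G' h
    apply Subtype.ext
    rw [henc G, henc G', h]
  calc Nat.card {G : SimpleGraph (Fin (n+1)) // UFree G k}
      ≤ Nat.card ({H : SimpleGraph (Fin n) // UFree H k} × Fin (n+1) × Fin n ×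
          {D : Finset (Fin (n+1)) // D.card ≤ m}) :=
        Nat.card_le_card_of_injective enc hinjenc
    _ ≤ Nat.card {H : SimpleGraph (Fin n) // UFree H k} * ((n+1) * n * (n+2)^m) := by
        rw [Nat.card_prod, Nat.card_prod, Nat.card_prod]
        have h1 : Nat.card (Fin (n+1)) = n+1 := by simp
        have h2 : Nat.card (Fin n) = n := by simp
        have h3 : Nat.card {D : Finset (Fin (n+1)) // D.card ≤ m} ≤ (n+2)^m := by
          simpa using card_small_sets (n+1) m
        rw [h1, h2, ← mul_assoc, ← mul_assoc]
        calc Nat.card {H : SimpleGraph (Fin n) // UFree H k} * (n+1) * n *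
              Nat.card {D : Finset (Fin (n+1)) // D.card ≤ m}
            ≤ Nat.card {H : SimpleGraph (Fin n) // UFree H k} * (n+1) * n * (n+2)^m :=
              Nat.mul_le_mul_left _ h3
          _ = _ := by ring

end Step

section Params


/-- The core numeric inequality for the union bound. -/
lemma numeric_main {j q m s L : ℕ} (hq : 2 ≤ q) (hs0 : 1 ≤ s)
    (hj : j < q * (m+1)) (hm1 : m + 1 ≤ j) (hL : j < 2^L)
    (hsL : (q-1) * (2*L) ≤ s) :
    j^2 * (j - (m+1))^s < j^s := by
  have hj1 : 1 ≤ j := le_trans (Nat.le_add_left 1 m) hm1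
  rw [← Nat.cast_lt (α := ℝ)]
  push_cast [Nat.cast_sub hm1]
  set J : ℝ := (j:ℝ) with hJdef
  set Q : ℝ := (q:ℝ) with hQdef
  set B : ℝ := J - ((m:ℝ)+1) with hBdef
  have hJ1 : (1:ℝ) ≤ J := by rw [hJdef]; exact_mod_cast hj1
  have hQ2 : (2:ℝ) ≤ Q := by rw [hQdef]; exact_mod_cast hq
  have hB0 : 0 ≤ B := by
    have : ((m:ℝ)+1) ≤ J := by
      rw [hJdef]; exact_mod_cast hm1
    rw [hBdef]; linarith
  have h1 : B * Q < J * (Q - 1) := by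
    have hjq : J + 1 ≤ Q * ((m:ℝ)+1) := by
      rw [hJdef, hQdef]; exact_mod_cast hj
    nlinarith [hB0, hQ2, hJ1]
  have h2 : B^s * Q^s < J^s * (Q-1)^s := by
    have := pow_lt_pow_left₀ h1 (by positivity) (Nat.one_le_iff_ne_zero.1 hs0)
    rwa [mul_pow, mul_pow] at this
  have hQ1pos : (0:ℝ) < Q - 1 := by linarith
  have h3 : 2 * (Q-1)^(q-1) ≤ Q^(q-1) := by
    have hber : 1 + ((q-1 : ℕ):ℝ) * (1/(Q-1)) ≤ (1 + 1/(Q-1))^(q-1) :=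
      one_add_mul_le_pow (by
        have : (0:ℝ) ≤ 1/(Q-1) := by positivity
        linarith) (q-1)
    have hcastq : ((q-1:ℕ):ℝ) = Q - 1 := by
      rw [Nat.cast_sub (le_trans one_le_two hq)]; push_cast; rw [hQdef]
    rw [hcastq] at hber
    have h2le : (2:ℝ) ≤ (1 + 1/(Q-1))^(q-1) := by
      have hne : Q - 1 ≠ 0 := ne_of_gt hQ1pos
      have hyp : (Q-1) * (1/(Q-1)) = 1 := by field_simp
      calc (2:ℝ) = 1 + (Q-1)*(1/(Q-1)) := by rw [hyp]; norm_num
        _ ≤ _ := hber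
    have hfac : (Q-1) * (1 + 1/(Q-1)) = Q := by field_simp; ring
    calc 2 * (Q-1)^(q-1) ≤ (1 + 1/(Q-1))^(q-1) * (Q-1)^(q-1) := by
          nlinarith [pow_nonneg (le_of_lt hQ1pos) (q-1), h2le,
            pow_pos hQ1pos (q-1)]
      _ = ((Q-1) * (1 + 1/(Q-1)))^(q-1) := by rw [mul_pow]; ring
      _ = Q^(q-1) := by rw [hfac]
  have h4 : J^2 * (Q-1)^s ≤ Q^s := by
    obtain ⟨r, hr⟩ : ∃ r, s = (q-1)*(2*L) + r := ⟨s - (q-1)*(2*L), by omega⟩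
    have hQQ1 : Q - 1 ≤ Q := by linarith
    have hJ2 : J^2 ≤ (2:ℝ)^(2*L) := by
      have hJL : J < (2:ℝ)^L := by
        rw [hJdef]; exact_mod_cast hL
      have h2L : (0:ℝ) ≤ 2^L := by positivity
      rw [two_mul, pow_add]
      nlinarith [hJ1]
    calc J^2 * (Q-1)^s ≤ (2:ℝ)^(2*L) * (Q-1)^s :=
          mul_le_mul_of_nonneg_right hJ2 (pow_nonneg (le_of_lt hQ1pos) s)
      _ = (2 * (Q-1)^(q-1))^(2*L) * (Q-1)^r := by
          rw [hr, pow_add (Q-1), pow_mul (Q-1), mul_pow]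
          ring
      _ ≤ (Q^(q-1))^(2*L) * (Q-1)^r := by
          refine mul_le_mul_of_nonneg_right
            (pow_le_pow_left₀ ?_ h3 _) (pow_nonneg (le_of_lt hQ1pos) r)
          positivity
      _ ≤ (Q^(q-1))^(2*L) * Q^r := by
          refine mul_le_mul_of_nonneg_left
            (pow_le_pow_left₀ (le_of_lt hQ1pos) hQQ1 _) (by positivity)
      _ = Q^s := by rw [hr, pow_add Q, pow_mul Q]
  have hQs : (0:ℝ) < Q^s := by positivity
  have final : J^2 * B^s * Q^s < J^s * Q^s := by
    calc J^2 * B^s * Q^s = J^2 * (B^s * Q^s) := by ring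
      _ < J^2 * (J^s * (Q-1)^s) := by
          have hJ2pos : (0:ℝ) < J^2 := by positivity
          exact mul_lt_mul_of_pos_left h2 hJ2pos
      _ = J^s * (J^2 * (Q-1)^s) := by ring
      _ ≤ J^s * Q^s := mul_le_mul_of_nonneg_left h4 (by positivity)
  exact lt_of_mul_lt_mul_right final (le_of_lt hQs)


/-- parameters -/
def dd (k : ℕ) : ℕ := 2*k+2
noncomputable def alp (k : ℕ) : ℝ := 1 / (2 * (dd k))
noncomputable def sP (k j : ℕ) : ℕ := ⌊(j:ℝ) ^ (alp k)⌋₊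
def LP (j : ℕ) : ℕ := Nat.log 2 j + 1
noncomputable def qP (k j : ℕ) : ℕ := sP k j / (2 * LP j) + 1
noncomputable def mP (k j : ℕ) : ℕ := j / qP k j

lemma alp_pos (k : ℕ) : 0 < alp k := by
  unfold alp dd
  push_cast
  positivity

lemma alp_le (k : ℕ) : alp k ≤ 1/4 := by
  unfold alp dd
  refine one_div_le_one_div_of_le (by norm_num) ?_
  push_cast
  nlinarith [Nat.cast_nonneg (α := ℝ) k]

/-- The twin lemma at size `j`, given the numeric side conditions. -/
lemma twins_at (k j : ℕ) (hj2 : 2 ≤ j)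
    (cond1 : 2 * LP j ≤ sP k j)
    (cond2 : (2*k+2) * (sP k j + 1)^(2*k+1) < j) :
    ∀ G : SimpleGraph (Fin j), UFree G k →
      ∃ u v : Fin j, u ≠ v ∧ (nbr G u ∆ nbr G v).card ≤ mP k j := by
  intro G hG
  have hcardV : Fintype.card (Fin j) = j := Fintype.card_fin j
  set s := sP k j with hsdef
  set L := LP j with hLdef
  set q := qP k j with hqdef
  set m := mP k j with hmdef
  have hqs : q = s / (2 * L) + 1 := by rw [hqdef, hsdef, hLdef]; rfl
  have hms : m = j / q := by rw [hmdef, hqdef]; rfl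
  have hL1 : 1 ≤ L := Nat.le_add_left 1 _
  have hs2 : 2 ≤ s := le_trans (by omega) cond1
  have hq2 : 2 ≤ q := by
    have h1 : 1 ≤ s / (2 * L) := (Nat.one_le_div_iff (by omega)).2 cond1
    omega
  have hq0 : 0 < q := by omega
  have hjlt : j < q * (m + 1) := by
    rw [hms]
    calc j = q * (j / q) + j % q := (Nat.div_add_mod j q).symm
      _ < q * (j / q) + q := by
          have : j % q < q := Nat.mod_lt _ hq0
          omega
      _ = q * (j / q + 1) := by ring
  have hm1 : m + 1 ≤ j := by
    have h1 : m ≤ j / 2 := by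
      rw [hms]
      exact Nat.div_le_div_left hq2 (by omega)
    have h2 : j / 2 < j := Nat.div_lt_self (by omega) (by omega)
    omega
  have hLpow : j < 2 ^ L := Nat.lt_pow_succ_log_self (by omega) j
  have hsL : (q - 1) * (2 * L) ≤ s := by
    have h : q - 1 = s / (2 * L) := by omega
    rw [h]
    exact Nat.div_mul_le_self _ _
  apply exists_twins hG
  · rw [hcardV]
    exact numeric_main hq2 (by omega) hjlt hm1 hLpow hsL
  · rw [hcardV]
    calc ∑ i ∈ Finset.range (2*k+2), Nat.choose s i
        ≤ ∑ i ∈ Finset.range (2*k+2), (s+1)^(2*k+1) := by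
          refine Finset.sum_le_sum fun i hi => ?_
          calc Nat.choose s i ≤ s ^ i := Nat.choose_le_pow s i
            _ ≤ (s+1) ^ i := Nat.pow_le_pow_left (by omega) i
            _ ≤ (s+1) ^ (2*k+1) := Nat.pow_le_pow_right (by omega)
                (by exact Nat.lt_succ_iff.1 (Finset.mem_range.1 hi))
      _ = (2*k+2) * (s+1)^(2*k+1) := by
          rw [Finset.sum_const, Finset.card_range, smul_eq_mul]
      _ < j := cond2

end Params

section Eventually
open Filter

lemma ev_rpow_ge (c A : ℝ) (hc : 0 < c) : ∀ᶠ j : ℕ in atTop, A ≤ (j:ℝ) ^ c :=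
  ((tendsto_rpow_atTop hc).comp tendsto_natCast_atTop_atTop).eventually_ge_atTop A

lemma ev_mul_rpow {a b : ℝ} (A : ℝ) (h : a < b) :
    ∀ᶠ j : ℕ in atTop, A * (j:ℝ) ^ a ≤ (j:ℝ) ^ b := by
  filter_upwards [ev_rpow_ge (b - a) A (by linarith), eventually_gt_atTop 0] with j h1 hj
  have hjpos : (0:ℝ) < j := by exact_mod_cast hj
  calc A * (j:ℝ)^a ≤ (j:ℝ)^(b-a) * (j:ℝ)^a :=
        mul_le_mul_of_nonneg_right h1 (Real.rpow_nonneg hjpos.le a)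
    _ = (j:ℝ)^b := by rw [← Real.rpow_add hjpos]; ring_nf

lemma ev_log_le (c C : ℝ) (hc : 0 < c) (hC : 0 ≤ C) :
    ∀ᶠ j : ℕ in atTop, C * Real.log j + C ≤ (j:ℝ) ^ c := by
  have half : 0 < c/2 := by linarith
  filter_upwards [ev_mul_rpow (C * (2/c) + C) (show c/2 < c by linarith),
    eventually_ge_atTop 1] with j h1 hj1
  have hj1' : (1:ℝ) ≤ (j:ℝ) := by exact_mod_cast hj1
  have hlog : Real.log j ≤ (j:ℝ)^(c/2) / (c/2) :=
    Real.log_le_rpow_div (Nat.cast_nonneg j) half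
  have hr1 : (1:ℝ) ≤ (j:ℝ)^(c/2) := Real.one_le_rpow hj1' half.le
  have hd : (j:ℝ)^(c/2)/(c/2) = (j:ℝ)^(c/2) * (2/c) := by
    field_simp
  calc C * Real.log j + C ≤ C * ((j:ℝ)^(c/2) * (2/c)) + C * (j:ℝ)^(c/2) := by
        have h1' : C * Real.log j ≤ C * ((j:ℝ)^(c/2) * (2/c)) := by
          refine mul_le_mul_of_nonneg_left ?_ hC
          rw [← hd]; exact hlog
        nlinarith
    _ = (C * (2/c) + C) * (j:ℝ)^(c/2) := by ring
    _ ≤ (j:ℝ)^c := h1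

lemma LP_le (j : ℕ) (hj : 1 ≤ j) : (LP j : ℝ) ≤ 2 * Real.log j + 1 := by
  have h1 : (Nat.log 2 j : ℝ) ≤ Real.logb 2 j := Real.natLog_le_logb j 2
  have h2 : (1:ℝ)/2 ≤ Real.log 2 := by
    have := Real.log_two_gt_d9
    linarith
  have hlogj : 0 ≤ Real.log j := Real.log_nonneg (by exact_mod_cast hj)
  have h3 : Real.logb 2 j ≤ 2 * Real.log j := by
    rw [Real.logb, div_le_iff₀ (by linarith)]
    nlinarith
  unfold LP
  push_cast
  linarith

lemma sP_gt (k j : ℕ) : (j:ℝ)^(alp k) - 1 < (sP k j : ℝ) := by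
  have := Nat.lt_floor_add_one ((j:ℝ)^(alp k))
  unfold sP
  linarith

lemma sP_le (k j : ℕ) : (sP k j : ℝ) ≤ (j:ℝ)^(alp k) := by
  exact Nat.floor_le (Real.rpow_nonneg (Nat.cast_nonneg j) _)

lemma ev_cond1 (k : ℕ) : ∀ᶠ j : ℕ in atTop, 2 * LP j ≤ sP k j := by
  filter_upwards [ev_log_le (alp k) 5 (alp_pos k) (by norm_num),
    eventually_ge_atTop 2] with j hev hj2
  have hj1 : 1 ≤ j := by omega
  have hL := LP_le j hj1
  have hs := sP_gt k j
  have hlogj : Real.log 2 ≤ Real.log j := by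
    refine Real.log_le_log (by norm_num) (by exact_mod_cast hj2)
  have hlog2 : (0.6:ℝ) ≤ Real.log 2 := by
    have := Real.log_two_gt_d9; linarith
  -- (2 * LP j : ℝ) < sP k j
  have : ((2 * LP j : ℕ) : ℝ) < (sP k j : ℝ) := by
    push_cast
    nlinarith
  exact le_of_lt (by exact_mod_cast this)

lemma ev_cond2 (k : ℕ) :
    ∀ᶠ j : ℕ in atTop, (2*k+2) * (sP k j + 1)^(2*k+1) < j := by
  have ha : alp k * (2*k+1) < 1 := by
    have h1 : alp k * (2*(k:ℝ)+2) = 1/2 := by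
      unfold alp dd
      push_cast
      field_simp
    have hk0 : (0:ℝ) ≤ (k:ℝ) := Nat.cast_nonneg k
    nlinarith [alp_pos k]
  set C1 : ℝ := ((2*k+2) * 2^(2*k+1) : ℝ) with hC1
  filter_upwards [ev_mul_rpow (C1 + 1) ha, eventually_ge_atTop 1,
    ev_rpow_ge (alp k) 1 (alp_pos k)] with j h1 hj1 hrp
  have hj1' : (1:ℝ) ≤ (j:ℝ) := by exact_mod_cast hj1
  have hjpos : (0:ℝ) < (j:ℝ) := by linarith
  have hs1 : ((sP k j : ℝ) + 1) ≤ 2 * (j:ℝ)^(alp k) := by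
    have := sP_le k j
    linarith
  have hkey : (((2*k+2) * (sP k j + 1)^(2*k+1) : ℕ) : ℝ) < (j:ℝ) := by
    push_cast
    have hstep : ((sP k j : ℝ) + 1)^(2*k+1) ≤ (2 * (j:ℝ)^(alp k))^(2*k+1) := by
      refine pow_le_pow_left₀ (by positivity) hs1 _
    have hpow : ((j:ℝ)^(alp k))^(2*k+1) = (j:ℝ)^(alp k * (2*k+1)) := by
      rw [← Real.rpow_natCast ((j:ℝ)^(alp k)) (2*k+1), ← Real.rpow_mul hjpos.le]
      push_cast
      ring_nf
    have hC1vals : (0:ℝ) ≤ ((2*k+2):ℝ) := by positivity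
    calc ((2*k+2):ℝ) * ((sP k j : ℝ) + 1)^(2*k+1)
        ≤ ((2*k+2):ℝ) * (2 * (j:ℝ)^(alp k))^(2*k+1) := by
          exact mul_le_mul_of_nonneg_left hstep hC1vals
      _ = C1 * (j:ℝ)^(alp k * (2*k+1)) := by
          rw [mul_pow, hpow, hC1]
          push_cast
          ring
      _ < (C1 + 1) * (j:ℝ)^(alp k * (2*k+1)) := by
          have : (0:ℝ) < (j:ℝ)^(alp k * (2*k+1)) := Real.rpow_pos_of_pos hjpos _
          nlinarith
      _ ≤ (j:ℝ)^(1:ℝ) := h1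
      _ = (j:ℝ) := Real.rpow_one _
  exact_mod_cast hkey

lemma ev_cond3 (k : ℕ) :
    ∀ᶠ j : ℕ in atTop, (mP k j : ℝ) ≤ (j:ℝ)^(1 - alp k/2) := by
  have hα := alp_pos k
  filter_upwards [ev_log_le (alp k/2) 8 (by linarith) (by norm_num),
    ev_rpow_ge (alp k) 2 hα, eventually_ge_atTop 2, ev_cond1 k] with j hlog hge2 hj2 hc1
  have hj1 : 1 ≤ j := by omega
  have hjpos : (0:ℝ) < (j:ℝ) := by exact_mod_cast (by omega : 0 < j)
  set s := sP k j
  set L := LP j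
  set q := qP k j with hqdef
  have hqs : q = s / (2 * L) + 1 := by rw [hqdef]; rfl
  have hL1 : (1:ℕ) ≤ L := Nat.le_add_left 1 _
  -- (s:ℝ) < 2L*q
  have hsq : (s:ℝ) < 2 * L * q := by
    have h1 : s < 2*L*(s/(2*L)) + 2*L := by
      have := Nat.div_add_mod s (2*L)
      have h2 : s % (2*L) < 2*L := Nat.mod_lt _ (by omega)
      omega
    have h2 : 2*L*q = 2*L*(s/(2*L)) + 2*L := by rw [hqs]; ring
    have : s < 2*L*q := by omega
    exact_mod_cast this
  -- s ≥ j^α/2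
  have hs2 : (j:ℝ)^(alp k)/2 ≤ (s:ℝ) := by
    have := sP_gt k j
    linarith
  have hspos : (0:ℝ) < (s:ℝ) := by
    have : (0:ℝ) < (j:ℝ)^(alp k) := Real.rpow_pos_of_pos hjpos _
    linarith
  have hqpos : (0:ℝ) < (q:ℝ) := by
    have h0 : (0:ℕ) < q := by rw [hqs]; exact Nat.succ_pos _
    exact_mod_cast h0
  have hLpos : (0:ℝ) < (L:ℝ) := by exact_mod_cast hL1
  -- mP ≤ j/q ≤ j*2L/s
  have hm1 : (mP k j : ℝ) ≤ (j:ℝ)/(q:ℝ) := by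
    have : mP k j = j / q := by rw [hqdef]; rfl
    rw [this]
    exact Nat.cast_div_le
  have hm2 : (j:ℝ)/(q:ℝ) ≤ (j:ℝ)*(2*L)/(s:ℝ) := by
    rw [div_le_div_iff₀ hqpos hspos]
    have : (s:ℝ) ≤ 2*L*q := le_of_lt hsq
    nlinarith [hjpos.le]
  -- j*2L/s ≤ 4L*j^{1-α}
  have hm3 : (j:ℝ)*(2*L)/(s:ℝ) ≤ 4*L*(j:ℝ)^(1-alp k) := by
    rw [div_le_iff₀ hspos]
    have hr : (j:ℝ)^(1-alp k) * ((j:ℝ)^(alp k)/2) = (j:ℝ)/2 := by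
      have hmul : (j:ℝ)^(1-alp k) * (j:ℝ)^(alp k) = (j:ℝ) := by
        rw [← Real.rpow_add hjpos]
        norm_num
      calc (j:ℝ)^(1-alp k) * ((j:ℝ)^(alp k)/2)
          = ((j:ℝ)^(1-alp k) * (j:ℝ)^(alp k))/2 := by ring
        _ = (j:ℝ)/2 := by rw [hmul]
    calc (j:ℝ)*(2*L) = 4*L*((j:ℝ)/2) := by ring
      _ = 4*L*((j:ℝ)^(1-alp k) * ((j:ℝ)^(alp k)/2)) := by rw [hr]
      _ ≤ 4*L*((j:ℝ)^(1-alp k) * (s:ℝ)) := by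
          have h1 : (0:ℝ) ≤ (j:ℝ)^(1-alp k) := Real.rpow_nonneg hjpos.le _
          gcongr
      _ = 4*L*(j:ℝ)^(1-alp k) * (s:ℝ) := by ring
  -- 4L ≤ j^{α/2}
  have hm4 : 4*(L:ℝ) ≤ (j:ℝ)^(alp k/2) := by
    have hLle := LP_le j hj1
    calc 4*(L:ℝ) ≤ 8 * Real.log j + 8 := by
          have hlogj : 0 ≤ Real.log j := Real.log_nonneg (by exact_mod_cast hj1)
          nlinarith
      _ ≤ (j:ℝ)^(alp k/2) := hlog
  calc (mP k j : ℝ) ≤ 4*L*(j:ℝ)^(1-alp k) := le_trans hm1 (le_trans hm2 hm3)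
    _ ≤ (j:ℝ)^(alp k/2) * (j:ℝ)^(1-alp k) := by
        have : (0:ℝ) ≤ (j:ℝ)^(1-alp k) := Real.rpow_nonneg hjpos.le _
        nlinarith [hm4]
    _ = (j:ℝ)^(1-alp k/2) := by
        rw [← Real.rpow_add hjpos]
        ring_nf

end Eventually

section Main
open Filter

/-- The number of `U(k)`-free graphs on `[n]`. -/
noncomputable def FF (k n : ℕ) : ℕ := Nat.card {G : SimpleGraph (Fin n) // UFree G k}

lemma FF_rec (k N1 : ℕ)
    (hcond : ∀ j, N1 ≤ j → 2 ≤ j ∧ 2 * LP j ≤ sP k j ∧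
      (2*k+2) * (sP k j + 1)^(2*k+1) < j) :
    ∀ n, N1 ≤ n →
      FF k n ≤ 2^(N1*N1) * ∏ j ∈ Finset.Ioc N1 n, (j+1)^(mP k j + 2) := by
  intro n
  induction n with
  | zero =>
    intro h
    have hN0 : N1 = 0 := Nat.le_zero.1 h
    subst hN0
    simpa [FF] using card_graphs_le 0 (fun G => UFree G k)
  | succ n ih =>
    intro hN
    rcases Nat.lt_or_ge n N1 with hge | hlt
    · -- N1 = n+1 : base case
      have hN1 : N1 = n+1 := by omega
      subst hN1
      simpa [FF] using card_graphs_le (n+1) (fun G => UFree G k)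
    · -- recursive case
      have hcj := hcond (n+1) (by omega)
      have htw := twins_at k (n+1) hcj.1 hcj.2.1 hcj.2.2
      have hstep := step k n (mP k (n+1)) htw
      have h1 : FF k (n+1) ≤ FF k n * (n+2)^(mP k (n+1)+2) := by
        refine le_trans hstep ?_
        unfold FF
        refine Nat.mul_le_mul_left _ ?_
        set m := mP k (n+1)
        calc (n+1)*n*(n+2)^m ≤ ((n+2)*(n+2))*(n+2)^m := by
              refine Nat.mul_le_mul_right _ ?_
              exact Nat.mul_le_mul (by omega) (by omega)
          _ = (n+2)^(m+2) := by ring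
      calc FF k (n+1) ≤ FF k n * (n+2)^(mP k (n+1)+2) := h1
        _ ≤ (2^(N1*N1) * ∏ j ∈ Finset.Ioc N1 n, (j+1)^(mP k j + 2)) *
              (n+2)^(mP k (n+1)+2) := Nat.mul_le_mul_right _ (ih hlt)
        _ = 2^(N1*N1) * ∏ j ∈ Finset.Ioc N1 (n+1), (j+1)^(mP k j + 2) := by
            rw [Finset.prod_Ioc_succ_top hlt]
            ring

theorem count_Uk_free_aux (k : ℕ) :
    ∀ᶠ n : ℕ in atTop,
      (FF k n : ℝ) ≤ (2 : ℝ) ^ ((n : ℝ) ^ ((2 : ℝ) - alp k / 4)) := by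
  have hα := alp_pos k
  have hα4 := alp_le k
  -- fix N1 with all stepping conditions
  obtain ⟨N1, hN1⟩ := eventually_atTop.1
    (((ev_cond1 k).and ((ev_cond2 k).and ((ev_cond3 k).and (eventually_ge_atTop 2)))))
  have hrec := FF_rec k N1 (fun j hj =>
    ⟨(hN1 j hj).2.2.2, (hN1 j hj).1, (hN1 j hj).2.1⟩)
  have hmle : ∀ j, N1 ≤ j → (mP k j : ℝ) ≤ (j:ℝ)^(1 - alp k/2) :=
    fun j hj => (hN1 j hj).2.2.1
  -- eventual final inequalities
  filter_upwards [eventually_ge_atTop (N1+1), eventually_ge_atTop 2,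
    ev_log_le (alp k/8) 4 (by linarith) (by norm_num),
    ev_rpow_ge (2 - alp k/4) (3*((N1*N1:ℕ):ℝ)) (by linarith),
    ev_mul_rpow (a := 2 - 3*(alp k)/8) (b := 2 - alp k/4) 3 (by linarith),
    ev_mul_rpow (a := 1 + alp k/8) (b := 2 - alp k/4) 6 (by nlinarith)]
    with n hnN1 hn2 hlog hA hB hC
  have hn1 : (1:ℝ) ≤ (n:ℝ) := by exact_mod_cast (by omega : 1 ≤ n)
  have hnpos : (0:ℝ) < (n:ℝ) := by linarith
  set α := alp k
  set Mn : ℕ := ⌊(n:ℝ)^(1 - α/2)⌋₊ with hMndef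
  -- ℕ bound : FF k n ≤ 2^(N1*N1) * (n+1)^(n*(Mn+2))
  have hNat : FF k n ≤ 2^(N1*N1) * (n+1)^(n*(Mn+2)) := by
    refine le_trans (hrec n (by omega)) ?_
    refine Nat.mul_le_mul_left _ ?_
    have hexp : (1:ℝ) - α/2 ≥ 0 := by linarith
    calc ∏ j ∈ Finset.Ioc N1 n, (j+1)^(mP k j + 2)
        ≤ ∏ j ∈ Finset.Ioc N1 n, (n+1)^(mP k j + 2) := by
          refine Finset.prod_le_prod' fun j hj => ?_
          have hjn : j ≤ n := (Finset.mem_Ioc.1 hj).2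
          exact Nat.pow_le_pow_left (by omega) _
      _ = (n+1)^(∑ j ∈ Finset.Ioc N1 n, (mP k j + 2)) :=
          Finset.prod_pow_eq_pow_sum _ _ _
      _ ≤ (n+1)^(n*(Mn+2)) := by
          refine Nat.pow_le_pow_right (by omega) ?_
          calc ∑ j ∈ Finset.Ioc N1 n, (mP k j + 2)
              ≤ ∑ _j ∈ Finset.Ioc N1 n, (Mn+2) := by
                refine Finset.sum_le_sum fun j hj => ?_
                have hj1 := (Finset.mem_Ioc.1 hj).1
                have hj2 := (Finset.mem_Ioc.1 hj).2
                have : (mP k j : ℝ) ≤ (n:ℝ)^(1 - α/2) := by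
                  refine le_trans (hmle j (by omega)) ?_
                  refine Real.rpow_le_rpow (Nat.cast_nonneg j) ?_ hexp
                  exact_mod_cast hj2
                have := Nat.le_floor this
                omega
            _ ≤ n*(Mn+2) := by
                rw [Finset.sum_const, smul_eq_mul]
                refine Nat.mul_le_mul_right _ ?_
                have := Nat.card_Ioc N1 n
                omega
  -- move to ℝ
  have hcast : (FF k n : ℝ) ≤ (2:ℝ) ^ (((N1*N1 : ℕ):ℝ) +
      Real.logb 2 ((n:ℝ)+1) * ((n*(Mn+2) : ℕ):ℝ)) := by
    have h2 : ((2:ℕ):ℝ) = (2:ℝ) := by norm_cast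
    have hn1pos : (0:ℝ) < (n:ℝ)+1 := by linarith
    have hb : ((n:ℝ)+1) = (2:ℝ) ^ (Real.logb 2 ((n:ℝ)+1)) :=
      (Real.rpow_logb (by norm_num) (by norm_num) hn1pos).symm
    calc (FF k n : ℝ) ≤ ((2^(N1*N1) * (n+1)^(n*(Mn+2)) : ℕ) : ℝ) := by
          exact_mod_cast hNat
      _ = (2:ℝ)^(((N1*N1:ℕ)):ℝ) * ((n:ℝ)+1)^(((n*(Mn+2):ℕ)):ℝ) := by
          rw [Real.rpow_natCast, Real.rpow_natCast]
          push_cast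
          ring
      _ = (2:ℝ)^(((N1*N1:ℕ)):ℝ) *
            ((2:ℝ) ^ (Real.logb 2 ((n:ℝ)+1)))^(((n*(Mn+2):ℕ)):ℝ) := by
          rw [← hb]
      _ = (2:ℝ) ^ (((N1*N1 : ℕ):ℝ) +
            Real.logb 2 ((n:ℝ)+1) * ((n*(Mn+2) : ℕ):ℝ)) := by
          rw [← Real.rpow_mul (by norm_num), ← Real.rpow_add (by norm_num)]
  refine le_trans hcast ?_
  rw [Real.rpow_le_rpow_left_iff (by norm_num : (1:ℝ) < 2)]
  -- final real estimate
  have hlogb : Real.logb 2 ((n:ℝ)+1) ≤ 4 * Real.log n + 4 := by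
    have hlog2 : (1:ℝ)/2 ≤ Real.log 2 := by
      have := Real.log_two_gt_d9; linarith
    have hn2' : (2:ℝ) ≤ (n:ℝ) := by exact_mod_cast hn2
    have hmono : Real.log ((n:ℝ)+1) ≤ Real.log ((n:ℝ)^2) := by
      refine Real.log_le_log (by linarith) ?_
      nlinarith
    rw [Real.log_pow] at hmono
    push_cast at hmono
    have hlogn : 0 ≤ Real.log n := Real.log_nonneg hn1
    rw [Real.logb, div_le_iff₀ (by linarith)]
    nlinarith
  have hlank : 4 * Real.log n + 4 ≤ (n:ℝ)^(α/8) := hlog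
  have hMnle : ((Mn:ℕ):ℝ) ≤ (n:ℝ)^(1-α/2) :=
    Nat.floor_le (Real.rpow_nonneg hnpos.le _)
  have hEle : ((n*(Mn+2) : ℕ):ℝ) ≤ (n:ℝ) * ((n:ℝ)^(1-α/2) + 2) := by
    push_cast
    nlinarith [hMnle, hnpos.le]
  have hlogbpos : 0 ≤ Real.logb 2 ((n:ℝ)+1) := by
    refine Real.logb_nonneg (by norm_num) (by linarith)
  have hstep1 : Real.logb 2 ((n:ℝ)+1) * ((n*(Mn+2) : ℕ):ℝ) ≤
      (n:ℝ)^(α/8) * ((n:ℝ) * ((n:ℝ)^(1-α/2) + 2)) := by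
    have h1 : (0:ℝ) ≤ ((n*(Mn+2) : ℕ):ℝ) := Nat.cast_nonneg _
    have h2 : (0:ℝ) ≤ (n:ℝ) * ((n:ℝ)^(1-α/2) + 2) := by positivity
    nlinarith [hlogb, hlank, hEle, hlogbpos]
  have hsplit : (n:ℝ)^(α/8) * ((n:ℝ) * ((n:ℝ)^(1-α/2) + 2)) =
      (n:ℝ)^(2 - 3*α/8) + 2*(n:ℝ)^(1 + α/8) := by
    have e1 : (n:ℝ)^(α/8) * ((n:ℝ) * (n:ℝ)^(1-α/2)) = (n:ℝ)^(2 - 3*α/8) := by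
      have h1 : (n:ℝ) * (n:ℝ)^(1-α/2) = (n:ℝ)^(1 + (1-α/2)) := by
        rw [Real.rpow_add hnpos, Real.rpow_one]
      rw [h1, ← Real.rpow_add hnpos]
      congr 1
      ring
    have e2 : (n:ℝ)^(α/8) * (n:ℝ) = (n:ℝ)^(1 + α/8) := by
      rw [Real.rpow_add hnpos, Real.rpow_one, mul_comm]
    calc (n:ℝ)^(α/8) * ((n:ℝ) * ((n:ℝ)^(1-α/2) + 2))
        = (n:ℝ)^(α/8) * ((n:ℝ) * (n:ℝ)^(1-α/2)) + 2*((n:ℝ)^(α/8) * (n:ℝ)) := by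
          ring
      _ = (n:ℝ)^(2 - 3*α/8) + 2*(n:ℝ)^(1 + α/8) := by rw [e1, e2]
  calc ((N1*N1 : ℕ):ℝ) + Real.logb 2 ((n:ℝ)+1) * ((n*(Mn+2) : ℕ):ℝ)
      ≤ ((N1*N1 : ℕ):ℝ) + ((n:ℝ)^(2 - 3*α/8) + 2*(n:ℝ)^(1 + α/8)) := by
        rw [← hsplit]
        linarith [hstep1]
    _ ≤ (1/3)*(n:ℝ)^(2 - α/4) + ((1/3)*(n:ℝ)^(2 - α/4) + (1/3)*(n:ℝ)^(2 - α/4)) := by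
        have b1 : ((N1*N1 : ℕ):ℝ) ≤ (1/3)*(n:ℝ)^(2 - α/4) := by linarith [hA]
        have b2 : (n:ℝ)^(2 - 3*α/8) ≤ (1/3)*(n:ℝ)^(2 - α/4) := by linarith [hB]
        have b3 : 2*(n:ℝ)^(1 + α/8) ≤ (1/3)*(n:ℝ)^(2 - α/4) := by linarith [hC]
        linarith
    _ = (n:ℝ)^(2 - α/4) := by ring

/-- **Theorem (counting `U(k)`-free graphs).**
For each `k ∈ ℕ` there exists `ε = ε(k) > 0` such that, for every sufficiently large `n`,
there are at most `2 ^ (n ^ (2 - ε))` distinct `U(k)`-free graphs on the vertex set `[n]`. -/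
theorem count_Uk_free (k : ℕ) :
    ∃ ε : ℝ, 0 < ε ∧ ∃ N : ℕ, ∀ n : ℕ, N ≤ n →
      (Nat.card {G : SimpleGraph (Fin n) // UFree G k} : ℝ) ≤
        (2 : ℝ) ^ ((n : ℝ) ^ ((2 : ℝ) - ε)) := by
  refine ⟨alp k / 4, by linarith [alp_pos k], ?_⟩
  obtain ⟨N, hN⟩ := eventually_atTop.1 (count_Uk_free_aux k)
  refine ⟨N, fun n hn => ?_⟩
  have := hN n hn
  rw [FF] at this
  convert this using 3

end Main
end ABBM
end

section
/- Let G be a graph and t ∈ ℕ. Suppose A, B ⊆ V(G) are disjoint sets with A → B and |B| ≥ 2^t. Then there exist subsets A' ⊆ A and B' ⊆ B with |A'| = t such that B' → A'. -/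
open scoped symmDiff

namespace ABBM

variable {V : Type*}

/-- **Lemma (reverse Sauer).**  If `A` and `B` are disjoint vertex sets of a graph `G` with
`A → B` and `|B| ≥ 2 ^ t`, then there are subsets `A' ⊆ A` and `B' ⊆ B` with `|A'| = t`
such that `B' → A'`. -/
theorem shatter_backwards (G : SimpleGraph V) (t : ℕ) (A B : Finset V)
    (hdisj : Disjoint A B) (hshat : Shatters G A B) (hcard : 2 ^ t ≤ B.card) :
    ∃ A' ⊆ A, ∃ B' ⊆ B, A'.card = t ∧ Shatters G B' A' := by
  classical
  -- An injection from subsets of `Fin t` into `B`.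
  have hcard' : Fintype.card (Finset (Fin t)) ≤ Fintype.card {x // x ∈ B} := by
    simpa using hcard
  obtain ⟨e⟩ := Function.Embedding.nonempty_of_card_le hcard'
  set b : Finset (Fin t) → V := fun s => (e s : V) with hb
  have hbB : ∀ s, b s ∈ B := fun s => (e s).2
  have hbinj : Function.Injective b := fun s s' h => e.injective (Subtype.ext h)
  -- For each `i`, the set `T i` of `b s` with `i ∈ s`.
  set T : Fin t → Finset V := fun i => (Finset.univ.filter fun s => i ∈ s).image b with hT
  have hTB : ∀ i, T i ⊆ B := by
    intro i x hx
    simp only [hT, Finset.mem_image] at hx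
    obtain ⟨s, _, rfl⟩ := hx
    exact hbB s
  have hmemT : ∀ i s, b s ∈ T i ↔ i ∈ s := by
    intro i s
    simp only [hT, Finset.mem_image, Finset.mem_filter, Finset.mem_univ, true_and]
    constructor
    · rintro ⟨s', hi, hs⟩; rwa [hbinj hs] at hi
    · intro hi; exact ⟨s, hi, rfl⟩
  -- Choose `a i ∈ A` with neighbourhood `T i` in `B`.
  choose a haA ha using fun i => hshat (T i) (hTB i)
  have hainj : Function.Injective a := by
    intro i j hij
    by_contra hne
    have h1 : G.Adj (a i) (b {i}) ↔ b {i} ∈ T i := ha i (b {i}) (hbB _)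
    have h2 : G.Adj (a j) (b {i}) ↔ b {i} ∈ T j := ha j (b {i}) (hbB _)
    rw [hij] at h1
    have : (i ∈ ({i} : Finset (Fin t))) ↔ (j ∈ ({i} : Finset (Fin t))) := by
      rw [← hmemT i {i}, ← hmemT j {i}, ← h1, ← h2]
    simp at this
    exact hne (this.symm)
  refine ⟨Finset.univ.image a, ?_, Finset.univ.image b, ?_, ?_, ?_⟩
  · intro x hx
    obtain ⟨i, _, rfl⟩ := Finset.mem_image.mp hx
    exact haA i
  · intro x hx
    obtain ⟨s, _, rfl⟩ := Finset.mem_image.mp hx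
    exact hbB s
  · rw [Finset.card_image_of_injective _ hainj, Finset.card_univ, Fintype.card_fin]
  · intro S hS
    set s : Finset (Fin t) := Finset.univ.filter fun i => a i ∈ S with hs
    refine ⟨b s, Finset.mem_image.mpr ⟨s, Finset.mem_univ _, rfl⟩, ?_⟩
    intro x hx
    obtain ⟨i, _, rfl⟩ := Finset.mem_image.mp hx
    rw [G.adj_comm, ha i (b s) (hbB s), hmemT i s, hs]
    simp

end ABBM
end

section
/- Let G be a graph and r, t ∈ ℕ. Let A_1, …, A_r, B ⊆ V(G) be pairwise disjoint sets with |B| ≥ 2^{rt} and A_j → B for each j ∈ [r]. Then there exist subsets A'_j ⊆ A_j with |A'_j| = t for each j ∈ [r], and a subset B' ⊆ B, such that B' → A'_1 ∪ … ∪ A'_r. -/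
open scoped symmDiff

namespace ABBM

variable {V : Type*}

/-- Key inductive lemma: with `|B| ≥ 2^(n+k)` and `C s` shattering `B` for each `s`,
we can pick `a s ∈ C s` and "blocks" indexed by boolean patterns, each of size ≥ `2^k`,
realizing every adjacency pattern to the `a s`. -/
lemma key [DecidableEq V] (G : SimpleGraph V) :
    ∀ (n k : ℕ) (C : Fin n → Finset V) (B : Finset V),
      2 ^ (n + k) ≤ B.card → (∀ s, Shatters G (C s) B) →
      ∃ (a : Fin n → V) (blk : (Fin n → Bool) → Finset V),
        (∀ s, a s ∈ C s) ∧
        (∀ ε, blk ε ⊆ B ∧ 2 ^ k ≤ (blk ε).card) ∧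
        (∀ ε s, ∀ b ∈ blk ε, (G.Adj (a s) b ↔ ε s = true)) := by
  intro n
  induction n with
  | zero =>
    intro k C B hB _
    exact ⟨Fin.elim0, fun _ => B, fun s => s.elim0,
      fun ε => ⟨subset_rfl, by simpa using hB⟩, fun ε s => s.elim0⟩
  | succ n ih =>
    intro k C B hB hsh
    obtain ⟨a, blk, ha, hblk, hadj⟩ := ih (k + 1) (fun s => C s.succ) B
      (by rwa [show n + (k + 1) = n + 1 + k from by omega]) (fun s => hsh s.succ)
    -- blocks are pairwise disjoint
    have hdisj : ∀ ε ε' b, b ∈ blk ε → b ∈ blk ε' → ε = ε' := by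
      intro ε ε' b hb hb'
      funext s
      have h1 := hadj ε s b hb
      have h2 := hadj ε' s b hb'
      rw [h1] at h2
      cases hε : ε s <;> cases hε' : ε' s <;> simp [hε, hε'] at h2 ⊢ <;> tauto
    -- choose a half of each block
    have hhalf : ∀ ε : Fin n → Bool, ∃ S ⊆ blk ε, S.card = 2 ^ k := by
      intro ε
      obtain ⟨S, hS1, hS2⟩ := Finset.exists_subset_card_eq
        (le_trans (Nat.pow_le_pow_right (by norm_num) (Nat.le_succ k)) (hblk ε).2)
      exact ⟨S, hS1, hS2⟩
    choose Sh hShsub hShcard using hhalf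
    classical
    set S : Finset V := Finset.univ.biUnion Sh with hSdef
    have hSB : S ⊆ B := by
      intro x hx
      rw [hSdef, Finset.mem_biUnion] at hx
      obtain ⟨η, _, hη⟩ := hx
      exact (hblk η).1 (hShsub η hη)
    obtain ⟨a0, ha0, ha0adj⟩ := hsh 0 S hSB
    refine ⟨Fin.cons a0 a,
      fun ε => if ε 0 = true then Sh (fun i => ε i.succ)
        else blk (fun i => ε i.succ) \ Sh (fun i => ε i.succ), ?_, ?_, ?_⟩
    · intro s
      refine Fin.cases ?_ ?_ s
      · simpa using ha0
      · intro i; simpa using ha i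
    · intro ε
      dsimp only
      by_cases h0 : ε 0 = true
      · rw [if_pos h0]
        exact ⟨fun x hx => (hblk _).1 (hShsub _ hx), le_of_eq (hShcard _).symm⟩
      · rw [if_neg h0]
        constructor
        · exact fun x hx => (hblk _).1 (Finset.mem_sdiff.mp hx).1
        · have h1 := Finset.card_sdiff_of_subset (hShsub (fun i => ε i.succ))
          have h2 := (hblk (fun i => ε i.succ)).2
          have h3 := hShcard (fun i => ε i.succ)
          have : 2 ^ (k + 1) = 2 ^ k * 2 := pow_succ 2 k
          omega
    · intro ε s b hb
      dsimp only at hb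
      have hbblk : b ∈ blk (fun i => ε i.succ) := by
        by_cases h0 : ε 0 = true
        · rw [if_pos h0] at hb; exact hShsub _ hb
        · rw [if_neg h0] at hb; exact (Finset.mem_sdiff.mp hb).1
      refine Fin.cases ?_ ?_ s
      · have hbB : b ∈ B := (hblk _).1 hbblk
        have := ha0adj b hbB
        simp only [Fin.cons_zero]
        rw [this]
        constructor
        · intro hbS
          by_contra h0
          rw [if_neg h0] at hb
          rw [hSdef, Finset.mem_biUnion] at hbS
          obtain ⟨η, _, hη⟩ := hbS
          have := hdisj η (fun i => ε i.succ) b (hShsub η hη) hbblk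
          rw [this] at hη
          exact (Finset.mem_sdiff.mp hb).2 hη
        · intro h0
          rw [if_pos h0] at hb
          rw [hSdef, Finset.mem_biUnion]
          exact ⟨_, Finset.mem_univ _, hb⟩
      · intro i
        simpa using hadj (fun i => ε i.succ) i b hbblk


/-- **Lemma (reverse Sauer, many sets).**  If `A 1, …, A r, B` are pairwise disjoint vertex
sets of a graph `G` with `|B| ≥ 2 ^ (r t)` and `A j → B` for each `j`, then there are subsets
`A' j ⊆ A j` with `|A' j| = t`, and `B' ⊆ B`, such that `B' → A' 1 ∪ … ∪ A' r`. -/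
theorem shatter_backwards_many [DecidableEq V] (G : SimpleGraph V) (r t : ℕ)
    (A : Fin r → Finset V) (B : Finset V)
    (hdisjA : ∀ i j : Fin r, i ≠ j → Disjoint (A i) (A j))
    (hdisjB : ∀ j : Fin r, Disjoint (A j) B)
    (hcard : 2 ^ (r * t) ≤ B.card)
    (hshat : ∀ j : Fin r, Shatters G (A j) B) :
    ∃ A' : Fin r → Finset V, (∀ j : Fin r, A' j ⊆ A j ∧ (A' j).card = t) ∧
      ∃ B' ⊆ B, Shatters G B' (Finset.univ.biUnion A') := by
  classical
  set e : Fin r × Fin t ≃ Fin (r * t) := finProdFinEquiv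
  set C : Fin (r * t) → Finset V := fun s => A (e.symm s).1 with hC
  obtain ⟨a, blk, ha, hblk, hadj⟩ := key G (r * t) 0 C B (by simpa using hcard)
    (fun s => hshat (e.symm s).1)
  have hne : ∀ ε, (blk ε).Nonempty := fun ε =>
    Finset.card_pos.mp (lt_of_lt_of_le (by norm_num) (hblk ε).2)
  -- injectivity of a
  have ainj : Function.Injective a := by
    intro s s' hss
    by_contra hne'
    set ε : Fin (r * t) → Bool := fun u => decide (u = s) with hε
    obtain ⟨b, hb⟩ := hne ε
    have h1 := (hadj ε s b hb).mpr (by simp [hε])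
    have h2 := (hadj ε s' b hb)
    rw [← hss] at h2
    have := h2.mp h1
    simp [hε] at this
    exact hne' this.symm
  refine ⟨fun j => Finset.image (fun i : Fin t => a (e (j, i))) Finset.univ, ?_, B,
    subset_rfl, ?_⟩
  · intro j
    constructor
    · intro x hx
      simp only [Finset.mem_image] at hx
      obtain ⟨i, _, rfl⟩ := hx
      have := ha (e (j, i))
      simpa [hC] using this
    · rw [Finset.card_image_of_injective _ (fun i i' h => by
        have := ainj h
        have := e.injective this
        exact (Prod.mk.injEq _ _ _ _).mp this |>.2)]
      simp
  · intro T hT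
    set ε : Fin (r * t) → Bool := fun s => decide (a s ∈ T) with hε
    obtain ⟨b, hb⟩ := hne ε
    refine ⟨b, (hblk ε).1 hb, ?_⟩
    intro x hx
    simp only [Finset.mem_biUnion, Finset.mem_image] at hx
    obtain ⟨j, -, i, -, rfl⟩ := hx
    rw [G.adj_comm]
    rw [hadj ε (e (j, i)) b hb]
    simp [hε]


end ABBM
end

section
/- For each r, k ∈ ℕ there exists K = K(r,k) ∈ ℕ such that the following holds: if G is a graph on vertex set A_1 ∪ … ∪ A_r and the r-partite graph induced by G between these parts equals U(r,K), then G contains an induced copy of U*_v(r,k) for some v ∈ {0,1}^r. -/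
open scoped symmDiff

namespace ABBM

variable {V : Type*}

/-- `uSizeAux k j = (a, s)` where `a` is the size of the `(j+1)`-st part of the generalized
universal graph `U(r,k)` and `s` is the total size of its first `j+1` parts:
the first part has size `k` and each subsequent part has size `2` to the power of the sum
of the sizes of all previous parts. -/
def uSizeAux (k : ℕ) : ℕ → ℕ × ℕ
  | 0 => (k, k)
  | j + 1 => (2 ^ (uSizeAux k j).2, (uSizeAux k j).2 + 2 ^ (uSizeAux k j).2)

/-- The size of the `(j+1)`-st part of `U(r,k)`. -/
def uSize (k j : ℕ) : ℕ := (uSizeAux k j).1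

/-- The total number of vertices `|U(r,k)|`. -/
def uTotal (r k : ℕ) : ℕ := ∑ j ∈ Finset.range r, uSize k j

/-- The `r`-partite graph induced by `G` between the (disjoint) parts `A 0, …, A (r-1)`
is the generalized universal graph `U(r,k)`: the parts have the prescribed sizes and each
part shatters the union of all previous parts. -/
def IsUParts [DecidableEq V] (G : SimpleGraph V) (r k : ℕ) (A : Fin r → Finset V) : Prop :=
  (∀ i j : Fin r, i ≠ j → Disjoint (A i) (A j)) ∧
  (∀ j : Fin r, (A j).card = uSize k j.val) ∧
  (∀ j : Fin r, j.val ≠ 0 →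
    Shatters G (A j) ((Finset.univ.filter fun i => i < j).biUnion A))

/-- The parts `A` induce a copy of `U*_v(r,k)` in `G`: between distinct parts the graph is
`U(r,k)`, and part `j` induces a complete graph if `v j = true` and an empty graph otherwise. -/
def IsUStarParts [DecidableEq V] (G : SimpleGraph V) (r k : ℕ) (v : Fin r → Bool)
    (A : Fin r → Finset V) : Prop :=
  IsUParts G r k A ∧
  ∀ j : Fin r, ∀ x ∈ A j, ∀ y ∈ A j, x ≠ y → (G.Adj x y ↔ v j = true)

section Aux
open Finset


private lemma ramsey2 {V : Type} [DecidableEq V] (G : SimpleGraph V) :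
    ∀ (n a b : ℕ) (s : Finset V), a + b ≤ n → 2 ^ n ≤ s.card →
      (∃ t ⊆ s, t.card = a ∧ ∀ x ∈ t, ∀ y ∈ t, x ≠ y → G.Adj x y) ∨
      (∃ t ⊆ s, t.card = b ∧ ∀ x ∈ t, ∀ y ∈ t, x ≠ y → ¬ G.Adj x y) := by
  intro n
  induction n with
  | zero =>
    intro a b s hab _
    have ha : a = 0 := by omega
    subst ha
    exact Or.inl ⟨∅, empty_subset _, card_empty, by simp⟩
  | succ n ih =>
    intro a b s hab hs
    rcases Nat.eq_zero_or_pos a with rfl | ha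
    · exact Or.inl ⟨∅, empty_subset _, card_empty, by simp⟩
    rcases Nat.eq_zero_or_pos b with rfl | hb
    · exact Or.inr ⟨∅, empty_subset _, card_empty, by simp⟩
    have hsne : s.Nonempty := by
      rw [← card_pos]
      calc 0 < 2 ^ (n+1) := Nat.pow_pos (by norm_num)
        _ ≤ s.card := hs
    obtain ⟨x, hx⟩ := hsne
    classical
    set N := (s.erase x).filter (fun y => G.Adj x y) with hN
    set M := (s.erase x).filter (fun y => ¬ G.Adj x y) with hM
    have hNM : N.card + M.card = (s.erase x).card := by
      rw [hN, hM]; exact card_filter_add_card_filter_not _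
    have hec : (s.erase x).card = s.card - 1 := card_erase_of_mem hx
    have hpow : 2 ^ (n+1) = 2 ^ n + 2 ^ n := by ring
    have hcase : 2 ^ n ≤ N.card ∨ 2 ^ n ≤ M.card := by omega
    have hNs : N ⊆ s := (filter_subset _ _).trans (erase_subset _ _)
    have hMs : M ⊆ s := (filter_subset _ _).trans (erase_subset _ _)
    rcases hcase with hc | hc
    · rcases ih (a-1) b N (by omega) hc with ⟨t, hts, htc, htp⟩ | ⟨t, hts, htc, htp⟩
      · left
        have hxt : x ∉ t := fun hxt => (mem_erase.mp ((filter_subset _ _) (hts hxt))).1 rfl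
        refine ⟨insert x t, ?_, ?_, ?_⟩
        · exact insert_subset hx (hts.trans hNs)
        · rw [card_insert_of_notMem hxt, htc]; omega
        · intro u hu v hv huv
          rcases mem_insert.mp hu with hu | hu
          · rcases mem_insert.mp hv with hv | hv
            · exact absurd (hu.trans hv.symm) huv
            · rw [hu]; exact (mem_filter.mp (hts hv)).2
          · rcases mem_insert.mp hv with hv | hv
            · rw [hv]; exact (G.adj_symm (mem_filter.mp (hts hu)).2)
            · exact htp u hu v hv huv
      · exact Or.inr ⟨t, hts.trans hNs, htc, htp⟩
    · rcases ih a (b-1) M (by omega) hc with ⟨t, hts, htc, htp⟩ | ⟨t, hts, htc, htp⟩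
      · exact Or.inl ⟨t, hts.trans hMs, htc, htp⟩
      · right
        have hxt : x ∉ t := fun hxt => (mem_erase.mp ((filter_subset _ _) (hts hxt))).1 rfl
        refine ⟨insert x t, ?_, ?_, ?_⟩
        · exact insert_subset hx (hts.trans hMs)
        · rw [card_insert_of_notMem hxt, htc]; omega
        · intro u hu v hv huv
          rcases mem_insert.mp hu with hu | hu
          · rcases mem_insert.mp hv with hv | hv
            · exact absurd (hu.trans hv.symm) huv
            · rw [hu]; exact (mem_filter.mp (hts hv)).2
          · rcases mem_insert.mp hv with hv | hv
            · rw [hv]; intro hadj; exact (mem_filter.mp (hts hu)).2 (G.adj_symm hadj)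
            · exact htp u hu v hv huv
      


/-- `qq k j` : total number of "slots" below level `j`. -/
def qq (k : ℕ) : ℕ → ℕ
  | 0 => 0
  | j + 1 => qq k j + 4 ^ (2 ^ (qq k j + k))

/-- diagonal candidate count at level `j` -/
def LL (k j : ℕ) : ℕ := 4 ^ (2 ^ (qq k j + k))

/-- pool size at level `j` -/
def pp (k j : ℕ) : ℕ := 2 ^ (qq k j + k)

lemma qq_succ (k j : ℕ) : qq k (j+1) = qq k j + LL k j := rfl

lemma LL_pos (k j : ℕ) : 0 < LL k j := Nat.pow_pos (by norm_num)

lemma qq_mono (k : ℕ) : Monotone (qq k) := by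
  apply monotone_nat_of_le_succ
  intro j
  rw [qq_succ]
  omega

lemma LL_mono (k : ℕ) {i j : ℕ} (h : i ≤ j) : LL k i ≤ LL k j :=
  Nat.pow_le_pow_right (by norm_num) (Nat.pow_le_pow_right (by norm_num) (by
    have := qq_mono k h; omega))

/-- `cnt r k i` : size of the index set at level `i` (for `i < r`); `cnt r k r` is the
phantom-level size. -/
def cnt (r k : ℕ) (i : ℕ) : ℕ :=
  if h : r ≤ i then LL k (r - 1)
  else ∏ j ∈ (Finset.Ioc i r).attach, 2 ^ (cnt r k j.1)
termination_by r - i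
decreasing_by
  · have := Finset.mem_Ioc.mp j.2; omega

lemma cnt_of_ge (r k i : ℕ) (h : r ≤ i) : cnt r k i = LL k (r - 1) := by
  rw [cnt, dif_pos h]

lemma cnt_of_lt (r k i : ℕ) (h : i < r) :
    cnt r k i = ∏ j ∈ Finset.Ioc i r, 2 ^ (cnt r k j) := by
  rw [cnt, dif_neg (by omega), Finset.prod_attach (Finset.Ioc i r) (fun j => 2 ^ cnt r k j)]

lemma cnt_pos (r k i : ℕ) : 0 < cnt r k i := by
  by_cases h : r ≤ i
  · rw [cnt_of_ge r k i h]; exact LL_pos _ _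
  · rw [cnt_of_lt r k i (by omega)]
    exact Finset.prod_pos (fun j _ => Nat.pow_pos (by norm_num))

/-- Levels above `i` (including the phantom level `r`). -/
abbrev Lev (r i : ℕ) := {j : Fin (r + 1) // i < (j : ℕ)}

/-- The index type at level `i`. -/
abbrev I (r k i : ℕ) : Type := ∀ j : Lev r i, Finset (Fin (cnt r k (j : ℕ)))

instance (r k i : ℕ) : Inhabited (I r k i) := ⟨fun _ => ∅⟩

lemma card_I (r k i : ℕ) (h : i < r) :
    Fintype.card (I r k i) = cnt r k i := by
  classical
  rw [cnt_of_lt r k i h, Fintype.card_pi]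
  have hc : ∀ j : Lev r i, Fintype.card (Finset (Fin (cnt r k (j : ℕ))))
      = 2 ^ (cnt r k (j : ℕ)) := by
    intro j
    rw [Fintype.card_finset, Fintype.card_fin]
  rw [Finset.prod_congr rfl (fun j _ => hc j)]
  refine Finset.prod_bij' (fun (j : Lev r i) _ => (j : ℕ))
    (fun n hn => ⟨⟨n, by have := (Finset.mem_Ioc.mp hn).2; omega⟩,
      (Finset.mem_Ioc.mp hn).1⟩) ?_ ?_ ?_ ?_ ?_
  · intro j _
    simp only [Finset.mem_Ioc]
    exact ⟨j.2, by have := j.1.2; omega⟩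
  · intro n hn
    exact Finset.mem_univ _
  · intro j _
    apply Subtype.ext
    apply Fin.ext
    rfl
  · intro n hn
    rfl
  · intro j _
    rfl

noncomputable def EI (r k i : ℕ) (h : i < r) : I r k i ≃ Fin (cnt r k i) :=
  Fintype.equivFinOfCardEq (card_I r k i h)

/-- the membership relation: level-`i` index `ρ`'s pattern at level `j` contains `σ`. -/
def Qm (r k : ℕ) {i j : ℕ} (hij : i < j) (hjr : j < r) (ρ : I r k i) (σ : I r k j) : Prop :=
  EI r k j hjr σ ∈ ρ ⟨⟨j, by omega⟩, hij⟩

noncomputable instance (r k : ℕ) {i j : ℕ} (hij : i < j) (hjr : j < r) (ρ : I r k i)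
    (σ : I r k j) : Decidable (Qm r k hij hjr ρ σ) := by
  unfold Qm
  infer_instance

/-- slot embedding : the slot of the `y`-th candidate of level `i` among the labels
of level `j` (`i < j`). -/
def embS (k : ℕ) {i j : ℕ} (hij : i < j) (y : Fin (LL k i)) : Fin (qq k j + k) :=
  ⟨qq k i + y, by
    have h1 : qq k i + (y : ℕ) < qq k (i+1) := by
      rw [qq_succ]; have := y.2; omega
    have h2 : qq k (i+1) ≤ qq k j := qq_mono k (by omega)
    omega⟩

lemma embS_inj (k : ℕ) {i i' j : ℕ} (hij : i < j) (hij' : i' < j)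
    (y : Fin (LL k i)) (y' : Fin (LL k i'))
    (h : embS k hij y = embS k hij' y') : i = i' ∧ (y : ℕ) = (y' : ℕ) := by
  have hv : qq k i + (y : ℕ) = qq k i' + (y' : ℕ) := congrArg Fin.val h
  have hy := y.2
  have hy' := y'.2
  rcases lt_trichotomy i i' with hii | hii | hii
  · exfalso
    have h1 : qq k i + (y : ℕ) < qq k (i+1) := by rw [qq_succ]; unfold LL at hy; omega
    have h2 : qq k (i+1) ≤ qq k i' := qq_mono k (by omega)
    omega
  · exact ⟨hii, by subst hii; omega⟩
  · exfalso
    have h1 : qq k i' + (y' : ℕ) < qq k (i'+1) := by rw [qq_succ]; unfold LL at hy'; omega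
    have h2 : qq k (i'+1) ≤ qq k i := qq_mono k (by omega)
    omega


end Aux
section Design
open Finset

variable {V : Type} [Fintype V] [DecidableEq V]

/-- Union of the parts strictly below level `j`. -/
def PrevU (r : ℕ) (A : Fin r → Finset V) (j : ℕ) (h : j < r) : Finset V :=
  (Finset.univ.filter fun i : Fin r => i < (⟨j, h⟩ : Fin r)).biUnion A

/-- the designed trace of the level-`i` index `ρ` on the lower levels. -/
noncomputable def TrS (r k : ℕ) (F : ∀ i : ℕ, I r k i → V) (i : ℕ) (hir : i < r)
    (ρ : I r k i) : Finset V :=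
  (Finset.range i).attach.biUnion (fun i' =>
    (Finset.univ.filter (fun ρ' : I r k i'.1 =>
      Qm r k (Finset.mem_range.mp i'.2) hir ρ' ρ)).image (F i'.1))

lemma TrS_congr (r k : ℕ) (F F' : ∀ i : ℕ, I r k i → V) (i : ℕ) (hir : i < r)
    (h : ∀ i', i' < i → F i' = F' i') (ρ : I r k i) :
    TrS r k F i hir ρ = TrS r k F' i hir ρ := by
  unfold TrS
  apply Finset.biUnion_congr rfl
  intro i' _
  rw [h i'.1 (Finset.mem_range.mp i'.2)]

lemma TrS_subset (r k : ℕ) (G : SimpleGraph V) (A : Fin r → Finset V)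
    (F : ∀ i : ℕ, I r k i → V) (i : ℕ) (hir : i < r)
    (hmem : ∀ i' (hi' : i' < i) ρ', F i' ρ' ∈ A ⟨i', lt_trans hi' hir⟩) (ρ : I r k i) :
    TrS r k F i hir ρ ⊆ PrevU r A i hir := by
  intro b hb
  obtain ⟨i', _, hb2⟩ := Finset.mem_biUnion.mp hb
  obtain ⟨ρ', _, rfl⟩ := Finset.mem_image.mp hb2
  have hi' : i'.1 < i := Finset.mem_range.mp i'.2
  apply Finset.mem_biUnion.mpr
  refine ⟨⟨i'.1, lt_trans hi' hir⟩, ?_, hmem i'.1 hi' ρ'⟩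
  simp only [Finset.mem_filter, Finset.mem_univ, true_and]
  exact hi'

/-- The properties of the design function `F` below level `n`. -/
def DProp (r k : ℕ) (G : SimpleGraph V) (A : Fin r → Finset V) (n : ℕ)
    (F : ∀ i : ℕ, I r k i → V) : Prop :=
  ∀ i (hi : i < n) (hir : i < r),
    (∀ ρ, F i ρ ∈ A ⟨i, hir⟩) ∧
    Function.Injective (F i) ∧
    (∀ ρ, ∀ b ∈ PrevU r A i hir, (G.Adj (F i ρ) b ↔ b ∈ TrS r k F i hir ρ))

/-- The witness index at level `0` whose pattern at level `n` is exactly `{ρ}`. -/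
noncomputable def wit (r k n : ℕ) (hnr : n < r) (ρ : I r k n) : I r k 0 :=
  fun j' => if h : (j' : ℕ) = n then
    Finset.image (Fin.cast (by rw [h])) {EI r k n hnr ρ} else ∅

lemma Qm_wit (r k n : ℕ) (h0n : 0 < n) (hnr : n < r) (ρ τ : I r k n) :
    Qm r k h0n hnr (wit r k n hnr ρ) τ ↔ τ = ρ := by
  unfold Qm wit
  rw [dif_pos rfl]
  simp only [Finset.mem_image, Finset.mem_singleton]
  constructor
  · rintro ⟨x, rfl, hx⟩
    apply (EI r k n hnr).injective
    apply Fin.ext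
    have := congrArg Fin.val hx
    simpa using this.symm
  · rintro rfl
    exact ⟨EI r k n hnr τ, rfl, by apply Fin.ext; simp⟩

lemma design_exists (r k : ℕ) [Nonempty V] (G : SimpleGraph V) (A : Fin r → Finset V)
    (hdisj : ∀ i j : Fin r, i ≠ j → Disjoint (A i) (A j))
    (hshat : ∀ j : Fin r, j.val ≠ 0 →
      Shatters G (A j) ((Finset.univ.filter fun i => i < j).biUnion A))
    (hcard0 : ∀ h0 : 0 < r, cnt r k 0 ≤ (A ⟨0, h0⟩).card) :
    ∃ F : ∀ i : ℕ, I r k i → V, DProp r k G A r F := by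
  suffices h : ∀ n, n ≤ r → ∃ F, DProp r k G A n F by
    exact h r le_rfl
  intro n hn
  induction n with
  | zero =>
    exact ⟨fun _ _ => Classical.arbitrary V, fun i hi => by omega⟩
  | succ n ih =>
    obtain ⟨F, hF⟩ := ih (by omega)
    have hnr : n < r := hn
    -- construct the new level `n`
    have hnew : ∃ g : I r k n → V,
        (∀ ρ, g ρ ∈ A ⟨n, hnr⟩) ∧ Function.Injective g ∧
        (∀ ρ, ∀ b ∈ PrevU r A n hnr, (G.Adj (g ρ) b ↔ b ∈ TrS r k F n hnr ρ)) := by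
      rcases Nat.eq_zero_or_pos n with rfl | hpos
      · -- level 0 : an arbitrary injection into A 0
        obtain ⟨t, hts, htc⟩ := Finset.exists_subset_card_eq (s := A ⟨0, hnr⟩) (n := cnt r k 0)
          (hcard0 hnr)
        have e2 : {x // x ∈ t} ≃ Fin (cnt r k 0) := by
          rw [← htc]; exact t.equivFin
        refine ⟨fun ρ => (e2.symm (EI r k 0 hnr ρ)).1, fun ρ => hts (e2.symm _).2, ?_, ?_⟩
        · intro ρ σ h
          exact (EI r k 0 hnr).injective (e2.symm.injective (Subtype.ext h))
        · intro ρ b hb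
          exfalso
          simp only [PrevU, Finset.mem_biUnion, Finset.mem_filter] at hb
          obtain ⟨i, ⟨_, hi⟩, _⟩ := hb
          exact absurd hi (by simp [Fin.lt_def])
      · -- level n ≥ 1 : choose vertices by shattering
        have hS := hshat ⟨n, hnr⟩ (by simp; omega)
        have hmem : ∀ i' (hi' : i' < n) ρ', F i' ρ' ∈ A ⟨i', lt_trans hi' hnr⟩ :=
          fun i' hi' ρ' => (hF i' hi' (lt_trans hi' hnr)).1 ρ'
        have hsub : ∀ ρ : I r k n, TrS r k F n hnr ρ ⊆ PrevU r A n hnr :=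
          fun ρ => TrS_subset r k G A F n hnr hmem ρ
        have hch : ∀ ρ : I r k n, ∃ a ∈ A ⟨n, hnr⟩,
            ∀ b ∈ PrevU r A n hnr, (G.Adj a b ↔ b ∈ TrS r k F n hnr ρ) := by
          intro ρ
          exact hS (TrS r k F n hnr ρ) (hsub ρ)
        choose g hg1 hg2 using hch
        refine ⟨g, hg1, ?_, hg2⟩
        -- injectivity via the level-0 witness
        intro ρ σ hgeq
        by_contra hne
        have hb : F 0 (wit r k n hnr ρ) ∈ TrS r k F n hnr ρ := by
          apply Finset.mem_biUnion.mpr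
          refine ⟨⟨0, Finset.mem_range.mpr hpos⟩, Finset.mem_attach _ _, ?_⟩
          apply Finset.mem_image.mpr
          refine ⟨wit r k n hnr ρ, ?_, rfl⟩
          simp only [Finset.mem_filter, Finset.mem_univ, true_and]
          exact (Qm_wit r k n hpos hnr ρ ρ).mpr rfl
        have hnb : F 0 (wit r k n hnr ρ) ∉ TrS r k F n hnr σ := by
          intro hmem'
          obtain ⟨⟨iv, hivmem⟩, _, hb2⟩ := Finset.mem_biUnion.mp hmem'
          obtain ⟨ρ', hρ', heq⟩ := Finset.mem_image.mp hb2
          have hi' : iv < n := Finset.mem_range.mp hivmem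
          have hi0 : iv = 0 := by
            by_contra hi0
            have h1 : F iv ρ' ∈ A ⟨iv, lt_trans hi' hnr⟩ := hmem iv hi' ρ'
            have h2 : F 0 (wit r k n hnr ρ) ∈ A ⟨0, lt_trans hpos hnr⟩ :=
              hmem 0 hpos (wit r k n hnr ρ)
            rw [heq] at h1
            exact Finset.disjoint_left.mp
              (hdisj _ _ (by simp [Fin.ext_iff, hi0])) h1 h2
          subst hi0
          have hinj : Function.Injective (F 0) := (hF 0 hpos (lt_trans hpos hnr)).2.1
          have : ρ' = wit r k n hnr ρ := hinj heq
          subst this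
          rw [Finset.mem_filter] at hρ'
          have := (Qm_wit r k n hpos hnr ρ σ).mp hρ'.2
          exact hne this.symm
        have hbP : F 0 (wit r k n hnr ρ) ∈ PrevU r A n hnr := hsub ρ hb
        have h1 := (hg2 ρ _ hbP).mpr hb
        have h2 := (hg2 σ _ hbP).mp (by rwa [← hgeq])
        exact hnb h2
    obtain ⟨g, hg1, hg2, hg3⟩ := hnew
    classical
    refine ⟨Function.update F n g, ?_⟩
    intro i hi hir
    have hFcongr : ∀ i₀ (h₀ : i₀ ≤ n) (hir₀ : i₀ < r) (ρ : I r k i₀),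
        TrS r k (Function.update F n g) i₀ hir₀ ρ = TrS r k F i₀ hir₀ ρ := by
      intro i₀ h₀ hir₀ ρ
      apply TrS_congr
      intro i' hi'
      exact Function.update_of_ne (by omega) _ _
    rcases Nat.lt_or_ge i n with hlt | hge
    · have h0 := hF i hlt hir
      rw [show Function.update F n g i = F i from Function.update_of_ne (by omega) _ _]
      exact ⟨h0.1, h0.2.1, fun ρ b hb => by
        rw [hFcongr i (by omega) hir ρ]; exact h0.2.2 ρ b hb⟩
    · have hieq : i = n := by omega
      subst hieq
      rw [show Function.update F i g i = g from Function.update_self _ _ _]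
      exact ⟨hg1, hg2, fun ρ b hb => by
        rw [hFcongr i (le_refl i) hir ρ]; exact hg3 ρ b hb⟩

end Design
section Selection
open Finset

variable {V : Type} [Fintype V] [DecidableEq V]

/-- Properties of the selection data for all levels `≥ m`. -/
def SelProp (r k : ℕ) (G : SimpleGraph V) (u : ∀ i : ℕ, I r k i → V) (m : ℕ)
    (vB : ℕ → Bool)
    (mem : ∀ j : ℕ, Finset (Fin (qq k j + k)) → I r k j)
    (yp : ∀ j : ℕ, Finset (Fin (qq k j + k)) → Fin (LL k j)) : Prop :=
  ∀ j, m ≤ j → ∀ hjr : j < r,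
    Function.Injective (mem j) ∧
    Function.Injective (yp j) ∧
    (∀ t t', t ≠ t' → (G.Adj (u j (mem j t)) (u j (mem j t')) ↔ vB j = true)) ∧
    (∀ j' (hjj' : j < j') (hj'r : j' < r) (t : Finset (Fin (qq k j + k))) (σ : I r k j'),
       Qm r k hjj' hj'r (mem j t) σ ↔
         ∃ t₁, mem j' t₁ = σ ∧ embS k hjj' (yp j t) ∈ t₁)

lemma sel_exists (r k : ℕ) (G : SimpleGraph V) (A : Fin r → Finset V)
    (u : ∀ i : ℕ, I r k i → V) (hu : DProp r k G A r u) :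
    ∃ vB mem yp, SelProp r k G u 0 vB mem yp := by
  classical
  suffices h : ∀ d, ∃ vB mem yp, SelProp r k G u (r - d) vB mem yp by
    obtain ⟨vB, mem, yp, hsel⟩ := h r
    exact ⟨vB, mem, yp, by simpa using hsel⟩
  intro d
  induction d with
  | zero =>
    exact ⟨fun _ => true, fun j _ => default, fun j _ => ⟨0, LL_pos k j⟩,
      fun j hj hjr => by omega⟩
  | succ d ih =>
    obtain ⟨vB, mem, yp, hsel⟩ := ih
    by_cases hd : r ≤ d
    · exact ⟨vB, mem, yp, by
        have : r - d = r - (d+1) := by omega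
        rwa [this] at hsel⟩
    push_neg at hd
    set j₀ := r - (d + 1) with hj₀def
    have hj₀r : j₀ < r := by omega
    have hrd : r - d = j₀ + 1 := by omega
    -- the diagonal candidates at level `j₀`
    set ρc : Fin (LL k j₀) → I r k j₀ := fun y => fun j' =>
      if h : (j' : ℕ) < r then
        Finset.image (fun t₁ => EI r k (j' : ℕ) h (mem (j' : ℕ) t₁))
          (Finset.univ.filter
            (fun t₁ : Finset (Fin (qq k (j' : ℕ) + k)) => embS k j'.2 y ∈ t₁))
      else
        {Fin.cast (by
            rw [show ((j' : ℕ) : ℕ) = r by have := j'.1.2; omega, cnt_of_ge r k r le_rfl])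
          (Fin.castLE (LL_mono k (by omega : j₀ ≤ r - 1)) y)} with hρc
    have hρcinj : Function.Injective ρc := by
      intro y y' h
      have h2 := congrFun h (⟨⟨r, by omega⟩, hj₀r⟩ : Lev r j₀)
      rw [hρc] at h2
      simp only [dif_neg (lt_irrefl r)] at h2
      have h3 := Finset.mem_singleton.mp (h2 ▸ Finset.mem_singleton_self _)
      apply Fin.ext
      have := congrArg Fin.val h3
      simpa using this
    have hH3cand : ∀ (j' : ℕ) (hjj' : j₀ < j') (hj'r : j' < r) (y : Fin (LL k j₀))
        (σ : I r k j'),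
        Qm r k hjj' hj'r (ρc y) σ ↔ ∃ t₁, mem j' t₁ = σ ∧ embS k hjj' y ∈ t₁ := by
      intro j' hjj' hj'r y σ
      unfold Qm
      rw [hρc]
      simp only [dif_pos hj'r]
      rw [Finset.mem_image]
      constructor
      · rintro ⟨t₁, ht₁, heq⟩
        exact ⟨t₁, (EI r k j' hj'r).injective heq, (Finset.mem_filter.mp ht₁).2⟩
      · rintro ⟨t₁, heq, hmem⟩
        exact ⟨t₁, Finset.mem_filter.mpr ⟨Finset.mem_univ _, hmem⟩, by rw [heq]⟩
    -- Ramsey on the candidate vertices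
    have huinj : Function.Injective (u j₀) := (hu j₀ hj₀r hj₀r).2.1
    have hfinj : Function.Injective (fun y => u j₀ (ρc y)) :=
      fun y y' h => hρcinj (huinj h)
    set cd : Finset V := Finset.image (fun y => u j₀ (ρc y)) Finset.univ with hcd
    have hcdcard : cd.card = LL k j₀ := by
      rw [hcd, Finset.card_image_of_injective _ hfinj, Finset.card_univ, Fintype.card_fin]
    have hLL : LL k j₀ = 2 ^ (pp k j₀ + pp k j₀) := by
      unfold LL pp
      rw [show (4:ℕ) = 2^2 from rfl, ← pow_mul]
      ring_nf
    have hram := ramsey2 G (pp k j₀ + pp k j₀) (pp k j₀) (pp k j₀) cd le_rfl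
      (by rw [hcdcard, hLL])
    have hram2 : ∃ (v : Bool) (t : Finset V), t ⊆ cd ∧ t.card = pp k j₀ ∧
        (∀ x ∈ t, ∀ y ∈ t, x ≠ y → (G.Adj x y ↔ v = true)) := by
      rcases hram with ⟨t, hts, htc, htp⟩ | ⟨t, hts, htc, htp⟩
      · exact ⟨true, t, hts, htc, fun x hx y hy hxy => by simp [htp x hx y hy hxy]⟩
      · exact ⟨false, t, hts, htc, fun x hx y hy hxy => by simp [htp x hx y hy hxy]⟩
    obtain ⟨v, t, hts, htc, htp⟩ := hram2
    set Y : Finset (Fin (LL k j₀)) :=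
      Finset.univ.filter (fun y => u j₀ (ρc y) ∈ t) with hY
    have htY : t ⊆ Finset.image (fun y => u j₀ (ρc y)) Y := by
      intro w hw
      obtain ⟨y, _, rfl⟩ := Finset.mem_image.mp (hts hw)
      exact Finset.mem_image.mpr ⟨y, Finset.mem_filter.mpr ⟨Finset.mem_univ _, hw⟩, rfl⟩
    have hYcard : pp k j₀ ≤ Y.card := by
      calc pp k j₀ = t.card := htc.symm
        _ ≤ (Finset.image (fun y => u j₀ (ρc y)) Y).card := Finset.card_le_card htY
        _ ≤ Y.card := Finset.card_image_le
    obtain ⟨Y', hY's, hY'c⟩ := Finset.exists_subset_card_eq hYcard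
    have hlab : Fintype.card (Finset (Fin (qq k j₀ + k))) = Fintype.card {x // x ∈ Y'} := by
      rw [Fintype.card_finset, Fintype.card_fin, Fintype.card_coe, hY'c]
      rfl
    set lab := Fintype.equivOfCardEq hlab with hlabdef
    set mem' := Function.update mem j₀ (fun t₀ => ρc (lab t₀).1) with hmem'
    set yp' := Function.update yp j₀ (fun t₀ => (lab t₀).1) with hyp'
    set vB' := Function.update vB j₀ v with hvB'
    refine ⟨vB', mem', yp', ?_⟩
    intro j hj hjr
    rcases Nat.lt_or_ge j₀ j with hgt | hle
    · -- an old level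
      have e1 : mem' j = mem j := Function.update_of_ne (by omega) _ _
      have e2 : yp' j = yp j := Function.update_of_ne (by omega) _ _
      have e3 : vB' j = vB j := Function.update_of_ne (by omega) _ _
      obtain ⟨o1, o2, o3, o4⟩ := hsel j (by omega) hjr
      refine ⟨by rw [e1]; exact o1, by rw [e2]; exact o2,
        by rw [e1, e3]; exact o3, ?_⟩
      intro j' hjj' hj'r t₀ σ
      have e4 : mem' j' = mem j' := Function.update_of_ne (by omega) _ _
      rw [e1, e2, e4]
      exact o4 j' hjj' hj'r t₀ σ
    · -- the new level j₀
      have hjeq : j = j₀ := by omega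
      subst hjeq
      have e1 : mem' j₀ = fun t₀ => ρc (lab t₀).1 := Function.update_self _ _ _
      have e2 : yp' j₀ = fun t₀ => (lab t₀).1 := Function.update_self _ _ _
      have e3 : vB' j₀ = v := Function.update_self _ _ _
      have hlabval : Function.Injective (fun t₀ => ((lab t₀).1 : Fin (LL k j₀))) :=
        fun a b h => lab.injective (Subtype.ext h)
      refine ⟨?_, ?_, ?_, ?_⟩
      · rw [e1]
        intro a b h
        exact hlabval (hρcinj h)
      · rw [e2]
        exact hlabval
      · intro t₀ t₁ hne
        rw [e1, e3]
        have hm0 : (lab t₀).1 ∈ Y := hY's (lab t₀).2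
        have hm1 : (lab t₁).1 ∈ Y := hY's (lab t₁).2
        have hv0 : u j₀ (ρc (lab t₀).1) ∈ t := (Finset.mem_filter.mp hm0).2
        have hv1 : u j₀ (ρc (lab t₁).1) ∈ t := (Finset.mem_filter.mp hm1).2
        apply htp _ hv0 _ hv1
        intro h
        exact hne (lab.injective (Subtype.ext (hρcinj (huinj h))))
      · intro j' hjj' hj'r t₀ σ
        have e4 : mem' j' = mem j' := Function.update_of_ne (by omega) _ _
        rw [e1, e2, e4]
        exact hH3cand j' hjj' hj'r (lab t₀).1 σ

end Selection
section Pools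
open Finset

variable {V : Type} [Fintype V] [DecidableEq V]

lemma pools_exist (r k : ℕ) (G : SimpleGraph V) (A : Fin r → Finset V)
    (hdisj : ∀ i j : Fin r, i ≠ j → Disjoint (A i) (A j))
    (u : ∀ i : ℕ, I r k i → V) (hu : DProp r k G A r u)
    (vB : ℕ → Bool)
    (mem : ∀ j : ℕ, Finset (Fin (qq k j + k)) → I r k j)
    (yp : ∀ j : ℕ, Finset (Fin (qq k j + k)) → Fin (LL k j))
    (hsel : SelProp r k G u 0 vB mem yp) :
    ∃ W : ℕ → Finset V,
      (∀ j (hjr : j < r), W j ⊆ A ⟨j, hjr⟩) ∧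
      (∀ j, j < r → ∀ x ∈ W j, ∀ y ∈ W j, x ≠ y → (G.Adj x y ↔ vB j = true)) ∧
      (0 < r → k ≤ (W 0).card) ∧
      (∀ j (hjr : j < r), 0 < j → ∀ S ⊆ (Finset.range j).biUnion W,
        ∃ w ∈ W j, ∀ b ∈ (Finset.range j).biUnion W, (G.Adj w b ↔ b ∈ S)) := by
  classical
  set Wn : ℕ → Finset V := fun j =>
    Finset.image (fun t => u j (mem j t)) Finset.univ with hWn
  -- global injectivity across levels
  have hGI : ∀ (i i' : ℕ), i < r → i' < r → ∀ (ρ : I r k i) (ρ' : I r k i'),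
      u i ρ = u i' ρ' → i = i' := by
    intro i i' hir hi'r ρ ρ' hequ
    by_contra hne
    have h1 : u i ρ ∈ A ⟨i, hir⟩ := (hu i hir hir).1 ρ
    have h2 : u i' ρ' ∈ A ⟨i', hi'r⟩ := (hu i' hi'r hi'r).1 ρ'
    rw [hequ] at h1
    exact Finset.disjoint_left.mp (hdisj _ _ (by simp [Fin.ext_iff]; omega)) h1 h2
  refine ⟨Wn, ?_, ?_, ?_, ?_⟩
  · intro j hjr w hw
    obtain ⟨t, _, rfl⟩ := Finset.mem_image.mp hw
    exact (hu j hjr hjr).1 _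
  · intro j hjr x hx y hy hxy
    obtain ⟨t, _, rfl⟩ := Finset.mem_image.mp hx
    obtain ⟨t', _, rfl⟩ := Finset.mem_image.mp hy
    refine (hsel j (Nat.zero_le _) hjr).2.2.1 t t' ?_
    intro h
    exact hxy (by rw [h])
  · intro hr
    have hinj : Function.Injective (fun t => u 0 (mem 0 t)) := by
      intro a b h
      exact (hsel 0 le_rfl hr).1 ((hu 0 hr hr).2.1 h)
    rw [hWn]
    rw [Finset.card_image_of_injective _ hinj, Finset.card_univ, Fintype.card_finset,
      Fintype.card_fin]
    calc k ≤ 2 ^ k := Nat.le_of_lt (Nat.lt_two_pow_self (n := k))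
      _ ≤ 2 ^ (qq k 0 + k) := Nat.pow_le_pow_right (by norm_num) (by omega)
  · intro j hjr hj0 S hS
    -- the label of the shattering member
    set tSel : Finset (Fin (qq k j + k)) :=
      (Finset.range j).attach.biUnion (fun i =>
        (Finset.univ.filter
          (fun t₀ : Finset (Fin (qq k i.1 + k)) => u i.1 (mem i.1 t₀) ∈ S)).image
          (fun t₀ => embS k (Finset.mem_range.mp i.2) (yp i.1 t₀))) with htSel
    refine ⟨u j (mem j tSel), Finset.mem_image.mpr ⟨tSel, Finset.mem_univ _, rfl⟩, ?_⟩
    intro b hb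
    obtain ⟨i, hi, hbW⟩ := Finset.mem_biUnion.mp hb
    have hij : i < j := Finset.mem_range.mp hi
    have hir : i < r := lt_trans hij hjr
    obtain ⟨t₀, _, rfl⟩ := Finset.mem_image.mp hbW
    set b := u i (mem i t₀)
    have hbPrev : b ∈ PrevU r A j hjr := by
      apply Finset.mem_biUnion.mpr
      refine ⟨⟨i, hir⟩, ?_, (hu i hir hir).1 _⟩
      simp only [Finset.mem_filter, Finset.mem_univ, true_and]
      exact hij
    -- step 1 : adjacency ↔ membership in the designed trace
    rw [(hu j hjr hjr).2.2 (mem j tSel) b hbPrev]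
    -- step 2 : membership in trace ↔ Qm
    have hstep2 : b ∈ TrS r k u j hjr (mem j tSel) ↔
        Qm r k hij hjr (mem i t₀) (mem j tSel) := by
      constructor
      · intro hmem'
        obtain ⟨⟨iv, hivmem⟩, _, hb2⟩ := Finset.mem_biUnion.mp hmem'
        obtain ⟨ρ', hρ', heq⟩ := Finset.mem_image.mp hb2
        have hivr : iv < r := lt_trans (Finset.mem_range.mp hivmem) hjr
        have hiv : iv = i := hGI iv i hivr hir ρ' (mem i t₀) heq
        subst hiv
        have : ρ' = mem iv t₀ := (hu iv hivr hivr).2.1 heq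
        subst this
        exact (Finset.mem_filter.mp hρ').2
      · intro hQ
        apply Finset.mem_biUnion.mpr
        refine ⟨⟨i, Finset.mem_range.mpr hij⟩, Finset.mem_attach _ _, ?_⟩
        apply Finset.mem_image.mpr
        exact ⟨mem i t₀, Finset.mem_filter.mpr ⟨Finset.mem_univ _, hQ⟩, rfl⟩
    rw [hstep2]
    -- step 3 : Qm ↔ slot membership (H3)
    rw [(hsel i (Nat.zero_le _) hir).2.2.2 j hij hjr t₀ (mem j tSel)]
    -- step 4 : unwind
    constructor
    · rintro ⟨t₁, ht₁, hslot⟩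
      have ht₁' : t₁ = tSel := (hsel j (Nat.zero_le _) hjr).1 ht₁
      subst ht₁'
      obtain ⟨⟨iv, hivmem⟩, _, hsl2⟩ := Finset.mem_biUnion.mp hslot
      obtain ⟨t₂, ht₂, heq⟩ := Finset.mem_image.mp hsl2
      obtain ⟨hiv, hyv⟩ := embS_inj k (Finset.mem_range.mp hivmem) hij _ _ heq
      subst hiv
      have : t₂ = t₀ := by
        apply (hsel iv (Nat.zero_le _) (lt_trans (Finset.mem_range.mp hivmem) hjr)).2.1
        exact Fin.ext hyv
      subst this
      exact (Finset.mem_filter.mp ht₂).2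
    · intro hbS
      refine ⟨tSel, rfl, ?_⟩
      apply Finset.mem_biUnion.mpr
      refine ⟨⟨i, Finset.mem_range.mpr hij⟩, Finset.mem_attach _ _, ?_⟩
      apply Finset.mem_image.mpr
      exact ⟨t₀, Finset.mem_filter.mpr ⟨Finset.mem_univ _, hbS⟩, rfl⟩

end Pools
section Extract
open Finset

variable {V : Type} [Fintype V] [DecidableEq V]

lemma uSizeAux_snd (k : ℕ) : ∀ j, (uSizeAux k j).2 = ∑ i ∈ Finset.range (j+1), uSize k i := by
  intro j
  induction j with
  | zero => simp [uSizeAux, uSize]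
  | succ j ih =>
    rw [Finset.sum_range_succ, ← ih]
    rfl

lemma extract (r k : ℕ) [Nonempty V] (G : SimpleGraph V) (vB : ℕ → Bool) (W : ℕ → Finset V)
    (hWdisj : ∀ i j, i < r → j < r → i ≠ j → Disjoint (W i) (W j))
    (hW0 : 0 < r → k ≤ (W 0).card)
    (hWsh : ∀ j, j < r → 0 < j → ∀ S ⊆ (Finset.range j).biUnion W,
      ∃ w ∈ W j, ∀ b ∈ (Finset.range j).biUnion W, (G.Adj w b ↔ b ∈ S)) :
    ∃ B : ℕ → Finset V, ∀ j, j < r →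
      B j ⊆ W j ∧ (B j).card = uSize k j ∧
      (0 < j → ∀ S ⊆ (Finset.range j).biUnion B,
        ∃ a ∈ B j, ∀ b ∈ (Finset.range j).biUnion B, (G.Adj a b ↔ b ∈ S)) := by
  classical
  suffices h : ∀ n, n ≤ r → ∃ B : ℕ → Finset V, ∀ j, j < n →
      B j ⊆ W j ∧ (B j).card = uSize k j ∧
      (0 < j → ∀ S ⊆ (Finset.range j).biUnion B,
        ∃ a ∈ B j, ∀ b ∈ (Finset.range j).biUnion B, (G.Adj a b ↔ b ∈ S)) by
    obtain ⟨B, hB⟩ := h r le_rfl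
    exact ⟨B, hB⟩
  intro n hn
  induction n with
  | zero => exact ⟨fun _ => ∅, fun j hj => by omega⟩
  | succ n ih =>
    obtain ⟨B, hB⟩ := ih (by omega)
    have hnr : n < r := hn
    have hnew : ∃ Bn : Finset V, Bn ⊆ W n ∧ Bn.card = uSize k n ∧
        (0 < n → ∀ S ⊆ (Finset.range n).biUnion B,
          ∃ a ∈ Bn, ∀ b ∈ (Finset.range n).biUnion B, (G.Adj a b ↔ b ∈ S)) := by
      rcases Nat.eq_zero_or_pos n with rfl | hpos
      · obtain ⟨t, hts, htc⟩ := Finset.exists_subset_card_eq (hW0 hnr)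
        exact ⟨t, hts, htc, by omega⟩
      · -- level n ≥ 1
        have hPB : (Finset.range n).biUnion B ⊆ (Finset.range n).biUnion W := by
          intro b hb
          obtain ⟨i, hi, hbi⟩ := Finset.mem_biUnion.mp hb
          exact Finset.mem_biUnion.mpr ⟨i, hi, (hB i (Finset.mem_range.mp hi)).1 hbi⟩
        have hch : ∀ S : Finset V, ∃ w ∈ W n,
            S ⊆ (Finset.range n).biUnion B →
            ∀ b ∈ (Finset.range n).biUnion W, (G.Adj w b ↔ b ∈ S) := by
          intro S
          by_cases hS : S ⊆ (Finset.range n).biUnion B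
          · obtain ⟨w, hw1, hw2⟩ := hWsh n hnr hpos S (hS.trans hPB)
            exact ⟨w, hw1, fun _ => hw2⟩
          · obtain ⟨w, hw1, _⟩ := hWsh n hnr hpos ∅ (Finset.empty_subset _)
            exact ⟨w, hw1, fun h => absurd h hS⟩
        choose wch hwch1 hwch2 using hch
        set PB := (Finset.range n).biUnion B with hPBdef
        have hinj : Set.InjOn wch (PB.powerset : Finset (Finset V)) := by
          intro S hS S' hS' heq
          rw [Finset.mem_coe, Finset.mem_powerset] at hS hS'
          ext b
          constructor
          · intro hb
            have hAdj : G.Adj (wch S) b := (hwch2 S hS b (hPB (hS hb))).mpr hb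
            rw [heq] at hAdj
            exact (hwch2 S' hS' b (hPB (hS hb))).mp hAdj
          · intro hb
            have hAdj : G.Adj (wch S') b := (hwch2 S' hS' b (hPB (hS' hb))).mpr hb
            rw [← heq] at hAdj
            exact (hwch2 S hS b (hPB (hS' hb))).mp hAdj
        refine ⟨PB.powerset.image wch, ?_, ?_, ?_⟩
        · intro w hw
          obtain ⟨S, _, rfl⟩ := Finset.mem_image.mp hw
          exact hwch1 S
        · rw [Finset.card_image_of_injOn hinj, Finset.card_powerset]
          have hcardPB : PB.card = ∑ i ∈ Finset.range n, (B i).card := by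
            apply Finset.card_biUnion
            intro i hi i' hi' hne
            exact Finset.disjoint_of_subset_left (hB i (Finset.mem_range.mp hi)).1
              (Finset.disjoint_of_subset_right (hB i' (Finset.mem_range.mp hi')).1
                (hWdisj i i' (lt_trans (Finset.mem_range.mp hi) hnr)
                  (lt_trans (Finset.mem_range.mp hi') hnr) hne))
          have hsum : ∑ i ∈ Finset.range n, (B i).card = ∑ i ∈ Finset.range n, uSize k i :=
            Finset.sum_congr rfl (fun i hi => (hB i (Finset.mem_range.mp hi)).2.1)
          obtain ⟨m, rfl⟩ := Nat.exists_eq_succ_of_ne_zero (by omega : n ≠ 0)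
          rw [hcardPB, hsum, ← uSizeAux_snd k m]
          rfl
        · intro _ S hS
          refine ⟨wch S, Finset.mem_image.mpr ⟨S, Finset.mem_powerset.mpr hS, rfl⟩, ?_⟩
          intro b hb
          exact hwch2 S hS b (hPB hb)
    obtain ⟨Bn, hBn1, hBn2, hBn3⟩ := hnew
    refine ⟨Function.update B n Bn, ?_⟩
    have hagree : ∀ j, j ≤ n →
        (Finset.range j).biUnion (Function.update B n Bn) = (Finset.range j).biUnion B := by
      intro j hj
      apply Finset.biUnion_congr rfl
      intro i hi
      exact Function.update_of_ne (by have := Finset.mem_range.mp hi; omega) _ _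
    intro j hj
    rcases Nat.lt_or_ge j n with hlt | hge
    · have h0 := hB j hlt
      rw [show Function.update B n Bn j = B j from Function.update_of_ne (by omega) _ _]
      refine ⟨h0.1, h0.2.1, ?_⟩
      intro hj0 S hS
      rw [hagree j (by omega)] at hS ⊢
      exact h0.2.2 hj0 S hS
    · have hjeq : j = n := by omega
      subst hjeq
      rw [Function.update_self]
      refine ⟨hBn1, hBn2, ?_⟩
      intro hj0 S hS
      rw [hagree j le_rfl] at hS ⊢
      exact hBn3 hj0 S hS

end Extract
/-- **Lemma (Ramsey for generalized universal graphs).**  For each `r, k ∈ ℕ` there exists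
`K = K(r,k)` such that: if `G` is a graph on vertex set `A 1 ∪ … ∪ A r` and the `r`-partite
graph induced by `G` between these parts equals `U(r,K)`, then `G` contains an induced copy
of `U*_v(r,k)` for some `v ∈ {0,1}^r`. -/
theorem Urk_ramsey (r k : ℕ) :
    ∃ K : ℕ, ∀ (V : Type) [Fintype V] [DecidableEq V] (G : SimpleGraph V)
      (A : Fin r → Finset V),
      Finset.univ.biUnion A = Finset.univ →
      IsUParts G r K A →
      ∃ (v : Fin r → Bool) (B : Fin r → Finset V), IsUStarParts G r k v B := by
  classical
  rcases Nat.eq_zero_or_pos r with rfl | hr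
  · refine ⟨0, ?_⟩
    intro V _ _ G A _ _
    exact ⟨Fin.elim0, Fin.elim0,
      ⟨⟨fun i => i.elim0, fun j => j.elim0, fun j => j.elim0⟩, fun j => j.elim0⟩⟩
  · refine ⟨cnt r k 0, ?_⟩
    intro V _ _ G A _ hparts
    obtain ⟨hdisj, hcards, hshat⟩ := hparts
    have hcard0 : ∀ h0 : 0 < r, cnt r k 0 ≤ (A ⟨0, h0⟩).card := by
      intro h0
      rw [hcards ⟨0, h0⟩]
      exact le_of_eq rfl
    have hne : Nonempty V := by
      have hpos : 0 < (A ⟨0, hr⟩).card := lt_of_lt_of_le (cnt_pos r k 0) (hcard0 hr)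
      obtain ⟨x, _⟩ := Finset.card_pos.mp hpos
      exact ⟨x⟩
    obtain ⟨u, hu⟩ := design_exists r k G A hdisj hshat hcard0
    obtain ⟨vB, mem, yp, hsel⟩ := sel_exists r k G A u hu
    obtain ⟨W, hWA, hWhom, hW0, hWsh⟩ := pools_exist r k G A hdisj u hu vB mem yp hsel
    have hWdisj : ∀ i j, i < r → j < r → i ≠ j → Disjoint (W i) (W j) := by
      intro i j hir hjr hij
      exact Finset.disjoint_of_subset_left (hWA i hir)
        (Finset.disjoint_of_subset_right (hWA j hjr)
          (hdisj _ _ (by simp only [ne_eq, Fin.mk.injEq]; omega)))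
    obtain ⟨B, hB⟩ := extract r k G vB W hWdisj hW0 hWsh
    have hbase : ∀ j : Fin r,
        ((Finset.univ.filter fun i => i < j).biUnion fun i : Fin r => B i.1)
          = (Finset.range j.1).biUnion B := by
      intro j
      ext b
      simp only [Finset.mem_biUnion, Finset.mem_filter, Finset.mem_univ, true_and,
        Finset.mem_range]
      constructor
      · rintro ⟨i, hij, hbi⟩
        exact ⟨i.1, hij, hbi⟩
      · rintro ⟨i, hij, hbi⟩
        exact ⟨⟨i, lt_trans hij j.2⟩, hij, hbi⟩
    refine ⟨fun j => vB j.1, fun j => B j.1, ⟨?_, ?_, ?_⟩, ?_⟩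
    · intro i j hij
      refine Finset.disjoint_of_subset_left (hB i.1 i.2).1
        (Finset.disjoint_of_subset_right (hB j.1 j.2).1 ?_)
      exact hWdisj i.1 j.1 i.2 j.2 (fun h => hij (Fin.ext h))
    · intro j
      exact (hB j.1 j.2).2.1
    · intro j hj0
      intro S hS
      rw [hbase j] at hS
      obtain ⟨a, ha, hab⟩ := (hB j.1 j.2).2.2 (by omega) S hS
      refine ⟨a, ha, ?_⟩
      intro b hb
      rw [hbase j] at hb
      exact hab b hb
    · intro j x hx y hy hxy
      exact hWhom j.1 j.2 x ((hB j.1 j.2).1 hx) y ((hB j.1 j.2).1 hy) hxy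

end ABBM
end

section
/- Let 𝒫 be a hereditary property of graphs with colouring number χ_c(𝒫) = 1. Then there exists k = k(𝒫) ∈ ℕ such that every graph G ∈ 𝒫 is U(k)-free, and hence there exists ε > 0 such that |𝒫_n| ≤ 2^{n^{2−ε}} for every sufficiently large n ∈ ℕ. -/
open scoped symmDiff

namespace ABBM

variable {V : Type*}

/-- A hereditary property of labelled graphs: a collection of graphs on `[n]` for each `n`,
closed under relabelling (isomorphism) and under taking induced subgraphs; both closures are
expressed by closure under pulling back along arbitrary injections. -/
def IsHereditary (P : ∀ n, Set (SimpleGraph (Fin n))) : Prop :=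
  ∀ {m n : ℕ} (f : Fin m ↪ Fin n) (G : SimpleGraph (Fin n)),
    G ∈ P n → SimpleGraph.comap (f : Fin m → Fin n) G ∈ P m

/-- `G` belongs to the class `ℋ(r,v)`: its vertex set can be partitioned into `r` parts
so that part `j` induces a complete graph if `v j = true` and an empty graph otherwise. -/
def InHClass {n : ℕ} (r : ℕ) (v : Fin r → Bool) (G : SimpleGraph (Fin n)) : Prop :=
  ∃ f : Fin n → Fin r, ∀ x y : Fin n, x ≠ y → f x = f y → (G.Adj x y ↔ v (f x) = true)

/-- `ℋ(r,v) ⊆ 𝒫` for some `v ∈ {0,1}^r`. -/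
def HContained (P : ∀ n, Set (SimpleGraph (Fin n))) (r : ℕ) : Prop :=
  ∃ v : Fin r → Bool, ∀ (n : ℕ) (G : SimpleGraph (Fin n)), InHClass r v G → G ∈ P n

/-- The colouring number of `𝒫` equals `r`: `r` is maximal with `ℋ(r,v) ⊆ 𝒫` for some `v`. -/
def ColNumEq (P : ∀ n, Set (SimpleGraph (Fin n))) (r : ℕ) : Prop :=
  HContained P r ∧ ∀ s : ℕ, HContained P s → s ≤ r

open Finset in
/-- Finite Ramsey theorem, asymmetric 2-colour version on finsets. -/
theorem ramsey : ∀ p q : ℕ, ∃ N : ℕ, ∀ {V : Type*} (G : SimpleGraph V) (s : Finset V),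
    N ≤ s.card →
    (∃ T ⊆ s, T.card = p ∧ ∀ x ∈ T, ∀ y ∈ T, x ≠ y → G.Adj x y) ∨
    (∃ T ⊆ s, T.card = q ∧ ∀ x ∈ T, ∀ y ∈ T, x ≠ y → ¬ G.Adj x y) := by
  intro p
  induction p with
  | zero =>
    intro q
    exact ⟨0, fun G s _ => Or.inl ⟨∅, empty_subset _, card_empty, by simp⟩⟩
  | succ p ihp =>
    intro q
    induction q with
    | zero =>
      exact ⟨0, fun G s _ => Or.inr ⟨∅, empty_subset _, card_empty, by simp⟩⟩
    | succ q ihq =>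
      obtain ⟨N₁, hN₁⟩ := ihp (q + 1)
      obtain ⟨N₂, hN₂⟩ := ihq
      refine ⟨N₁ + N₂ + 1, ?_⟩
      intro V G s hs
      classical
      -- pick a pivot
      obtain ⟨a, ha⟩ : s.Nonempty := card_pos.mp (by omega)
      set s' := s.erase a with hs'
      have hcard' : N₁ + N₂ ≤ s'.card := by
        have h1 : s'.card = s.card - 1 := by rw [hs']; exact Finset.card_erase_of_mem ha
        omega
      set A := s'.filter (fun x => G.Adj a x) with hA
      set B := s'.filter (fun x => ¬ G.Adj a x) with hB
      have hAB : A.card + B.card = s'.card := by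
        rw [hA, hB]; exact Finset.card_filter_add_card_filter_not _
      have hcase : N₁ ≤ A.card ∨ N₂ ≤ B.card := by omega
      rcases hcase with hc | hc
      · rcases hN₁ G A hc with ⟨T, hTs, hTc, hT⟩ | ⟨T, hTs, hTc, hT⟩
        · -- clique of size p in A; add pivot
          have haT : a ∉ T := fun haT => (Finset.mem_erase.mp (Finset.mem_filter.mp (hTs haT)).1).1 rfl
          refine Or.inl ⟨insert a T, ?_, ?_, ?_⟩
          · intro x hx
            rcases Finset.mem_insert.mp hx with rfl | hx
            · exact ha
            · exact Finset.mem_of_mem_erase (Finset.mem_filter.mp (hTs hx)).1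
          · rw [Finset.card_insert_of_notMem haT, hTc]
          · intro x hx y hy hxy
            rcases Finset.mem_insert.mp hx with hxa | hx <;>
              rcases Finset.mem_insert.mp hy with hya | hy
            · exact absurd (hxa.trans hya.symm) hxy
            · rw [hxa]; exact (Finset.mem_filter.mp (hTs hy)).2
            · rw [hya]; exact G.adj_symm (Finset.mem_filter.mp (hTs hx)).2
            · exact hT x hx y hy hxy
        · exact Or.inr ⟨T, fun x hx => Finset.mem_of_mem_erase (Finset.mem_filter.mp (hTs hx)).1,
            hTc, hT⟩
      · rcases hN₂ G B hc with ⟨T, hTs, hTc, hT⟩ | ⟨T, hTs, hTc, hT⟩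
        · exact Or.inl ⟨T, fun x hx => Finset.mem_of_mem_erase (Finset.mem_filter.mp (hTs hx)).1,
            hTc, hT⟩
        · have haT : a ∉ T := fun haT => (Finset.mem_erase.mp (Finset.mem_filter.mp (hTs haT)).1).1 rfl
          refine Or.inr ⟨insert a T, ?_, ?_, ?_⟩
          · intro x hx
            rcases Finset.mem_insert.mp hx with rfl | hx
            · exact ha
            · exact Finset.mem_of_mem_erase (Finset.mem_filter.mp (hTs hx)).1
          · rw [Finset.card_insert_of_notMem haT, hTc]
          · intro x hx y hy hxy
            rcases Finset.mem_insert.mp hx with hxa | hx <;>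
              rcases Finset.mem_insert.mp hy with hya | hy
            · exact absurd (hxa.trans hya.symm) hxy
            · rw [hxa]; exact (Finset.mem_filter.mp (hTs hy)).2
            · rw [hya]; exact fun h => (Finset.mem_filter.mp (hTs hx)).2 (G.adj_symm h)
            · exact hT x hx y hy hxy
      
/-- Symmetric homogeneous version. -/
theorem ramsey_homog (r : ℕ) : ∃ N : ℕ, ∀ {V : Type*} (G : SimpleGraph V) (s : Finset V),
    N ≤ s.card → ∃ T ⊆ s, T.card = r ∧ ∃ b : Bool,
      ∀ x ∈ T, ∀ y ∈ T, x ≠ y → (G.Adj x y ↔ b = true) := by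
  obtain ⟨N, hN⟩ := ramsey r r
  refine ⟨N, fun G s hs => ?_⟩
  rcases hN G s hs with ⟨T, h1, h2, h3⟩ | ⟨T, h1, h2, h3⟩
  · exact ⟨T, h1, h2, true, fun x hx y hy hxy => by simp [h3 x hx y hy hxy]⟩
  · exact ⟨T, h1, h2, false, fun x hx y hy hxy => by simp [h3 x hx y hy hxy]⟩

theorem shatters_mono_right {G : SimpleGraph V} {A B B' : Finset V}
    (h : Shatters G A B) (hB : B' ⊆ B) : Shatters G A B' := by
  intro S hS
  obtain ⟨a, ha, hall⟩ := h S (hS.trans hB)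
  exact ⟨a, ha, fun b hb => hall b (hB hb)⟩

open Finset

theorem key_s7 (t : ℕ) : ∃ K : ℕ, ∀ {n : ℕ} (G : SimpleGraph (Fin n)) (X Y : Finset (Fin n)),
    Disjoint X Y → K ≤ Y.card → Shatters G X Y →
    ∃ (X₀ Y₀ : Finset (Fin n)) (bX bY : Bool),
      Disjoint X₀ Y₀ ∧ Y₀.card = t ∧
      (∀ x ∈ X₀, ∀ y ∈ X₀, x ≠ y → (G.Adj x y ↔ bX = true)) ∧
      (∀ x ∈ Y₀, ∀ y ∈ Y₀, x ≠ y → (G.Adj x y ↔ bY = true)) ∧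
      Shatters G X₀ Y₀ := by
  classical
  obtain ⟨M, hM⟩ := ramsey_homog (2 ^ t)
  obtain ⟨K, hK⟩ := ramsey_homog (2 ^ M)
  refine ⟨K, ?_⟩
  intro n G X Y hdisj hYcard hsh
  -- Step 1 : homogeneous Y' of size 2^M
  obtain ⟨Y', hY'sub, hY'card, bY, hY'homog⟩ := hK G Y hYcard
  have hsh' : Shatters G X Y' := shatters_mono_right hsh hY'sub
  -- Step 2 : index Y' by Fin M → Bool
  have hidx : Fintype.card (Fin M → Bool) = Fintype.card ↥Y' := by
    simp [hY'card]
  let e : (Fin M → Bool) ≃ ↥Y' := Fintype.equivOfCardEq hidx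
  have einj : Function.Injective (fun g : Fin M → Bool => ((e g : Fin n))) :=
    fun g g' h => e.injective (Subtype.coe_injective h)
  -- Step 3 : realizer vertices x i
  let S : Fin M → Finset (Fin n) :=
    fun i => (univ.filter (fun g : Fin M → Bool => g i = true)).image (fun g => (e g : Fin n))
  have hSsub : ∀ i, S i ⊆ Y' := by
    intro i z hz
    obtain ⟨g, _, rfl⟩ := mem_image.mp hz
    exact (e g).2
  have hmemS : ∀ (i : Fin M) (g : Fin M → Bool), ((e g : Fin n) ∈ S i) ↔ g i = true := by
    intro i g
    constructor
    · intro h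
      obtain ⟨g', hg', hgg⟩ := mem_image.mp h
      rw [← einj hgg]
      exact (mem_filter.mp hg').2
    · intro h
      exact mem_image.mpr ⟨g, mem_filter.mpr ⟨mem_univ _, h⟩, rfl⟩
  have hx : ∀ i : Fin M, ∃ a ∈ X, ∀ b ∈ Y', G.Adj a b ↔ b ∈ S i :=
    fun i => hsh' (S i) (hSsub i)
  choose x hxX hxadj using hx
  have hxtrace : ∀ (i : Fin M) (g : Fin M → Bool), G.Adj (x i) (e g : Fin n) ↔ g i = true :=
    fun i g => (hxadj i (e g : Fin n) (e g).2).trans (hmemS i g)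
  have hxinj : Function.Injective x := by
    intro i j hij
    by_contra hne
    have h1 : G.Adj (x i) (e (fun l => decide (l = i)) : Fin n) := by
      rw [hxtrace]; simp
    rw [hij, hxtrace] at h1
    simp at h1
    exact hne h1.symm
  -- Step 4 : Ramsey on the realizers
  have hxcard : M ≤ (univ.image x).card := by
    rw [Finset.card_image_of_injective _ hxinj, card_univ, Fintype.card_fin]
  obtain ⟨T, hTsub, hTcard, bX, hThomog⟩ := hM G (univ.image x) hxcard
  let I₀ : Finset (Fin M) := univ.filter (fun i => x i ∈ T)
  have hI₀imag : I₀.image x = T := by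
    apply Finset.Subset.antisymm
    · intro z hz
      obtain ⟨i, hi, rfl⟩ := mem_image.mp hz
      exact (mem_filter.mp hi).2
    · intro z hz
      obtain ⟨i, _, rfl⟩ := mem_image.mp (hTsub hz)
      exact mem_image.mpr ⟨i, mem_filter.mpr ⟨mem_univ _, hz⟩, rfl⟩
  have hI₀card : I₀.card = 2 ^ t := by
    rw [← hTcard, ← hI₀imag, Finset.card_image_of_injective _ hxinj]
  have hpatc : Fintype.card (Fin t → Bool) = Fintype.card ↥I₀ := by
    simp [hI₀card]
  let pat : (Fin t → Bool) ≃ ↥I₀ := Fintype.equivOfCardEq hpatc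
  let g : Fin t → (Fin M → Bool) :=
    fun j i => if h : i ∈ I₀ then pat.symm ⟨i, h⟩ j else false
  have hgpat : ∀ (j : Fin t) (τ : Fin t → Bool), g j (pat τ : Fin M) = τ j := by
    intro j τ
    have hmem : (pat τ : Fin M) ∈ I₀ := (pat τ).2
    simp only [g, dif_pos hmem]
    congr 1
    · rw [show (⟨(pat τ : Fin M), hmem⟩ : ↥I₀) = pat τ from Subtype.ext rfl, Equiv.symm_apply_apply]
  let yv : Fin t → Fin n := fun j => (e (g j) : Fin n)
  have hyvinj : Function.Injective yv := by
    intro j j' hjj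
    by_contra hne
    have := einj hjj
    have h1 : g j (pat (fun l => decide (l = j)) : Fin M) = true := by rw [hgpat]; simp
    rw [this, hgpat] at h1
    simp at h1
    exact hne h1.symm
  let Y₀ : Finset (Fin n) := univ.image yv
  have hY₀sub : Y₀ ⊆ Y' := by
    intro z hz
    obtain ⟨j, _, rfl⟩ := mem_image.mp hz
    exact (e (g j)).2
  refine ⟨T, Y₀, bX, bY, ?_, ?_, hThomog, ?_, ?_⟩
  · -- disjoint
    refine hdisj.mono (fun z hz => ?_) (fun z hz => hY'sub (hY₀sub hz))
    obtain ⟨i, _, rfl⟩ := mem_image.mp (hTsub hz)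
    exact hxX i
  · rw [Finset.card_image_of_injective _ hyvinj, card_univ, Fintype.card_fin]
  · intro a ha b hb hab
    exact hY'homog a (hY₀sub ha) b (hY₀sub hb) hab
  · -- Shatters G T Y₀
    intro S₀ hS₀
    set τ : Fin t → Bool := fun j => decide (yv j ∈ S₀) with hτ
    set i₀ : ↥I₀ := pat τ with hi₀
    refine ⟨x i₀, ?_, ?_⟩
    · exact (mem_filter.mp i₀.2).2
    · intro b hb
      obtain ⟨j, _, rfl⟩ := mem_image.mp hb
      rw [show yv j = (e (g j) : Fin n) from rfl, hxtrace i₀ (g j), hgpat j τ]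
      simp [τ]
      exact Iff.rfl

theorem embed {n p m : ℕ} (G : SimpleGraph (Fin n)) (X₀ Y₀ : Finset (Fin n)) (bX bY : Bool)
    (hdisj : Disjoint X₀ Y₀) (hY₀ : Y₀.card = 2 * m)
    (hXh : ∀ x ∈ X₀, ∀ y ∈ X₀, x ≠ y → (G.Adj x y ↔ bX = true))
    (hYh : ∀ x ∈ Y₀, ∀ y ∈ Y₀, x ≠ y → (G.Adj x y ↔ bY = true))
    (hsh : Shatters G X₀ Y₀)
    (hp : p ≤ m) (H : SimpleGraph (Fin p)) (f : Fin p → Fin 2)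
    (hf : ∀ x y, x ≠ y → f x = f y → (H.Adj x y ↔ (if f x = 0 then bY else bX) = true)) :
    ∃ em : Fin p ↪ Fin n, SimpleGraph.comap (em : Fin p → Fin n) G = H := by
  classical
  let u : Fin (2 * m) ↪o Fin n := Y₀.orderEmbOfFin hY₀
  have humem : ∀ i : Fin (2 * m), u i ∈ Y₀ := fun i => Y₀.orderEmbOfFin_mem hY₀ i
  let i0 : Fin p → Fin (2 * m) := fun a => ⟨a, by omega⟩
  let i1 : Fin p → Fin (2 * m) := fun a => ⟨m + a, by omega⟩
  let S : Fin p → Finset (Fin n) := fun a =>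
    ((univ.filter (fun c : Fin p => f c = 0 ∧ H.Adj a c)).image (fun c => u (i0 c)))
      ∪ {u (i1 a)}
  have hSsub : ∀ a, S a ⊆ Y₀ := by
    intro a z hz
    rcases mem_union.mp hz with hz | hz
    · obtain ⟨c, _, rfl⟩ := mem_image.mp hz
      exact humem _
    · rw [mem_singleton.mp hz]; exact humem _
  have hxr : ∀ a : Fin p, ∃ z ∈ X₀, ∀ b ∈ Y₀, G.Adj z b ↔ b ∈ S a :=
    fun a => hsh (S a) (hSsub a)
  choose xr hxrX hxrtr using hxr
  -- membership in S a of points u (i0 b) and u (i1 b)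
  have hmem0 : ∀ a b : Fin p, (u (i0 b) ∈ S a) ↔ (f b = 0 ∧ H.Adj a b) := by
    intro a b
    constructor
    · intro h
      rcases mem_union.mp h with h | h
      · obtain ⟨c, hc, hcc⟩ := mem_image.mp h
        have : i0 b = i0 c := by
          have := u.injective hcc.symm
          exact this
        have hbc : b = c := by
          have := congrArg Fin.val this
          simp [i0] at this
          exact Fin.ext this
        rw [hbc]
        exact (mem_filter.mp hc).2
      · exfalso
        have := u.injective (mem_singleton.mp h)
        have := congrArg Fin.val this
        simp [i0, i1] at this
        omega
    · intro ⟨h1, h2⟩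
      exact mem_union.mpr (Or.inl (mem_image.mpr ⟨b, mem_filter.mpr ⟨mem_univ _, h1, h2⟩, rfl⟩))
  have hmem1 : ∀ a b : Fin p, (u (i1 b) ∈ S a) ↔ b = a := by
    intro a b
    constructor
    · intro h
      rcases mem_union.mp h with h | h
      · exfalso
        obtain ⟨c, hc, hcc⟩ := mem_image.mp h
        have := congrArg Fin.val (u.injective hcc)
        simp [i0, i1] at this
        omega
      · have := congrArg Fin.val (u.injective (mem_singleton.mp h))
        simp [i1] at this
        exact Fin.ext (by omega)
    · rintro rfl
      exact mem_union.mpr (Or.inr (mem_singleton.mpr rfl))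
  -- the embedding map
  let em : Fin p → Fin n := fun a => if f a = 0 then u (i0 a) else xr a
  have hone : ∀ a : Fin p, f a ≠ 0 → f a = 1 := by
    intro a h
    have h2 := (f a).isLt
    have h3 : (f a).val ≠ 0 := fun hh => h (Fin.ext hh)
    exact Fin.ext (by omega)
  have hxrne : ∀ a b : Fin p, a ≠ b → xr a ≠ xr b := by
    intro a b hab hxx
    have h1 : G.Adj (xr a) (u (i1 a)) := by
      rw [hxrtr a _ (humem _), hmem1]
    have h2 : ¬ G.Adj (xr b) (u (i1 a)) := by
      rw [hxrtr b _ (humem _), hmem1]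
      exact hab
    rw [hxx] at h1
    exact h2 h1
  have hdisjmem : ∀ a b : Fin p, u (i0 a) ≠ xr b := by
    intro a b h
    exact Finset.disjoint_left.mp hdisj (hxrX b) (h ▸ humem (i0 a))
  have heminj : Function.Injective em := by
    intro a b hab
    by_contra hne
    by_cases ha : f a = 0 <;> by_cases hb : f b = 0
    · rw [show em a = u (i0 a) from if_pos ha, show em b = u (i0 b) from if_pos hb] at hab
      have := congrArg Fin.val (u.injective hab)
      simp [i0] at this
      exact hne (Fin.ext this)
    · rw [show em a = u (i0 a) from if_pos ha, show em b = xr b from if_neg hb] at hab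
      exact hdisjmem a b hab
    · rw [show em a = xr a from if_neg ha, show em b = u (i0 b) from if_pos hb] at hab
      exact hdisjmem b a hab.symm
    · rw [show em a = xr a from if_neg ha, show em b = xr b from if_neg hb] at hab
      exact hxrne a b hne hab
  -- adjacency is preserved and reflected
  have hadj : ∀ a b : Fin p, G.Adj (em a) (em b) ↔ H.Adj a b := by
    intro a b
    rcases eq_or_ne a b with rfl | hne
    · simp
    by_cases ha : f a = 0 <;> by_cases hb : f b = 0
    · -- both in Y₀ : homogeneous bY
      have h1 : em a = u (i0 a) := if_pos ha
      have h2 : em b = u (i0 b) := if_pos hb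
      rw [h1, h2]
      have hneu : u (i0 a) ≠ u (i0 b) := by
        intro h
        have := congrArg Fin.val (u.injective h)
        simp [i0] at this
        exact hne (Fin.ext this)
      rw [hYh _ (humem _) _ (humem _) hneu, hf a b hne (ha.trans hb.symm), if_pos ha]
    · -- a in Y₀, b realizer : use trace of xr b, symmetry
      have h1 : em a = u (i0 a) := if_pos ha
      have h2 : em b = xr b := if_neg hb
      rw [h1, h2, G.adj_comm, hxrtr b _ (humem _), hmem0, H.adj_comm]
      simp [ha]
    · have h1 : em a = xr a := if_neg ha
      have h2 : em b = u (i0 b) := if_pos hb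
      rw [h1, h2, hxrtr a _ (humem _), hmem0]
      simp [hb]
    · -- both realizers : homogeneous bX
      have h1 : em a = xr a := if_neg ha
      have h2 : em b = xr b := if_neg hb
      rw [h1, h2, hXh _ (hxrX a) _ (hxrX b) (hxrne a b hne),
        hf a b hne ((hone a ha).trans (hone b hb).symm), if_neg ha]
  refine ⟨⟨em, heminj⟩, ?_⟩
  apply SimpleGraph.ext
  ext a b
  exact hadj a b

theorem kst {n k : ℕ} (hk : 1 ≤ k) (hn : 1 ≤ n) (H : SimpleGraph (Fin n))
    [DecidableRel H.Adj]
    (hfree : ¬ ∃ (X Y : Finset (Fin n)), Disjoint X Y ∧ X.card = 2 ^ k ∧ Y.card = k ∧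
        ∀ x ∈ X, ∀ y ∈ Y, H.Adj x y) :
    (H.edgeSet.ncard : ℝ) ≤
      (k + k.factorial * (2 ^ k + k)) * (n : ℝ) ^ ((2:ℝ) - 1 / k) := by
  classical
  have hncard : H.edgeSet.ncard = H.edgeFinset.card := by
    rw [SimpleGraph.edgeFinset, ← Set.ncard_eq_toFinset_card']
  rw [hncard]
  set c₁ : ℕ := k.factorial * (2 ^ k + k) with hc₁
  -- Step A : common neighbourhoods are small
  have hCN : ∀ Y : Finset (Fin n), Y.card = k →
      (univ.filter (fun v => ∀ y ∈ Y, H.Adj v y)).card ≤ 2 ^ k + k := by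
    intro Y hY
    by_contra hbig
    push_neg at hbig
    set CN := univ.filter (fun v => ∀ y ∈ Y, H.Adj v y) with hCNdef
    have h2 : 2 ^ k ≤ (CN \ Y).card := by
      have := Finset.card_le_card_sdiff_add_card (s := CN) (t := Y)
      omega
    obtain ⟨X, hXsub, hXc⟩ := Finset.exists_subset_card_eq h2
    refine hfree ⟨X, Y, ?_, hXc, hY, ?_⟩
    · exact Finset.disjoint_of_subset_left hXsub (Finset.sdiff_disjoint)
    · intro x hx y hy
      have := (Finset.mem_filter.mp (Finset.mem_sdiff.mp (hXsub hx)).1).2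
      exact this y hy
  -- Step B : double counting
  have hdc : ∑ v : Fin n, (H.degree v).choose k ≤ (2 ^ k + k) * n ^ k := by
    have e1 : ∀ v : Fin n, (H.degree v).choose k =
        ((univ.powersetCard k).filter (fun Y => Y ⊆ H.neighborFinset v)).card := by
      intro v
      rw [← SimpleGraph.card_neighborFinset_eq_degree, ← Finset.card_powersetCard]
      congr 1
      ext Y
      simp only [Finset.mem_powersetCard, Finset.mem_filter, Finset.subset_univ, true_and]
      tauto
    calc ∑ v : Fin n, (H.degree v).choose k
        = ∑ v : Fin n, ∑ Y ∈ univ.powersetCard k,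
            (if Y ⊆ H.neighborFinset v then 1 else 0) := by
          refine Finset.sum_congr rfl fun v _ => ?_
          rw [e1 v, Finset.card_filter]
      _ = ∑ Y ∈ univ.powersetCard k, ∑ v : Fin n,
            (if Y ⊆ H.neighborFinset v then 1 else 0) := Finset.sum_comm
      _ = ∑ Y ∈ univ.powersetCard k,
            (univ.filter (fun v => ∀ y ∈ Y, H.Adj v y)).card := by
          refine Finset.sum_congr rfl fun Y _ => ?_
          rw [Finset.card_filter]
          refine Finset.sum_congr rfl fun v _ => ?_
          congr 1
          simp only [eq_iff_iff]
          constructor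
          · intro h y hy
            exact (SimpleGraph.mem_neighborFinset _ _ _).mp (h hy)
          · intro h y hy
            exact (SimpleGraph.mem_neighborFinset _ _ _).mpr (h y hy)
      _ ≤ ∑ Y ∈ univ.powersetCard k, (2 ^ k + k) := by
          refine Finset.sum_le_sum fun Y hY => ?_
          exact hCN Y (Finset.mem_powersetCard.mp hY).2
      _ = (univ.powersetCard k).card * (2 ^ k + k) := by rw [Finset.sum_const, smul_eq_mul]
      _ ≤ n ^ k * (2 ^ k + k) := by
          gcongr
          rw [Finset.card_powersetCard, Finset.card_univ, Fintype.card_fin]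
          exact Nat.choose_le_pow _ _
      _ = (2 ^ k + k) * n ^ k := by ring
  -- Step C : from binomials to powers
  have hpow : ∑ v : Fin n, (H.degree v + 1 - k) ^ k ≤ c₁ * n ^ k := by
    calc ∑ v : Fin n, (H.degree v + 1 - k) ^ k
        ≤ ∑ v : Fin n, k.factorial * (H.degree v).choose k := by
          refine Finset.sum_le_sum fun v _ => ?_
          rw [← Nat.descFactorial_eq_factorial_mul_choose]
          exact Nat.pow_sub_le_descFactorial _ _
      _ = k.factorial * ∑ v : Fin n, (H.degree v).choose k := by
          rw [Finset.mul_sum]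
      _ ≤ k.factorial * ((2 ^ k + k) * n ^ k) := by gcongr
      _ = c₁ * n ^ k := by rw [hc₁]; ring
  -- Step D : real analysis
  set a : Fin n → ℝ := fun v => ((H.degree v + 1 - k : ℕ) : ℝ) with ha
  have hanneg : ∀ v ∈ (univ : Finset (Fin n)), 0 ≤ a v := fun v _ => Nat.cast_nonneg _
  have hsum_ak : ∑ v : Fin n, (a v) ^ k ≤ (c₁ : ℝ) * (n : ℝ) ^ (k : ℕ) := by
    have := hpow
    calc ∑ v : Fin n, (a v) ^ k = ((∑ v : Fin n, (H.degree v + 1 - k) ^ k : ℕ) : ℝ) := by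
          push_cast; rfl
      _ ≤ ((c₁ * n ^ k : ℕ) : ℝ) := by exact_mod_cast hpow
      _ = (c₁ : ℝ) * (n : ℝ) ^ (k : ℕ) := by push_cast; ring
  have hnRpos : (0:ℝ) < (n:ℝ) := by exact_mod_cast hn
  have hpm : (∑ v : Fin n, a v) ^ k ≤ (n : ℝ) ^ (k - 1 : ℕ) * ∑ v : Fin n, (a v) ^ k := by
    obtain ⟨k', rfl⟩ : ∃ k', k = k' + 1 := ⟨k - 1, by omega⟩
    have h := pow_sum_div_card_le_sum_pow (s := (univ : Finset (Fin n))) (f := a)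
      hanneg k'
    have hcard : (0:ℝ) < ((#(univ : Finset (Fin n)) : ℕ) : ℝ) ^ k' := by
      simp only [Finset.card_univ, Fintype.card_fin]
      exact pow_pos hnRpos k'
    rw [div_le_iff₀ hcard] at h
    calc (∑ v : Fin n, a v) ^ (k' + 1)
        ≤ (∑ v : Fin n, a v ^ (k' + 1)) * ((#(univ : Finset (Fin n)) : ℕ) : ℝ) ^ k' := h
      _ = (n : ℝ) ^ (k' + 1 - 1 : ℕ) * ∑ v : Fin n, a v ^ (k' + 1) := by
          simp only [Finset.card_univ, Fintype.card_fin, Nat.add_sub_cancel]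
          ring
  have hAk : (∑ v : Fin n, a v) ^ k ≤ (c₁ : ℝ) * (n : ℝ) ^ (2 * k - 1 : ℕ) := by
    calc (∑ v : Fin n, a v) ^ k ≤ (n : ℝ) ^ (k - 1 : ℕ) * ∑ v : Fin n, (a v) ^ k := hpm
      _ ≤ (n : ℝ) ^ (k - 1 : ℕ) * ((c₁ : ℝ) * (n : ℝ) ^ (k : ℕ)) := by
          gcongr
      _ = (c₁ : ℝ) * ((n : ℝ) ^ (k - 1 : ℕ) * (n : ℝ) ^ (k : ℕ)) := by ring
      _ = (c₁ : ℝ) * (n : ℝ) ^ (2 * k - 1 : ℕ) := by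
          rw [← pow_add]
          congr 2
          omega
  -- take k-th roots
  have hnR : (0:ℝ) < n := by exact_mod_cast hn
  have hc₁R : (1:ℝ) ≤ (c₁ : ℝ) := by
    have : 1 ≤ c₁ := Nat.one_le_iff_ne_zero.mpr (by positivity)
    exact_mod_cast this
  have hA : (0:ℝ) ≤ ∑ v : Fin n, a v := Finset.sum_nonneg hanneg
  have hkR : (0:ℝ) < (k:ℝ) := by exact_mod_cast hk
  have hroot : ∑ v : Fin n, a v ≤ (c₁ : ℝ) * (n : ℝ) ^ ((2:ℝ) - 1 / k) := by
    have h1 : ∑ v : Fin n, a v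
        = (((∑ v : Fin n, a v) ^ k : ℝ)) ^ ((1:ℝ)/k) := by
      rw [← Real.rpow_natCast (∑ v : Fin n, a v) k, ← Real.rpow_mul hA]
      rw [mul_one_div, div_self (ne_of_gt hkR), Real.rpow_one]
    rw [h1]
    have h2 : (((∑ v : Fin n, a v) ^ k : ℝ)) ^ ((1:ℝ)/k) ≤
        ((c₁ : ℝ) * (n : ℝ) ^ (2 * k - 1 : ℕ)) ^ ((1:ℝ)/k) := by
      apply Real.rpow_le_rpow (by positivity) hAk (by positivity)
    refine h2.trans ?_
    rw [Real.mul_rpow (by positivity) (by positivity)]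
    have h3 : ((c₁:ℝ)) ^ ((1:ℝ)/k) ≤ (c₁ : ℝ) := by
      nth_rewrite 2 [← Real.rpow_one (c₁:ℝ)]
      apply Real.rpow_le_rpow_of_exponent_le hc₁R
      rw [div_le_one hkR]
      exact_mod_cast hk
    have h4 : ((n:ℝ) ^ (2 * k - 1 : ℕ)) ^ ((1:ℝ)/k) = (n:ℝ) ^ ((2:ℝ) - 1/k) := by
      rw [← Real.rpow_natCast (n:ℝ) (2*k-1), ← Real.rpow_mul (le_of_lt hnR)]
      congr 1
      have : ((2 * k - 1 : ℕ) : ℝ) = 2 * (k:ℝ) - 1 := by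
        have : (1:ℕ) ≤ 2 * k := by omega
        push_cast [Nat.cast_sub this]
        ring
      rw [this]
      field_simp
    rw [h4]
    exact mul_le_mul_of_nonneg_right h3 (Real.rpow_nonneg hnR.le _)
  -- Step E : conclude
  have hdeg : (2 * H.edgeFinset.card : ℕ) ≤ (∑ v : Fin n, (H.degree v + 1 - k)) + k * n := by
    rw [← SimpleGraph.sum_degrees_eq_twice_card_edges]
    have : ∀ v : Fin n, H.degree v ≤ (H.degree v + 1 - k) + k := fun v => by omega
    calc ∑ v : Fin n, H.degree v ≤ ∑ v : Fin n, ((H.degree v + 1 - k) + k) :=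
          Finset.sum_le_sum (fun v _ => this v)
      _ = (∑ v : Fin n, (H.degree v + 1 - k)) + k * n := by
          rw [Finset.sum_add_distrib, Finset.sum_const, Finset.card_univ, Fintype.card_fin,
            smul_eq_mul, mul_comm]
  have hdegR : (2 * H.edgeFinset.card : ℝ) ≤ (∑ v : Fin n, a v) + k * n := by
    have : ((2 * H.edgeFinset.card : ℕ) : ℝ) ≤
        ((∑ v : Fin n, (H.degree v + 1 - k) + k * n : ℕ) : ℝ) := by exact_mod_cast hdeg
    push_cast at this
    exact this
  have hn1 : (1:ℝ) ≤ (n:ℝ) := by exact_mod_cast hn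
  have hnpow : (n : ℝ) ≤ (n : ℝ) ^ ((2:ℝ) - 1 / k) := by
    nth_rewrite 1 [← Real.rpow_one (n:ℝ)]
    apply Real.rpow_le_rpow_of_exponent_le hn1
    have h1k : 1 / (k:ℝ) ≤ 1 := by
      rw [div_le_one hkR]; exact_mod_cast hk
    linarith
  have : (H.edgeFinset.card : ℝ) ≤ 2 * H.edgeFinset.card := by
    have : (0:ℝ) ≤ (H.edgeFinset.card : ℝ) := Nat.cast_nonneg _
    linarith
  calc (H.edgeFinset.card : ℝ) ≤ 2 * H.edgeFinset.card := this
    _ ≤ (∑ v : Fin n, a v) + k * n := hdegR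
    _ ≤ (c₁ : ℝ) * (n : ℝ) ^ ((2:ℝ) - 1 / k) + (k:ℝ) * (n : ℝ) ^ ((2:ℝ) - 1 / k) := by
        exact add_le_add hroot (mul_le_mul_of_nonneg_left hnpow (le_of_lt hkR))
    _ = (k + k.factorial * (2 ^ k + k)) * (n : ℝ) ^ ((2:ℝ) - 1 / k) := by
        rw [hc₁]; push_cast; ring

/-- Cardinality bound for `U(k)`-free families. -/
theorem count_bound (P : ∀ n, Set (SimpleGraph (Fin n))) (k n : ℕ) (hk : 1 ≤ k) (hn : 1 ≤ n)
    (hfree : ∀ G ∈ P n, UFree G k) :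
    Nat.card (P n) ≤
      (Nat.ceil (((k + k.factorial * (2 ^ k + k) : ℕ) : ℝ) * (n : ℝ) ^ ((2:ℝ) - 1 / k)) + 1) *
        (Fintype.card (Sym2 (Fin n)) + 1) ^
          (Nat.ceil (((k + k.factorial * (2 ^ k + k) : ℕ) : ℝ) * (n : ℝ) ^ ((2:ℝ) - 1 / k))) := by
  classical
  set c₂ : ℕ := k + k.factorial * (2 ^ k + k) with hc₂
  set β : ℕ := Nat.ceil ((c₂ : ℝ) * (n : ℝ) ^ ((2:ℝ) - 1 / k)) with hβ
  set N₂ : ℕ := Fintype.card (Sym2 (Fin n)) with hN₂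
  -- the edge-set family
  let EF : SimpleGraph (Fin n) → Finset (Sym2 (Fin n)) :=
    fun G => (Set.toFinite G.edgeSet).toFinset
  have hEFmem : ∀ (G : SimpleGraph (Fin n)) (e : Sym2 (Fin n)), e ∈ EF G ↔ e ∈ G.edgeSet :=
    fun G e => Set.Finite.mem_toFinset _
  have hEFinj : Function.Injective EF := by
    intro G G' h
    have : G.edgeSet = G'.edgeSet := by
      rw [← Set.Finite.coe_toFinset (Set.toFinite G.edgeSet),
        ← Set.Finite.coe_toFinset (Set.toFinite G'.edgeSet)]
      exact congrArg _ h
    exact SimpleGraph.edgeSet_inj.mp this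
  let 𝒜 : Finset (Finset (Sym2 (Fin n))) :=
    Finset.univ.filter (fun D => ∃ G ∈ P n, EF G = D)
  -- |P n| ≤ |𝒜|
  have h1 : Nat.card (P n) ≤ 𝒜.card := by
    have hinj : Function.Injective
        (fun G : ↥(P n) => (⟨EF G.1, mem_filter.mpr ⟨mem_univ _, G.1, G.2, rfl⟩⟩ : ↥𝒜)) := by
      intro G G' h
      exact Subtype.ext (hEFinj (congrArg Subtype.val h))
    calc Nat.card (P n) ≤ Nat.card ↥𝒜 := Nat.card_le_card_of_injective _ hinj
      _ = 𝒜.card := by rw [Nat.card_eq_fintype_card, Fintype.card_coe]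
  -- every shattered set is small
  have h3 : ∀ D ∈ 𝒜.shatterer, D.card ≤ β := by
    intro D hD
    have hSh : 𝒜.Shatters D := mem_shatterer.mp hD
    -- D is contained in the edge set of some graph in P n
    obtain ⟨u0, hu0A, hDu0⟩ := hSh (Finset.Subset.refl D)
    have hDsub : D ⊆ u0 := by
      rw [← Finset.inter_eq_left]; exact hDu0
    obtain ⟨G0, _, rfl⟩ := (mem_filter.mp hu0A).2
    have hDdiag : ∀ e ∈ D, ¬ e.IsDiag := fun e he =>
      G0.not_isDiag_of_mem_edgeSet ((hEFmem G0 e).mp (hDsub he))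
    -- build the graph with edge set D
    set HD : SimpleGraph (Fin n) := SimpleGraph.fromEdgeSet (↑D : Set (Sym2 (Fin n))) with hHD
    haveI : DecidableRel HD.Adj := fun a b => Classical.dec _
    have hedge : HD.edgeFinset = D := by
      ext e
      rw [SimpleGraph.mem_edgeFinset, hHD, SimpleGraph.edgeSet_fromEdgeSet]
      constructor
      · intro ⟨h1', _⟩; exact_mod_cast h1'
      · intro h; exact ⟨by exact_mod_cast h, hDdiag e h⟩
    -- HD has no large complete bipartite configuration
    have hKfree : ¬ ∃ (X Y : Finset (Fin n)), Disjoint X Y ∧ X.card = 2 ^ k ∧ Y.card = k ∧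
        ∀ x ∈ X, ∀ y ∈ Y, HD.Adj x y := by
      rintro ⟨X, Y, hXY, hXc, hYc, hcomp⟩
      have hDXY : ∀ x ∈ X, ∀ y ∈ Y, s(x, y) ∈ D := by
        intro x hx y hy
        have := hcomp x hx y hy
        rw [← SimpleGraph.mem_edgeSet, ← SimpleGraph.mem_edgeFinset, hedge] at this
        exact this
      -- a bijection between subsets of Y and X
      have hcards : Fintype.card ↥(Y.powerset) = Fintype.card ↥X := by
        rw [Fintype.card_coe, Fintype.card_coe, Finset.card_powerset, hYc, hXc]
      let φ : ↥(Y.powerset) ≃ ↥X := Fintype.equivOfCardEq hcards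
      let D' : Finset (Sym2 (Fin n)) :=
        Y.powerset.attach.biUnion (fun S => S.1.image (fun y => s(((φ S) : Fin n), y)))
      have hD'sub : D' ⊆ D := by
        intro e he
        obtain ⟨S, _, he⟩ := Finset.mem_biUnion.mp he
        obtain ⟨y, hy, rfl⟩ := Finset.mem_image.mp he
        exact hDXY _ (φ S).2 y (Finset.mem_powerset.mp S.2 hy)
      obtain ⟨u1, hu1A, hDu1⟩ := hSh hD'sub
      obtain ⟨G1, hG1P, rfl⟩ := (mem_filter.mp hu1A).2
      -- G1 is not U(k)-free
      apply hfree G1 hG1P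
      refine ⟨X, Y, hXY, hYc, ?_⟩
      intro S hS
      set Sp : ↥(Y.powerset) := ⟨S, Finset.mem_powerset.mpr hS⟩ with hSp
      refine ⟨(φ Sp : Fin n), (φ Sp).2, ?_⟩
      intro b hb
      have hmemD : s((φ Sp : Fin n), b) ∈ D := hDXY _ (φ Sp).2 b hb
      have hchain : G1.Adj (φ Sp : Fin n) b ↔ s((φ Sp : Fin n), b) ∈ D' := by
        rw [← hDu1, Finset.mem_inter]
        constructor
        · intro h
          exact ⟨hmemD, (hEFmem G1 _).mpr ((SimpleGraph.mem_edgeSet G1).mpr h)⟩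
        · intro ⟨_, h⟩
          exact (SimpleGraph.mem_edgeSet G1).mp ((hEFmem G1 _).mp h)
      rw [hchain]
      constructor
      · intro h
        obtain ⟨S', _, he⟩ := Finset.mem_biUnion.mp h
        obtain ⟨y, hy, hey⟩ := Finset.mem_image.mp he
        rcases Sym2.eq_iff.mp hey with ⟨h1', h2'⟩ | ⟨h1', h2'⟩
        · have : S' = Sp := φ.injective (Subtype.ext h1')
          rw [← h2']
          have : S'.1 = S := by rw [this]
          rw [← this]
          exact hy
        · exfalso
          have hbX : (φ S' : Fin n) ∈ X := (φ S').2
          rw [h1'] at hbX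
          exact Finset.disjoint_right.mp hXY hb hbX
      · intro h
        exact Finset.mem_biUnion.mpr ⟨Sp, Finset.mem_attach _ _,
          Finset.mem_image.mpr ⟨b, h, rfl⟩⟩
    -- apply the KST bound
    have hcard := kst hk hn HD hKfree
    have hnc : HD.edgeSet.ncard = D.card := by
      have hset : HD.edgeSet = (↑D : Set (Sym2 (Fin n))) := by
        rw [hHD, SimpleGraph.edgeSet_fromEdgeSet]
        rw [sdiff_eq_left, Set.disjoint_left]
        intro e heD heDiag
        exact hDdiag e (by exact_mod_cast heD) heDiag
      rw [hset, Set.ncard_coe_finset]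
    have heq : ((k : ℝ) + (k.factorial : ℝ) * ((2:ℝ) ^ k + (k:ℝ))) * (n:ℝ) ^ ((2:ℝ) - 1/k)
        = (c₂:ℝ) * (n:ℝ) ^ ((2:ℝ) - 1/k) := by
      rw [hc₂]; push_cast; ring
    rw [hnc, heq] at hcard
    have : (D.card : ℝ) ≤ (β : ℝ) := hcard.trans (Nat.le_ceil _)
    exact_mod_cast this
  -- count the shatterer
  have h4 : 𝒜.shatterer.card ≤ (β + 1) * (N₂ + 1) ^ β := by
    have hsub : 𝒜.shatterer ⊆ (Finset.range (β + 1)).biUnion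
        (fun i => Finset.univ.powersetCard i) := by
      intro D hD
      have hc := h3 D hD
      exact Finset.mem_biUnion.mpr ⟨D.card, Finset.mem_range.mpr (by omega),
        Finset.mem_powersetCard.mpr ⟨Finset.subset_univ _, rfl⟩⟩
    calc 𝒜.shatterer.card
        ≤ ((Finset.range (β + 1)).biUnion (fun i => Finset.univ.powersetCard i)).card :=
          Finset.card_le_card hsub
      _ ≤ ∑ i ∈ Finset.range (β + 1), (Finset.univ.powersetCard i).card :=
          Finset.card_biUnion_le
      _ ≤ ∑ i ∈ Finset.range (β + 1), (N₂ + 1) ^ β := by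
          refine Finset.sum_le_sum fun i hi => ?_
          rw [Finset.card_powersetCard, Finset.card_univ]
          calc N₂.choose i ≤ N₂ ^ i := Nat.choose_le_pow _ _
            _ ≤ (N₂ + 1) ^ i := Nat.pow_le_pow_left (by omega) _
            _ ≤ (N₂ + 1) ^ β := Nat.pow_le_pow_right (by omega)
                (by have := Finset.mem_range.mp hi; omega)
      _ = (β + 1) * (N₂ + 1) ^ β := by
          rw [Finset.sum_const, Finset.card_range, smul_eq_mul]
  calc Nat.card (P n) ≤ 𝒜.card := h1
    _ ≤ 𝒜.shatterer.card := Finset.card_le_card_shatterer 𝒜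
    _ ≤ (β + 1) * (N₂ + 1) ^ β := h4

set_option maxHeartbeats 1000000 in
theorem final_asymp (k c₂ : ℕ) (hk : 1 ≤ k) (hc₂ : 1 ≤ c₂) :
    ∃ N : ℕ, 1 ≤ N ∧ ∀ n : ℕ, N ≤ n →
      (((Nat.ceil ((c₂:ℝ) * (n:ℝ) ^ ((2:ℝ) - 1/k)) + 1) *
        (Fintype.card (Sym2 (Fin n)) + 1) ^
          (Nat.ceil ((c₂:ℝ) * (n:ℝ) ^ ((2:ℝ) - 1/k))) : ℕ) : ℝ)
        ≤ (2:ℝ) ^ ((n:ℝ) ^ ((2:ℝ) - 1/(2*(k:ℝ)))) := by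
  have hkR : (0:ℝ) < (k:ℝ) := by exact_mod_cast hk
  have hkR1 : (1:ℝ) ≤ (k:ℝ) := by exact_mod_cast hk
  set δ : ℝ := 1/(8*k) with hδ
  have hδpos : 0 < δ := by rw [hδ]; positivity
  set C₄ : ℝ := 4 / (δ * Real.log 2) with hC₄
  have hlog2 : (0:ℝ) < Real.log 2 := Real.log_pos (by norm_num)
  have hC₄pos : 0 < C₄ := by rw [hC₄]; positivity
  set C₅ : ℝ := 5 * c₂ * C₄ with hC₅
  have hc₂R : (1:ℝ) ≤ (c₂:ℝ) := by exact_mod_cast hc₂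
  have hC₅pos : 0 < C₅ := by rw [hC₅]; positivity
  clear_value δ C₄ C₅
  refine ⟨max 2 ((Nat.ceil C₅ + 1) ^ (4 * k)), le_trans (by norm_num) (le_max_left _ _), ?_⟩
  intro n hn
  have hn2 : 2 ≤ n := le_trans (le_max_left _ _) hn
  have hnN : (Nat.ceil C₅ + 1) ^ (4 * k) ≤ n := le_trans (le_max_right _ _) hn
  have hn1R : (1:ℝ) ≤ (n:ℝ) := by exact_mod_cast le_trans (by norm_num) hn2
  have hnpos : (0:ℝ) < (n:ℝ) := lt_of_lt_of_le zero_lt_one hn1R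
  set x : ℝ := (c₂:ℝ) * (n:ℝ) ^ ((2:ℝ) - 1/k) with hx
  set β : ℕ := Nat.ceil x with hβ
  set M : ℕ := Fintype.card (Sym2 (Fin n)) + 1 with hM
  clear_value x β M
  have hexp1 : (1:ℝ) ≤ (2:ℝ) - 1/k := by
    have : 1/(k:ℝ) ≤ 1 := by rw [div_le_one hkR]; exact hkR1
    linarith
  have hnrpow1 : (1:ℝ) ≤ (n:ℝ) ^ ((2:ℝ) - 1/k) := by
    calc (1:ℝ) = (n:ℝ) ^ (0:ℝ) := (Real.rpow_zero _).symm
      _ ≤ (n:ℝ) ^ ((2:ℝ) - 1/k) := Real.rpow_le_rpow_of_exponent_le hn1R (by linarith)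
  have hxpos : (1:ℝ) ≤ x := by
    rw [hx]
    calc (1:ℝ) = 1 * 1 := by norm_num
      _ ≤ (c₂:ℝ) * (n:ℝ) ^ ((2:ℝ) - 1/k) :=
          mul_le_mul hc₂R hnrpow1 zero_le_one (by linarith)
  have hM2 : 2 ≤ M := by
    have : 1 ≤ Fintype.card (Sym2 (Fin n)) := (Fintype.card_pos_iff (α := Sym2 (Fin n))).mpr
      ⟨s((⟨0, by omega⟩ : Fin n), (⟨0, by omega⟩ : Fin n))⟩
    omega
  have hMle : M ≤ 4 * n ^ 2 := by
    have h1 : Fintype.card (Sym2 (Fin n)) = (n + 1).choose 2 := by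
      rw [Sym2.card, Fintype.card_fin]
    have h2 : (n + 1).choose 2 ≤ (n + 1) ^ 2 := Nat.choose_le_pow _ _
    have h3 : M ≤ (n+1)^2 + 1 := by omega
    refine h3.trans ?_
    nlinarith [hn2]
  have hβx : (β : ℝ) ≤ x + 1 := by
    rw [hβ]; exact le_of_lt (Nat.ceil_lt_add_one (by linarith))
  have h2β1 : ((2 * β + 1 : ℕ) : ℝ) ≤ 5 * x := by push_cast; linarith
  -- logarithm bound
  have h4n : (0:ℝ) < 4 * (n:ℝ)^2 := by positivity
  have hlogM : Real.logb 2 (4 * (n:ℝ)^2) ≤ C₄ * (n:ℝ) ^ (2*δ) := by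
    have hlog : Real.log (4 * (n:ℝ)^2) ≤ (4 * (n:ℝ)^2) ^ δ / δ :=
      Real.log_le_rpow_div (le_of_lt h4n) hδpos
    have hpow : (4 * (n:ℝ)^2) ^ δ ≤ 4 * (n:ℝ) ^ (2*δ) := by
      rw [Real.mul_rpow (by norm_num) (by positivity)]
      have h4 : (4:ℝ) ^ δ ≤ 4 := by
        nth_rewrite 2 [← Real.rpow_one (4:ℝ)]
        apply Real.rpow_le_rpow_of_exponent_le (by norm_num)
        rw [hδ, div_le_one (by positivity)]
        nlinarith
      have hsq : ((n:ℝ)^2) ^ δ = (n:ℝ) ^ (2*δ) := by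
        rw [← Real.rpow_natCast (n:ℝ) 2, ← Real.rpow_mul (le_of_lt hnpos)]
        norm_num
      rw [hsq]
      exact mul_le_mul_of_nonneg_right h4 (Real.rpow_nonneg (le_of_lt hnpos) _)
    have hlog2' : Real.log (4 * (n:ℝ)^2) ≤ 4 * (n:ℝ)^(2*δ) / δ := by
      refine hlog.trans ?_
      gcongr
    rw [Real.logb, div_le_iff₀ hlog2]
    refine hlog2'.trans (le_of_eq ?_)
    rw [hC₄]
    field_simp
  -- C₅ ≤ n^(1/(4k))
  have hC₅n : C₅ ≤ (n:ℝ) ^ ((1:ℝ)/(4*k)) := by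
    have hyn : ((Nat.ceil C₅ + 1 : ℕ) : ℝ) ^ (4*k : ℕ) ≤ (n:ℝ) := by
      exact_mod_cast hnN
    have hy0 : (0:ℝ) ≤ ((Nat.ceil C₅ + 1 : ℕ) : ℝ) := Nat.cast_nonneg _
    have h1 : ((Nat.ceil C₅ + 1 : ℕ) : ℝ)
        = (((Nat.ceil C₅ + 1 : ℕ) : ℝ) ^ (4*k : ℕ)) ^ ((1:ℝ)/(4*k)) := by
      rw [← Real.rpow_natCast (((Nat.ceil C₅ + 1 : ℕ) : ℝ)) (4*k), ← Real.rpow_mul hy0]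
      rw [show ((4*k : ℕ):ℝ) * ((1:ℝ)/(4*k)) = 1 by push_cast; field_simp]
      rw [Real.rpow_one]
    have h2 : C₅ ≤ ((Nat.ceil C₅ + 1 : ℕ) : ℝ) := by
      push_cast
      have := Nat.le_ceil C₅
      linarith
    refine h2.trans ?_
    rw [h1]
    exact Real.rpow_le_rpow (by positivity) hyn (by positivity)
  -- main exponent bound
  have hlogMnn : 0 ≤ Real.logb 2 (4 * (n:ℝ)^2) := by
    apply Real.logb_nonneg (by norm_num)
    nlinarith [hn1R]
  have hmain : ((2*β+1 : ℕ):ℝ) * Real.logb 2 (4*(n:ℝ)^2) ≤ (n:ℝ) ^ ((2:ℝ) - 1/(2*(k:ℝ))) := by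
    calc ((2*β+1 : ℕ):ℝ) * Real.logb 2 (4*(n:ℝ)^2)
        ≤ (5*x) * (C₄ * (n:ℝ) ^ (2*δ)) :=
          mul_le_mul h2β1 hlogM hlogMnn (by linarith)
      _ = C₅ * ((n:ℝ) ^ ((2:ℝ) - 1/k) * (n:ℝ) ^ (2*δ)) := by rw [hC₅, hx]; ring
      _ = C₅ * (n:ℝ) ^ ((2:ℝ) - 1/k + 2*δ) := by rw [← Real.rpow_add hnpos]
      _ ≤ (n:ℝ) ^ ((1:ℝ)/(4*k)) * (n:ℝ) ^ ((2:ℝ) - 1/k + 2*δ) := by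
          apply mul_le_mul_of_nonneg_right hC₅n (Real.rpow_nonneg (le_of_lt hnpos) _)
      _ = (n:ℝ) ^ ((1:ℝ)/(4*k) + ((2:ℝ) - 1/k + 2*δ)) := by rw [← Real.rpow_add hnpos]
      _ = (n:ℝ) ^ ((2:ℝ) - 1/(2*(k:ℝ))) := by
          congr 1
          rw [hδ]
          have hkne : (k:ℝ) ≠ 0 := ne_of_gt hkR
          field_simp
          ring
  -- assemble
  have hNat : (β+1) * M ^ β ≤ M ^ (2*β+1) := by
    calc (β+1) * M^β ≤ 2^(β+1) * M^β := by
          have : β + 1 ≤ 2^(β+1) := le_of_lt (Nat.lt_two_pow_self)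
          exact Nat.mul_le_mul_right _ this
      _ ≤ M^(β+1) * M^β := by
          have : 2^(β+1) ≤ M^(β+1) := Nat.pow_le_pow_left hM2 _
          exact Nat.mul_le_mul_right _ this
      _ = M^(2*β+1) := by rw [← pow_add]; ring_nf
  calc (((β + 1) * M ^ β : ℕ) : ℝ)
      ≤ ((M ^ (2*β+1) : ℕ) : ℝ) := by exact_mod_cast hNat
    _ = ((M:ℕ):ℝ) ^ (2*β+1 : ℕ) := by push_cast; ring
    _ ≤ (4*(n:ℝ)^2) ^ (2*β+1 : ℕ) := by
        apply pow_le_pow_left₀ (Nat.cast_nonneg _)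
        exact_mod_cast hMle
    _ = (2:ℝ) ^ (((2*β+1 : ℕ):ℝ) * Real.logb 2 (4*(n:ℝ)^2)) := by
        have h2L : (2:ℝ) ^ Real.logb 2 (4*(n:ℝ)^2) = 4*(n:ℝ)^2 :=
          Real.rpow_logb (by norm_num) (by norm_num) h4n
        symm
        rw [mul_comm, Real.rpow_mul (by norm_num : (0:ℝ) ≤ 2), h2L, Real.rpow_natCast]
    _ ≤ (2:ℝ) ^ ((n:ℝ) ^ ((2:ℝ) - 1/(2*(k:ℝ)))) :=
        Real.rpow_le_rpow_of_exponent_le one_le_two hmain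


open Finset in
theorem ufree_mono {G : SimpleGraph V} {k k' : ℕ} (h : UFree G k) (hkk : k ≤ k') :
    UFree G k' := by
  rintro ⟨X, Y, hd, hc, hsh⟩
  obtain ⟨Y', hY'sub, hY'c⟩ := Finset.exists_subset_card_eq (show k ≤ Y.card by omega)
  exact h ⟨X, Y', hd.mono_right hY'sub, hY'c, shatters_mono_right hsh hY'sub⟩

theorem part1 (P : ∀ n, Set (SimpleGraph (Fin n))) (hP : IsHereditary P)
    (hnot2 : ¬ HContained P 2) :
    ∃ k : ℕ, ∀ (n : ℕ) (G : SimpleGraph (Fin n)), G ∈ P n → UFree G k := by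
  classical
  have h2 : ∀ v : Fin 2 → Bool, ∃ q, ∃ H : SimpleGraph (Fin q), InHClass 2 v H ∧ H ∉ P q := by
    intro v
    by_contra hc
    push_neg at hc
    exact hnot2 ⟨v, fun q H h => hc q H h⟩
  choose q Gv hGv hGnv using h2
  set m : ℕ := Finset.univ.sup q with hm
  obtain ⟨K, hkey⟩ := key_s7 (2 * m)
  refine ⟨K, fun n G hG => ?_⟩
  rintro ⟨X, Y, hd, hYc, hsh⟩
  obtain ⟨X₀, Y₀, bX, bY, hd0, hY0c, hXh, hYh, hsh0⟩ :=
    hkey G X Y hd (le_of_eq hYc.symm) hsh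
  set v : Fin 2 → Bool := fun j => if j = 0 then bY else bX with hv
  obtain ⟨f, hf⟩ := hGv v
  have hf' : ∀ x y, x ≠ y → f x = f y →
      ((Gv v).Adj x y ↔ (if f x = 0 then bY else bX) = true) := by
    intro x y hxy hfe
    exact hf x y hxy hfe
  have hqm : q v ≤ m := hm ▸ Finset.le_sup (Finset.mem_univ v)
  obtain ⟨emb, hemb⟩ := embed G X₀ Y₀ bX bY hd0 hY0c hXh hYh hsh0 hqm (Gv v) f hf'
  have hmem := hP emb G hG
  rw [hemb] at hmem
  exact hGnv v hmem

/-- **Corollary (properties with colouring number 1).**  If `𝒫` is a hereditary property of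
graphs with `χ_c(𝒫) = 1`, then there is `k = k(𝒫)` such that every `G ∈ 𝒫` is `U(k)`-free,
and hence there is `ε > 0` with `|𝒫_n| ≤ 2 ^ (n ^ (2 - ε))` for all sufficiently large `n`. -/
theorem colouring_number_one (P : ∀ n, Set (SimpleGraph (Fin n)))
    (hP : IsHereditary P) (hcol : ColNumEq P 1) :
    (∃ k : ℕ, ∀ (n : ℕ) (G : SimpleGraph (Fin n)), G ∈ P n → UFree G k) ∧
    ∃ ε : ℝ, 0 < ε ∧ ∃ N : ℕ, ∀ n : ℕ, N ≤ n →
      (Nat.card (P n) : ℝ) ≤ (2 : ℝ) ^ ((n : ℝ) ^ ((2 : ℝ) - ε)) := by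
  classical
  have hnot2 : ¬ HContained P 2 := fun h => by have := hcol.2 2 h; omega
  obtain ⟨k₀, hk₀⟩ := part1 P hP hnot2
  set k := max k₀ 1 with hkd
  have hk1 : 1 ≤ k := le_max_right _ _
  have hfree : ∀ (n : ℕ) (G : SimpleGraph (Fin n)), G ∈ P n → UFree G k :=
    fun n G hG => ufree_mono (hk₀ n G hG) (le_max_left _ _)
  refine ⟨⟨k, hfree⟩, ?_⟩
  have hkpos : (0:ℝ) < (k:ℝ) := by exact_mod_cast hk1
  set c₂ : ℕ := k + k.factorial * (2 ^ k + k) with hc₂d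
  have hc₂1 : 1 ≤ c₂ := le_trans hk1 (by rw [hc₂d]; omega)
  obtain ⟨N, hN1, hN⟩ := final_asymp k c₂ hk1 hc₂1
  refine ⟨1/(2*(k:ℝ)), div_pos zero_lt_one (mul_pos two_pos hkpos), N, ?_⟩
  intro n hn
  have hb := count_bound P k n hk1 (le_trans hN1 hn) (fun G hG => hfree n G hG)
  have hcast : (Nat.card (P n) : ℝ) ≤
      (((Nat.ceil ((c₂:ℝ) * (n:ℝ) ^ ((2:ℝ) - 1/k)) + 1) *
        (Fintype.card (Sym2 (Fin n)) + 1) ^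
          (Nat.ceil ((c₂:ℝ) * (n:ℝ) ^ ((2:ℝ) - 1/k))) : ℕ) : ℝ) := by
    rw [hc₂d]
    exact_mod_cast hb
  exact hcast.trans (hN n hn)

end ABBM
end

section
/- For each α > 0 and t ∈ ℕ, there exist c = c₁(α,t) ∈ ℕ and δ = δ₁(c,α,t) > 0 such that the following holds. Let G be a bipartite graph with parts U and V satisfying |U| ≥ c, |V| = n, and |Γ(u) △ Γ(u')| ≥ αn for all distinct u, u' ∈ U. Then there exist a subset U' ⊆ U with |U'| = t and sets T_1, …, T_{2^t} ⊆ V with |T_j| ≥ δn for each j ∈ [2^t], such that: (a) if u, v ∈ T_j then Γ(u) ∩ U' = Γ(v) ∩ U'; and (b) if W = {w_1,…,w_{2^t}} with w_j ∈ T_j for each j ∈ [2^t], then W → U'. -/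
open scoped symmDiff
open scoped Classical

namespace ABBM

variable {V : Type*}

/-- `G` is a bipartite graph with parts `A` and `B`: the parts partition the vertex set
and every edge goes between them. -/
def IsBipartiteWith [Fintype V] [DecidableEq V] (G : SimpleGraph V) (A B : Finset V) : Prop :=
  Disjoint A B ∧ A ∪ B = Finset.univ ∧
  ∀ ⦃x y : V⦄, G.Adj x y → (x ∈ A ∧ y ∈ B) ∨ (x ∈ B ∧ y ∈ A)

section Helpers

variable {V : Type*} (G : SimpleGraph V)

noncomputable def ds (u v : V) (A : Finset V) : ℕ :=
  (A.filter fun w => ¬(G.Adj u w ↔ G.Adj v w)).card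

noncomputable def side (x : V) (e : Bool) (A : Finset V) : Finset V :=
  match e with
  | true => A.filter fun w => G.Adj x w
  | false => A.filter fun w => ¬ G.Adj x w

lemma side_subset (x : V) (e : Bool) (A : Finset V) : side G x e A ⊆ A := by
  cases e <;> exact Finset.filter_subset _ _

lemma side_mono (x : V) (e : Bool) {A B : Finset V} (h : A ⊆ B) :
    side G x e A ⊆ side G x e B := by
  cases e <;> exact Finset.filter_subset_filter _ h

lemma mem_side_true {x w : V} {A : Finset V} :
    w ∈ side G x true A ↔ w ∈ A ∧ G.Adj x w := Finset.mem_filter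

lemma mem_side_false {x w : V} {A : Finset V} :
    w ∈ side G x false A ↔ w ∈ A ∧ ¬ G.Adj x w := Finset.mem_filter

lemma side_card_add (x : V) (A : Finset V) :
    (side G x true A).card + (side G x false A).card = A.card :=
  Finset.card_filter_add_card_filter_not _

lemma side_card_add' (x : V) (e : Bool) (A : Finset V) :
    (side G x e A).card + (side G x (!e) A).card = A.card := by
  cases e
  · rw [Nat.add_comm]; exact side_card_add G x A
  · exact side_card_add G x A

lemma ds_comm (u v : V) (A : Finset V) : ds G u v A = ds G v u A := by
  unfold ds
  congr 1
  exact Finset.filter_congr fun w _ => by tauto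

lemma ds_le_card (u v : V) (A : Finset V) : ds G u v A ≤ A.card :=
  Finset.card_filter_le _ _

lemma ds_mono (u v : V) {A B : Finset V} (h : A ⊆ B) : ds G u v A ≤ ds G u v B :=
  Finset.card_le_card (Finset.filter_subset_filter _ h)

lemma ds_split (u v x : V) (A : Finset V) :
    ds G u v (side G x true A) + ds G u v (side G x false A) = ds G u v A := by
  unfold ds side
  simp only
  rw [Finset.filter_comm, Finset.filter_comm (fun w => ¬ G.Adj x w)]
  exact Finset.card_filter_add_card_filter_not _

lemma ds_split' (u v x : V) (e : Bool) (A : Finset V) :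
    ds G u v (side G x e A) + ds G u v (side G x (!e) A) = ds G u v A := by
  cases e
  · rw [Nat.add_comm]; exact ds_split G u v x A
  · exact ds_split G u v x A

lemma ds_le_ones (u v : V) (A : Finset V) :
    ds G u v A ≤ (side G u true A).card + (side G v true A).card := by
  refine le_trans (Finset.card_le_card ?_) (Finset.card_union_le _ _)
  intro w hw
  simp only [ds, Finset.mem_filter] at hw
  simp only [Finset.mem_union, mem_side_true]
  tauto

lemma ds_le_zeros (u v : V) (A : Finset V) :
    ds G u v A ≤ (side G u false A).card + (side G v false A).card := by
  refine le_trans (Finset.card_le_card ?_) (Finset.card_union_le _ _)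
  intro w hw
  simp only [ds, Finset.mem_filter] at hw
  simp only [Finset.mem_union, mem_side_false]
  tauto

end Helpers

section Ramsey

lemma fiber_pigeonhole {V κ : Type} [Fintype κ] (s : Finset V) (h : V → κ) (b : ℕ)
    (hcard : Fintype.card κ * b + 1 ≤ s.card) :
    ∃ c : κ, b + 1 ≤ (s.filter fun y => h y = c).card := by
  by_contra hc
  push_neg at hc
  have hsub : s ⊆ Finset.univ.biUnion fun c : κ => s.filter fun y => h y = c := by
    intro y hy
    exact Finset.mem_biUnion.2 ⟨h y, Finset.mem_univ _, Finset.mem_filter.2 ⟨hy, rfl⟩⟩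
  have h1 : s.card ≤ ∑ c : κ, (s.filter fun y => h y = c).card :=
    le_trans (Finset.card_le_card hsub) (Finset.card_biUnion_le)
  have h2 : ∑ c : κ, (s.filter fun y => h y = c).card ≤ ∑ _c : κ, b :=
    Finset.sum_le_sum fun c _ => Nat.lt_succ_iff.mp (hc c)
  simp only [Finset.sum_const, Finset.card_univ, smul_eq_mul] at h2
  omega

lemma ramsey_aux (q : ℕ) : ∀ L : ℕ, ∃ N : ℕ, ∀ (V κ : Type) [Fintype κ] [Nonempty κ]
    (s : Finset V) (χ : V → V → κ), Fintype.card κ ≤ q → N ≤ s.card →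
    ∃ (f : Fin L → V) (g : Fin L → κ), (∀ i, f i ∈ s) ∧ Function.Injective f ∧
      ∀ i j : Fin L, i < j → χ (f i) (f j) = g i := by
  intro L
  induction L with
  | zero =>
      refine ⟨0, fun V κ _ _ s χ _ _ => ⟨Fin.elim0, Fin.elim0, fun i => i.elim0,
        fun i => i.elim0, fun i => i.elim0⟩⟩
  | succ L ih =>
      obtain ⟨N₀, hN₀⟩ := ih
      refine ⟨q * N₀ + 1, fun V κ _ _ s χ hκ hs => ?_⟩
      have hne : s.Nonempty := Finset.card_pos.mp (by omega)
      obtain ⟨x, hx⟩ := hne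
      have hcard : Fintype.card κ * N₀ + 1 ≤ (s.erase x).card + 1 := by
        have := Finset.card_erase_of_mem hx
        have hq : Fintype.card κ * N₀ ≤ q * N₀ := Nat.mul_le_mul_right _ hκ
        omega
      have hfib : ∃ c : κ, N₀ ≤ ((s.erase x).filter fun y => χ x y = c).card := by
        rcases Nat.eq_zero_or_pos N₀ with h0 | hpos
        · exact ⟨Classical.arbitrary κ, by omega⟩
        · obtain ⟨M, rfl⟩ : ∃ M, N₀ = M + 1 := ⟨N₀ - 1, by omega⟩
          have hk1 : 1 ≤ Fintype.card κ := Fintype.card_pos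
          have he1 : Fintype.card κ * M + Fintype.card κ = Fintype.card κ * (M + 1) := by ring
          obtain ⟨c, hc⟩ := fiber_pigeonhole (s.erase x) (fun y => χ x y) M (by omega)
          exact ⟨c, hc⟩
      obtain ⟨c, hc⟩ := hfib
      set F := (s.erase x).filter fun y => χ x y = c with hF
      obtain ⟨f', g', hmem, hinj, hcol⟩ := hN₀ V κ F χ hκ hc
      refine ⟨Fin.cons x f', Fin.cons c g', ?_, ?_, ?_⟩
      · intro i
        refine Fin.cases ?_ ?_ i
        · simpa using hx
        · intro j
          simp only [Fin.cons_succ]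
          have := hmem j
          rw [hF] at this
          exact Finset.mem_of_mem_erase (Finset.mem_of_mem_filter _ this)
      · rw [Fin.cons_injective_iff]
        refine ⟨?_, hinj⟩
        rintro ⟨j, hj⟩
        have := hmem j
        rw [hF] at this
        have hxne := Finset.ne_of_mem_erase (Finset.mem_of_mem_filter _ this)
        exact hxne hj
      · intro i j hij
        rcases Fin.eq_zero_or_eq_succ i with rfl | ⟨i', rfl⟩
        · rcases Fin.eq_zero_or_eq_succ j with rfl | ⟨j', rfl⟩
          · exact absurd hij (lt_irrefl _)
          · simp only [Fin.cons_succ, Fin.cons_zero]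
            have := hmem j'
            rw [hF, Finset.mem_filter] at this
            exact this.2
        · rcases Fin.eq_zero_or_eq_succ j with rfl | ⟨j', rfl⟩
          · exact absurd hij (by simp [Fin.lt_def])
          · simp only [Fin.cons_succ]
            exact hcol i' j' (by
              rw [Fin.lt_def] at hij ⊢
              simpa using hij)

lemma ramsey_s9 (q m : ℕ) : ∃ N : ℕ, ∀ (V κ : Type) [Fintype κ] [Nonempty κ]
    (s : Finset V) (χ : V → V → κ), Fintype.card κ ≤ q →
    (∀ u v, χ u v = χ v u) → N ≤ s.card →
    ∃ S ⊆ s, m ≤ S.card ∧ ∃ c : κ, ∀ u ∈ S, ∀ v ∈ S, u ≠ v → χ u v = c := by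
  obtain ⟨N, hN⟩ := ramsey_aux q (q * m + 1)
  refine ⟨N, fun V κ _ _ s χ hκ hsymm hs => ?_⟩
  obtain ⟨f, g, hmem, hinj, hcol⟩ := hN V κ s χ hκ hs
  have hfib : ∃ c : κ, m + 1 ≤ (Finset.univ.filter fun i : Fin (q * m + 1) => g i = c).card := by
    refine fiber_pigeonhole (Finset.univ : Finset (Fin (q * m + 1))) g m ?_
    have := Nat.mul_le_mul_right m hκ
    simp only [Finset.card_univ, Fintype.card_fin]
    omega
  obtain ⟨c, hc⟩ := hfib
  set I := (Finset.univ.filter fun i : Fin (q * m + 1) => g i = c) with hI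
  refine ⟨I.image f, ?_, ?_, c, ?_⟩
  · intro y hy
    obtain ⟨i, _, rfl⟩ := Finset.mem_image.mp hy
    exact hmem i
  · rw [Finset.card_image_of_injective _ hinj]
    omega
  · intro u hu v hv huv
    obtain ⟨i, hi, rfl⟩ := Finset.mem_image.mp hu
    obtain ⟨j, hj, rfl⟩ := Finset.mem_image.mp hv
    rw [hI, Finset.mem_filter] at hi hj
    have hij : i ≠ j := fun h => huv (by rw [h])
    rcases lt_or_gt_of_ne hij with h | h
    · rw [hcol i j h, hi.2]
    · rw [hsymm, hcol j i h, hj.2]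

end Ramsey

section Level

lemma levelL (ι : Type) [Fintype ι] [Nonempty ι] :
    ∀ (r m : ℕ), ∃ M : ℕ, ∀ (V : Type) (G : SimpleGraph V) (A : ι → Finset V)
      (J : Finset V) (β N : ℝ),
      0 < β → β ≤ N →
      (∀ i, ((A i).card : ℝ) ≤ N) →
      ((∑ i, ((A i).card : ℝ)) ≤ r * (β / 8)) →
      (∀ i, ∀ u ∈ J, ∀ v ∈ J, u ≠ v →
        β - 2 * β / (25 * N) * (N - (A i).card) ≤ (ds G u v (A i) : ℝ)) →
      M ≤ J.card →
      ∃ x ∈ J, ∃ J' ⊆ J.erase x, m ≤ J'.card ∧ ∃ B : ι → Bool → Finset V,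
        (∀ i e, B i e ⊆ side G x e (A i)) ∧
        (∀ i e, β / 8 ≤ ((B i e).card : ℝ)) ∧
        (∀ i e, ∀ u ∈ J', ∀ v ∈ J', u ≠ v →
          β ^ 2 / (100 * N) ≤ (ds G u v (B i e) : ℝ)) := by
  intro r
  induction r with
  | zero =>
      intro m
      refine ⟨2, fun V G A J β N hβ hβN hA hSum hd hJ => ?_⟩
      exfalso
      have hN : (0:ℝ) < N := lt_of_lt_of_le hβ hβN
      obtain ⟨u, hu, v, hv, huv⟩ := Finset.one_lt_card.mp (by omega : 1 < J.card)
      obtain ⟨i⟩ := ‹Nonempty ι›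
      have hA0 : ((A i).card : ℝ) ≤ 0 := by
        have hle : ((A i).card : ℝ) ≤ ∑ j, ((A j).card : ℝ) :=
          Finset.single_le_sum (f := fun j => ((A j).card : ℝ))
            (fun j _ => Nat.cast_nonneg _) (Finset.mem_univ i)
        have : (0:ℕ) * (β / 8) = 0 := by norm_num
        simp only [Nat.cast_zero, zero_mul] at hSum
        linarith
      have hA0' : ((A i).card : ℝ) = 0 := le_antisymm hA0 (Nat.cast_nonneg _)
      have hds : (ds G u v (A i) : ℝ) ≤ 0 := by
        have := ds_le_card G u v (A i)
        have : ((ds G u v (A i) : ℕ) : ℝ) ≤ ((A i).card : ℝ) := Nat.cast_le.mpr this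
        linarith
      have hdl := hd i u hu v hv huv
      have heq : 2 * β / (25 * N) * (N - ((A i).card : ℝ)) = 2 * β / 25 := by
        rw [hA0']
        field_simp
        ring
      rw [heq] at hdl
      linarith
  | succ r ih =>
      intro m
      obtain ⟨M₀, hM₀⟩ := ih m
      set k := Fintype.card ι with hk
      set q := Fintype.card (ι → Bool → Bool) with hq
      obtain ⟨RN, hRN⟩ := ramsey_s9 q (max m M₀)
      refine ⟨max (2 * k + 2) (RN + 1), fun V G A J β N hβ hβN hA hSum hd hJ => ?_⟩
      have hN : (0:ℝ) < N := lt_of_lt_of_le hβ hβN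
      -- pairwise distance is at least β/2 inside each atom
      have hd2 : ∀ i, ∀ u ∈ J, ∀ v ∈ J, u ≠ v → β / 2 ≤ (ds G u v (A i) : ℝ) := by
        intro i u hu v hv huv
        have h := hd i u hu v hv huv
        have hc0 : (0:ℝ) ≤ (A i).card := Nat.cast_nonneg _
        have hq0 : (0:ℝ) ≤ 2 * β / (25 * N) := by positivity
        have h2 : N - ((A i).card : ℝ) ≤ N := by linarith
        have h3 : 2 * β / (25 * N) * (N - ((A i).card : ℝ)) ≤ 2 * β / (25 * N) * N :=
          mul_le_mul_of_nonneg_left h2 hq0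
        have h4 : 2 * β / (25 * N) * N = 2 * β / 25 := by field_simp
        linarith
      -- the set of vertices that fail to split some atom has size at most 2k
      set Bad : Finset V := J.filter (fun u => ∃ i : ι,
        ((side G u true (A i)).card : ℝ) < β / 8 ∨
        ((side G u false (A i)).card : ℝ) < β / 8) with hBadDef
      have hBadcard : Bad.card ≤ 2 * k := by
        have hsub : Bad ⊆ Finset.univ.biUnion (fun i : ι =>
            (J.filter fun u => ((side G u true (A i)).card : ℝ) < β / 8) ∪
            (J.filter fun u => ((side G u false (A i)).card : ℝ) < β / 8)) := by
          intro u hu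
          rw [hBadDef, Finset.mem_filter] at hu
          obtain ⟨huJ, i, hi⟩ := hu
          refine Finset.mem_biUnion.2 ⟨i, Finset.mem_univ _, ?_⟩
          rcases hi with hi | hi
          · exact Finset.mem_union_left _ (Finset.mem_filter.2 ⟨huJ, hi⟩)
          · exact Finset.mem_union_right _ (Finset.mem_filter.2 ⟨huJ, hi⟩)
        refine le_trans (Finset.card_le_card hsub) (le_trans Finset.card_biUnion_le ?_)
        have hone : ∀ i : ι,
            (J.filter fun u => ((side G u true (A i)).card : ℝ) < β / 8).card ≤ 1 := by
          intro i
          rw [Finset.card_le_one]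
          intro a ha b hb
          by_contra hab
          rw [Finset.mem_filter] at ha hb
          have h1 := hd2 i a ha.1 b hb.1 hab
          have h2 := ds_le_ones G a b (A i)
          have h2' : ((ds G a b (A i) : ℕ) : ℝ) ≤
              ((side G a true (A i)).card : ℝ) + ((side G b true (A i)).card : ℝ) := by
            exact_mod_cast h2
          linarith [ha.2, hb.2]
        have hzero : ∀ i : ι,
            (J.filter fun u => ((side G u false (A i)).card : ℝ) < β / 8).card ≤ 1 := by
          intro i
          rw [Finset.card_le_one]
          intro a ha b hb
          by_contra hab
          rw [Finset.mem_filter] at ha hb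
          have h1 := hd2 i a ha.1 b hb.1 hab
          have h2 := ds_le_zeros G a b (A i)
          have h2' : ((ds G a b (A i) : ℕ) : ℝ) ≤
              ((side G a false (A i)).card : ℝ) + ((side G b false (A i)).card : ℝ) := by
            exact_mod_cast h2
          linarith [ha.2, hb.2]
        calc ∑ i : ι, ((J.filter fun u => ((side G u true (A i)).card : ℝ) < β / 8) ∪
                (J.filter fun u => ((side G u false (A i)).card : ℝ) < β / 8)).card
            ≤ ∑ _i : ι, 2 := by
              refine Finset.sum_le_sum fun i _ => ?_
              refine le_trans (Finset.card_union_le _ _) ?_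
              have := hone i
              have := hzero i
              omega
          _ = 2 * k := by simp [hk, mul_comm]
      -- pick a vertex splitting all atoms
      have hxex : ∃ x ∈ J, x ∉ Bad := by
        have h1 : 1 ≤ J.card - Bad.card := by
          have h2 : Bad ⊆ J := Finset.filter_subset _ _
          have h3 : Bad.card ≤ J.card := Finset.card_le_card h2
          have h4 : max (2 * k + 2) (RN + 1) ≤ J.card := hJ
          have h5 : 2 * k + 2 ≤ J.card := le_trans (le_max_left _ _) h4
          omega
        have : 0 < (J \ Bad).card := by
          have := Finset.le_card_sdiff Bad J
          omega
        obtain ⟨x, hx⟩ := Finset.card_pos.mp this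
        rw [Finset.mem_sdiff] at hx
        exact ⟨x, hx.1, hx.2⟩
      obtain ⟨x, hxJ, hxBad⟩ := hxex
      have hgood : ∀ (i : ι) (e : Bool), β / 8 ≤ ((side G x e (A i)).card : ℝ) := by
        intro i e
        rw [hBadDef, Finset.mem_filter] at hxBad
        push_neg at hxBad
        have := hxBad hxJ i
        cases e
        · exact this.2
        · exact this.1
      -- Ramsey step
      set χ : V → V → (ι → Bool → Bool) := fun u v => fun i e =>
        decide (β ^ 2 / (100 * N) ≤ (ds G u v (side G x e (A i)) : ℝ)) with hχ
      have hsymm : ∀ u v, χ u v = χ v u := by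
        intro u v
        funext i e
        rw [hχ]
        simp only
        rw [ds_comm]
      have hErase : RN ≤ (J.erase x).card := by
        have := Finset.card_erase_of_mem hxJ
        have h4 : RN + 1 ≤ J.card := le_trans (le_max_right _ _) hJ
        omega
      obtain ⟨S, hSsub, hScard, c, hc⟩ := hRN V (ι → Bool → Bool)
        (J.erase x) χ (le_refl q) hsymm hErase
      have hSJ : ∀ u ∈ S, u ∈ J := fun u hu => Finset.mem_of_mem_erase (hSsub hu)
      have hSJ' : S ⊆ J := fun u hu => hSJ u hu
      by_cases hadv : ∀ (i : ι) (e : Bool), c i e = true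
      · -- advance: all children are good
        refine ⟨x, hxJ, S, hSsub, le_trans (le_max_left _ _) hScard,
          fun i e => side G x e (A i), fun i e => le_refl _, hgood, ?_⟩
        intro i e u hu v hv huv
        have h1 := congrFun (congrFun (hc u hu v hv huv) i) e
        rw [hadv i e] at h1
        have := of_decide_eq_true h1
        exact this
      · -- shrink: some child is bad for all pairs; recurse
        push_neg at hadv
        obtain ⟨i₀, e₀, hce⟩ := hadv
        have hce2 : c i₀ e₀ = false := Bool.eq_false_iff.mpr hce
        set A' : ι → Finset V := Function.update A i₀ (side G x (!e₀) (A i₀)) with hA'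
        have hA'sub : ∀ i, A' i ⊆ A i := by
          intro i
          rcases eq_or_ne i i₀ with rfl | hne
          · rw [hA', Function.update_self]
            exact side_subset _ _ _ _
          · rw [hA', Function.update_of_ne hne]
        have hsplitc : ((side G x e₀ (A i₀)).card : ℝ) + ((side G x (!e₀) (A i₀)).card : ℝ)
            = ((A i₀).card : ℝ) := by
          exact_mod_cast congrArg (Nat.cast (R := ℝ)) (side_card_add' G x e₀ (A i₀))
        -- apply induction hypothesis
        have hres := hM₀ V G A' S β N hβ hβN ?_ ?_ ?_ ?_
        · obtain ⟨x', hx'S, J', hJ'sub, hJ'card, B, hBsub, hBcard, hBds⟩ := hres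
          refine ⟨x', hSJ x' hx'S, J', ?_, hJ'card, B, ?_, hBcard, hBds⟩
          · refine subset_trans hJ'sub ?_
            exact Finset.erase_subset_erase _ hSJ'
          · intro i e
            exact subset_trans (hBsub i e) (side_mono G x' e (hA'sub i))
        · -- cards bounded by N
          intro i
          have := Finset.card_le_card (hA'sub i)
          have : ((A' i).card : ℝ) ≤ ((A i).card : ℝ) := Nat.cast_le.mpr this
          linarith [hA i]
        · -- total size decreased
          have hsum : (∑ i, ((A' i).card : ℝ)) =
              ((side G x (!e₀) (A i₀)).card : ℝ) + ∑ i ∈ Finset.univ \ {i₀}, ((A i).card : ℝ) := by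
            have hcongr : (∑ i, ((A' i).card : ℝ)) =
                ∑ i, Function.update (fun j => ((A j).card : ℝ)) i₀
                  ((side G x (!e₀) (A i₀)).card : ℝ) i := by
              refine Finset.sum_congr rfl fun j _ => ?_
              rcases eq_or_ne j i₀ with rfl | hne
              · rw [hA', Function.update_self, Function.update_self]
              · rw [hA', Function.update_of_ne hne, Function.update_of_ne hne]
            rw [hcongr]
            exact Finset.sum_update_of_mem (Finset.mem_univ i₀) _ _
          have hsum2 : (∑ i, ((A i).card : ℝ)) =
              ((A i₀).card : ℝ) + ∑ i ∈ Finset.univ \ {i₀}, ((A i).card : ℝ) := by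
            have := Finset.sum_update_of_mem (Finset.mem_univ i₀) (fun i => ((A i).card : ℝ))
              ((A i₀).card : ℝ)
            have heq : Function.update (fun i => ((A i).card : ℝ)) i₀ ((A i₀).card : ℝ)
                = fun i => ((A i).card : ℝ) := by
              funext j
              rcases eq_or_ne j i₀ with rfl | hne
              · rw [Function.update_self]
              · rw [Function.update_of_ne hne]
            rw [heq] at this
            exact this
          have hbadsize := hgood i₀ e₀
          have hcast : ((r:ℝ) + 1) * (β / 8) = (((r+1 : ℕ)):ℝ) * (β / 8) := by push_cast; ring
          have hSum' : (∑ i, ((A i).card : ℝ)) ≤ ((r:ℝ) + 1) * (β / 8) := by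
            rw [hcast]; exact_mod_cast hSum
          rw [hsum]
          have : ((side G x (!e₀) (A i₀)).card : ℝ) ≤ ((A i₀).card : ℝ) - β / 8 := by
            linarith
          push_cast
          linarith [hsum2]
        · -- the distance invariant
          intro i u hu v hv huv
          rcases eq_or_ne i i₀ with rfl | hne
          · rw [hA', Function.update_self]
            have hsplit := ds_split' G u v x e₀ (A i)
            have hsplitR : ((ds G u v (side G x e₀ (A i)) : ℕ) : ℝ) +
                ((ds G u v (side G x (!e₀) (A i)) : ℕ) : ℝ) = ((ds G u v (A i) : ℕ) : ℝ) := by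
              exact_mod_cast congrArg (Nat.cast (R := ℝ)) hsplit
            have hsmall : ((ds G u v (side G x e₀ (A i)) : ℕ) : ℝ) < β ^ 2 / (100 * N) := by
              have h1 := congrFun (congrFun (hc u hu v hv huv) i) e₀
              rw [hce2] at h1
              have := of_decide_eq_false h1
              exact not_le.mp this
            have hdA := hd i u (hSJ u hu) v (hSJ v hv) huv
            set a : ℝ := ((A i).card : ℝ)
            set b : ℝ := ((side G x e₀ (A i)).card : ℝ)
            set c' : ℝ := ((side G x (!e₀) (A i)).card : ℝ)
            have hb : β / 8 ≤ b := hgood i e₀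
            have habc : b + c' = a := hsplitc
            have he1 : 2 * β / (25 * N) * (β / 8) = β ^ 2 / (100 * N) := by
              field_simp
              ring
            have he2 : 2 * β / (25 * N) * (β / 8) ≤ 2 * β / (25 * N) * b := by
              have : (0:ℝ) ≤ 2 * β / (25 * N) := by positivity
              exact mul_le_mul_of_nonneg_left hb this
            have he3 : 2 * β / (25 * N) * (N - c') =
                2 * β / (25 * N) * (N - a) + 2 * β / (25 * N) * b := by
              rw [← habc]; ring
            linarith
          · rw [hA', Function.update_of_ne hne]
            exact hd i u (hSJ u hu) v (hSJ v hv) huv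
        · -- pool size
          exact le_trans (le_max_right _ _) hScard

end Level

section Outer

/-- the final size bound after `s` levels -/
noncomputable def lowb : ℕ → ℝ → ℝ → ℝ
  | 0, β, _ => β / 2
  | (s+1), β, N => lowb s (β ^ 2 / (100 * N)) N

lemma lowb_pos : ∀ (s : ℕ) (β N : ℝ), 0 < β → 0 < N → 0 < lowb s β N := by
  intro s
  induction s with
  | zero => intro β N hβ _; simpa [lowb] using by linarith
  | succ s ih =>
      intro β N hβ hN
      have : 0 < β ^ 2 / (100 * N) := by positivity
      simpa [lowb] using ih _ N this hN

lemma lowb_scale : ∀ (s : ℕ) (β N c : ℝ), 0 < c → 0 < N →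
    lowb s (β * c) (N * c) = lowb s β N * c := by
  intro s
  induction s with
  | zero => intro β N c hc hN; simp [lowb]; ring
  | succ s ih =>
      intro β N c hc hN
      have harg : (β * c) ^ 2 / (100 * (N * c)) = β ^ 2 / (100 * N) * c := by
        field_simp
      simp only [lowb, harg]
      exact ih _ N c hc hN

lemma outer : ∀ (s : ℕ) (ι : Type), ∀ (_ : Fintype ι) (_ : Nonempty ι) (Q : ℕ),
    ∃ C : ℕ, ∀ (V : Type) (G : SimpleGraph V) (A : ι → Finset V) (J : Finset V) (β N : ℝ),
      0 < β → β ≤ N → N ≤ Q * β →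
      (∀ i, ((A i).card : ℝ) ≤ N) →
      (∀ i, ∀ u ∈ J, ∀ v ∈ J, u ≠ v →
        β - 2 * β / (25 * N) * (N - (A i).card) ≤ (ds G u v (A i) : ℝ)) →
      C ≤ J.card →
      ∃ (x : Fin s → V) (B : ι → (Fin s → Bool) → Finset V),
        Function.Injective x ∧ (∀ l, x l ∈ J) ∧
        (∀ i p, B i p ⊆ A i) ∧
        (∀ i p w, w ∈ B i p → ∀ l, (G.Adj (x l) w ↔ p l = true)) ∧
        (∀ i p, lowb s β N ≤ ((B i p).card : ℝ)) := by
  intro s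
  induction s with
  | zero =>
      intro ι instF instN Q
      refine ⟨2, fun V G A J β N hβ hβN hQβ hA hd hJ => ?_⟩
      have hN : (0:ℝ) < N := lt_of_lt_of_le hβ hβN
      refine ⟨Fin.elim0, fun i _ => A i, fun a => a.elim0, fun l => l.elim0,
        fun i p => subset_refl _, fun i p w hw l => l.elim0, ?_⟩
      intro i p
      obtain ⟨u, hu, v, hv, huv⟩ := Finset.one_lt_card.mp (by omega : 1 < J.card)
      have h := hd i u hu v hv huv
      have hdc : ((ds G u v (A i) : ℕ) : ℝ) ≤ ((A i).card : ℝ) :=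
        Nat.cast_le.mpr (ds_le_card G u v (A i))
      have hc0 : (0:ℝ) ≤ (A i).card := Nat.cast_nonneg _
      have hq0 : (0:ℝ) ≤ 2 * β / (25 * N) := by positivity
      have h2 : N - ((A i).card : ℝ) ≤ N := by linarith
      have h3 : 2 * β / (25 * N) * (N - ((A i).card : ℝ)) ≤ 2 * β / (25 * N) * N :=
        mul_le_mul_of_nonneg_left h2 hq0
      have h4 : 2 * β / (25 * N) * N = 2 * β / 25 := by field_simp
      simp only [lowb]
      linarith
  | succ s ih =>
      intro ι instF instN Q
      obtain ⟨C₀, hC₀⟩ := ih (ι × Bool) inferInstance inferInstance (100 * Q * Q)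
      obtain ⟨M, hM⟩ := levelL ι (8 * Fintype.card ι * Q) C₀
      refine ⟨M, fun V G A J β N hβ hβN hQβ hA hd hJ => ?_⟩
      have hN : (0:ℝ) < N := lt_of_lt_of_le hβ hβN
      have hSum : (∑ i, ((A i).card : ℝ)) ≤ ((8 * Fintype.card ι * Q : ℕ) : ℝ) * (β / 8) := by
        have h1 : (∑ i, ((A i).card : ℝ)) ≤ ∑ _i : ι, N := Finset.sum_le_sum fun i _ => hA i
        have h2 : (∑ _i : ι, N) = (Fintype.card ι : ℝ) * N := by
          rw [Finset.sum_const, Finset.card_univ, nsmul_eq_mul]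
        have h3 : (Fintype.card ι : ℝ) * N ≤ (Fintype.card ι : ℝ) * ((Q : ℝ) * β) := by
          refine mul_le_mul_of_nonneg_left ?_ (Nat.cast_nonneg _)
          exact_mod_cast hQβ
        have h4 : ((8 * Fintype.card ι * Q : ℕ) : ℝ) * (β / 8)
            = (Fintype.card ι : ℝ) * ((Q:ℝ) * β) := by
          push_cast
          ring
        linarith
      obtain ⟨x, hxJ, J', hJ'sub, hJ'card, B₀, hB₀sub, hB₀card, hB₀ds⟩ :=
        hM V G A J β N hβ hβN hA hSum hd hJ
      set β' : ℝ := β ^ 2 / (100 * N) with hβ'def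
      have hβ'pos : 0 < β' := by rw [hβ'def]; positivity
      have hβ'N : β' ≤ N := by
        rw [hβ'def, div_le_iff₀ (by positivity)]
        nlinarith
      have hQ' : N ≤ ((100 * Q * Q : ℕ) : ℝ) * β' := by
        rw [hβ'def]
        have hQβ' : N ≤ (Q : ℝ) * β := hQβ
        have h100 : ((100 * Q * Q : ℕ) : ℝ) = 100 * (Q:ℝ) * (Q:ℝ) := by push_cast; ring
        rw [h100]
        have hQ0 : (0:ℝ) ≤ (Q:ℝ) := Nat.cast_nonneg _
        have key : 100 * (Q:ℝ) * (Q:ℝ) * (β ^ 2 / (100 * N)) = ((Q:ℝ) * β) ^ 2 / N := by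
          field_simp
        rw [key, le_div_iff₀ hN]
        nlinarith
      have hres := hC₀ V G (fun ie => B₀ ie.1 ie.2) J' β' N hβ'pos hβ'N hQ' ?_ ?_ hJ'card
      · obtain ⟨x', B', hx'inj, hx'mem, hB'sub, hB'adj, hB'card⟩ := hres
        refine ⟨Fin.cons x x', fun i p => B' (i, p 0) (fun l => p l.succ), ?_, ?_, ?_, ?_, ?_⟩
        · rw [Fin.cons_injective_iff]
          refine ⟨?_, hx'inj⟩
          rintro ⟨l, hl⟩
          have := Finset.ne_of_mem_erase (hJ'sub (hx'mem l))
          exact this hl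
        · intro l
          refine Fin.cases ?_ ?_ l
          · simpa using hxJ
          · intro l'
            simp only [Fin.cons_succ]
            exact Finset.mem_of_mem_erase (hJ'sub (hx'mem l'))
        · intro i p
          refine subset_trans (hB'sub (i, p 0) _) ?_
          exact subset_trans (hB₀sub i (p 0)) (side_subset G x (p 0) (A i))
        · intro i p w hw l
          refine Fin.cases ?_ ?_ l
          · rw [Fin.cons_zero]
            have hwside : w ∈ side G x (p 0) (A i) :=
              (hB₀sub i (p 0)) ((hB'sub (i, p 0) _) hw)
            cases hp : p 0
            · rw [hp] at hwside
              exact iff_of_false ((mem_side_false G).mp hwside).2 (by simp)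
            · rw [hp] at hwside
              exact iff_of_true ((mem_side_true G).mp hwside).2 rfl
          · intro l'
            rw [Fin.cons_succ]
            exact hB'adj (i, p 0) (fun l => p l.succ) w hw l'
        · intro i p
          have := hB'card (i, p 0) (fun l => p l.succ)
          simpa [lowb] using this
      · -- cards of the new atoms bounded by N
        intro ie
        have h1 : B₀ ie.1 ie.2 ⊆ A ie.1 :=
          subset_trans (hB₀sub ie.1 ie.2) (side_subset G x ie.2 (A ie.1))
        have h2 : ((B₀ ie.1 ie.2).card : ℝ) ≤ ((A ie.1).card : ℝ) :=
          Nat.cast_le.mpr (Finset.card_le_card h1)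
        linarith [hA ie.1]
      · -- distance invariant for the new atoms
        intro ie u hu v hv huv
        have h1 := hB₀ds ie.1 ie.2 u hu v hv huv
        have h2 : ((B₀ ie.1 ie.2).card : ℝ) ≤ N := by
          have hsub : B₀ ie.1 ie.2 ⊆ A ie.1 :=
            subset_trans (hB₀sub ie.1 ie.2) (side_subset G x ie.2 (A ie.1))
          have hcast : ((B₀ ie.1 ie.2).card : ℝ) ≤ ((A ie.1).card : ℝ) :=
            Nat.cast_le.mpr (Finset.card_le_card hsub)
          linarith [hA ie.1]
        have h3 : (0:ℝ) ≤ 2 * β' / (25 * N) * (N - ((B₀ ie.1 ie.2).card : ℝ)) := by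
          have ha : (0:ℝ) ≤ 2 * β' / (25 * N) := by positivity
          have hb : (0:ℝ) ≤ N - ((B₀ ie.1 ie.2).card : ℝ) := by linarith
          exact mul_nonneg ha hb
        linarith

end Outer

/-- **Lemma (key lemma; sparsening method).**  For each `α > 0` and `t ∈ ℕ` there exist
`c ∈ ℕ` and `δ > 0` such that: if `G` is a bipartite graph with parts `U`, `W`, where
`|U| ≥ c`, `|W| = n`, and `|Γ(u) ∆ Γ(u')| ≥ α n` for all distinct `u, u' ∈ U`, then there
are `U' ⊆ U` with `|U'| = t` and sets `T 1, …, T (2^t) ⊆ W` with `|T j| ≥ δ n` such that: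
(a) all vertices of each `T j` have the same neighbourhood in `U'`; and
(b) every transversal `{w 1, …, w (2^t)}` with `w j ∈ T j` shatters `U'`. -/
theorem key_lemma (α : ℝ) (hα : 0 < α) (t : ℕ) :
    ∃ c : ℕ, ∃ δ : ℝ, 0 < δ ∧
      ∀ (V : Type) [Fintype V] [DecidableEq V] (G : SimpleGraph V)
        (U W : Finset V) (n : ℕ),
        IsBipartiteWith G U W → c ≤ U.card → W.card = n →
        (∀ u ∈ U, ∀ u' ∈ U, u ≠ u' →
          α * (n : ℝ) ≤ ((nbr G u ∆ nbr G u').card : ℝ)) →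
        ∃ U' ⊆ U, U'.card = t ∧
          ∃ T : Fin (2 ^ t) → Finset V,
            (∀ j, T j ⊆ W ∧ δ * (n : ℝ) ≤ ((T j).card : ℝ)) ∧
            (∀ j, ∀ u ∈ T j, ∀ v ∈ T j, nbr G u ∩ U' = nbr G v ∩ U') ∧
            (∀ w : Fin (2 ^ t) → V, (∀ j, w j ∈ T j) →
              Shatters G (Finset.univ.image w) U') := by
  classical
  set Q : ℕ := ⌈1 / α⌉₊ with hQdef
  obtain ⟨C, hC⟩ := outer t PUnit inferInstance ⟨PUnit.unit⟩ Q
  refine ⟨max C (max 2 t), lowb t α 1, lowb_pos t α 1 hα one_pos, ?_⟩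
  intro V _ _ G U W n hbip hcU hcW hdist
  have hj0 : (0 : ℕ) < 2 ^ t := Nat.pow_pos (by norm_num)
  rcases Nat.eq_zero_or_pos n with hn0 | hn1
  · -- degenerate case : no vertices on the W side
    obtain ⟨U', hU'sub, hU'card⟩ := Finset.exists_subset_card_eq
      (show t ≤ U.card from le_trans (le_trans (le_max_right 2 t) (le_max_right C _)) hcU)
    refine ⟨U', hU'sub, hU'card, fun _ => ∅, ?_, ?_, ?_⟩
    · intro j
      refine ⟨Finset.empty_subset _, ?_⟩
      rw [hn0]
      simp
    · intro j u hu
      exact absurd hu (Finset.notMem_empty _)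
    · intro w hw
      exact absurd (hw ⟨0, hj0⟩) (Finset.notMem_empty _)
  · -- main case
    have hnR : (0:ℝ) < n := by exact_mod_cast hn1
    -- symmetric difference of neighbourhoods is the disagreement set inside W
    have hmemnbr : ∀ (a b : V), b ∈ nbr G a ↔ G.Adj a b := by
      intro a b
      simp [nbr]
    have hsd : ∀ u ∈ U, ∀ v ∈ U,
        (nbr G u ∆ nbr G v) = W.filter fun w => ¬(G.Adj u w ↔ G.Adj v w) := by
      intro u hu v hv
      ext b
      rw [Finset.mem_symmDiff, Finset.mem_filter]
      constructor
      · rintro (⟨h1, h2⟩ | ⟨h1, h2⟩)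
        · rw [hmemnbr] at h1 h2
          refine ⟨?_, by tauto⟩
          rcases hbip.2.2 h1 with ⟨_, hbW⟩ | ⟨huW, _⟩
          · exact hbW
          · exact absurd hu (Finset.disjoint_right.mp hbip.1 huW)
        · rw [hmemnbr] at h1 h2
          refine ⟨?_, by tauto⟩
          rcases hbip.2.2 h1 with ⟨_, hbW⟩ | ⟨hvW, _⟩
          · exact hbW
          · exact absurd hv (Finset.disjoint_right.mp hbip.1 hvW)
      · rintro ⟨hbW, hne⟩
        simp only [hmemnbr]
        tauto
    have hdsW : ∀ u ∈ U, ∀ v ∈ U, (ds G u v W : ℝ) = ((nbr G u ∆ nbr G v).card : ℝ) := by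
      intro u hu v hv
      rw [ds, hsd u hu v hv]
    -- if α > 1 the hypotheses are contradictory
    rcases le_or_gt α 1 with hα1 | hα1
    · -- the real work
      have hres := hC V G (fun _ => W) U (α * n) (n : ℝ) (by positivity) ?_ ?_ ?_ ?_
        (le_trans (le_max_left _ _) hcU)
      · obtain ⟨x, B, hxinj, hxmem, hBsub, hBadj, hBcard⟩ := hres
        set e : (Fin t → Bool) ≃ Fin (2 ^ t) :=
          (Equiv.arrowCongr (Equiv.refl (Fin t)) finTwoEquiv.symm).trans finFunctionFinEquiv
          with hedef
        refine ⟨Finset.univ.image x, ?_, ?_, fun j => B PUnit.unit (e.symm j), ?_, ?_, ?_⟩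
        · intro b hb
          obtain ⟨l, _, rfl⟩ := Finset.mem_image.mp hb
          exact hxmem l
        · rw [Finset.card_image_of_injective _ hxinj, Finset.card_univ, Fintype.card_fin]
        · intro j
          refine ⟨hBsub PUnit.unit (e.symm j), ?_⟩
          have h1 := hBcard PUnit.unit (e.symm j)
          have h2 : lowb t (α * n) (n : ℝ) = lowb t α 1 * n := by
            have := lowb_scale t α 1 (n : ℝ) hnR one_pos
            rw [one_mul] at this
            exact this
          rw [h2] at h1
          exact h1
        · -- (a) equal neighbourhoods in U'
          intro j u hu v hv
          have hiff : ∀ l : Fin t, (G.Adj u (x l) ↔ G.Adj v (x l)) := by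
            intro l
            have h1 := hBadj PUnit.unit (e.symm j) u hu l
            have h2 := hBadj PUnit.unit (e.symm j) v hv l
            rw [G.adj_comm u (x l), G.adj_comm v (x l)]
            rw [h1, h2]
          ext b
          simp only [Finset.mem_inter]
          constructor
          · rintro ⟨h1, h2⟩
            refine ⟨?_, h2⟩
            obtain ⟨l, _, rfl⟩ := Finset.mem_image.mp h2
            rw [hmemnbr] at h1 ⊢
            exact (hiff l).mp h1
          · rintro ⟨h1, h2⟩
            refine ⟨?_, h2⟩
            obtain ⟨l, _, rfl⟩ := Finset.mem_image.mp h2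
            rw [hmemnbr] at h1 ⊢
            exact (hiff l).mpr h1
        · -- (b) transversals shatter U'
          intro w hw S hS
          set p : Fin t → Bool := fun l => decide (x l ∈ S) with hpdef
          refine ⟨w (e p), Finset.mem_image.2 ⟨e p, Finset.mem_univ _, rfl⟩, ?_⟩
          intro b hb
          obtain ⟨l, _, rfl⟩ := Finset.mem_image.mp hb
          have h1 := hBadj PUnit.unit (e.symm (e p)) (w (e p)) (hw (e p)) l
          rw [Equiv.symm_apply_apply] at h1
          rw [G.adj_comm]
          rw [h1, hpdef]
          simp
      · -- α n ≤ n
        have := mul_le_mul_of_nonneg_right hα1 (le_of_lt hnR)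
        rw [one_mul] at this
        exact this
      · -- n ≤ Q (α n)
        have h1 : (1 / α : ℝ) ≤ (Q : ℝ) := by
          rw [hQdef]
          exact Nat.le_ceil _
        have h2 : (1:ℝ) ≤ (Q:ℝ) * α := by
          rw [div_le_iff₀ hα] at h1
          linarith
        have := mul_le_mul_of_nonneg_right h2 (le_of_lt hnR)
        rw [one_mul] at this
        calc (n:ℝ) ≤ (Q:ℝ) * α * n := this
          _ = (Q:ℝ) * (α * n) := by ring
      · -- atom sizes
        intro i
        rw [hcW]
      · -- the distance invariant
        intro i u hu v hv huv
        have h1 : ((W.card : ℕ) : ℝ) = (n : ℝ) := by exact_mod_cast hcW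
        have h2 : α * n - 2 * (α * n) / (25 * n) * ((n:ℝ) - W.card) = α * n := by
          rw [h1]
          ring_nf
        rw [h2, hdsW u hu v hv]
        exact hdist u hu v hv huv
    · -- α > 1 : contradictory hypotheses
      exfalso
      have h2U : 1 < U.card :=
        lt_of_lt_of_le (lt_of_lt_of_le one_lt_two (le_trans (le_max_left 2 t) (le_max_right C _)))
          hcU
      obtain ⟨u, hu, v, hv, huv⟩ := Finset.one_lt_card.mp h2U
      have h1 := hdist u hu v hv huv
      have h2 : ((nbr G u ∆ nbr G v).card : ℝ) ≤ (W.card : ℝ) := by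
        have hsub : (nbr G u ∆ nbr G v) ⊆ W := by
          rw [hsd u hu v hv]
          exact Finset.filter_subset _ _
        exact_mod_cast Finset.card_le_card hsub
      rw [hcW] at h2
      nlinarith


end ABBM
end
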